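/- arXiv:quant-ph/0002058 — 9 statements merged into one kernel-verified Lean document; each statement's English description precedes it below -/
import Mathlib

section
/- Let H₁, …, Hₙ be finite-dimensional complex Hilbert spaces with dim H₁ = 2. Let f : S(H₁) → ℂ be a frame function of weight w₁ and let g : Σ(H₂,…,Hₙ) → ℂ be an unentangled frame function of weight w₂. Define h on Σ(H₁,…,Hₙ) by h(v₁ ⊗ u) = f(v₁)·g(u) for v₁ ∈ S(H₁) and u ∈ Σ(H₂,…,Hₙ). Then h is an unentangled frame function of weight w₁·w₂. -/
open scoped ComplexInnerProductSpace

section Aux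
variable {H : Type*} [NormedAddCommGroup H] [InnerProductSpace ℂ H]

lemma auxW_onb_pair (h2 : Module.finrank ℂ H = 2) {x y : H}
    (hx : ‖x‖ = 1) (hy : ‖y‖ = 1) (hxy : ⟪x, y⟫ = 0) :
    ∃ b : OrthonormalBasis (Fin 2) ℂ H, b 0 = x ∧ b 1 = y := by
  have hfin : FiniteDimensional ℂ H := Module.finite_of_finrank_eq_succ h2
  have hon : Orthonormal ℂ ![x, y] := by
    constructor
    · intro i; fin_cases i <;> simp [hx, hy]
    · intro i j hij
      fin_cases i <;> fin_cases j <;> simp_all [inner_eq_zero_symm]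
  have hsp : ⊤ ≤ Submodule.span ℂ (Set.range ![x, y]) := by
    rw [hon.linearIndependent.span_eq_top_of_card_eq_finrank (by simp [h2])]
  exact ⟨OrthonormalBasis.mk hon hsp, by simp, by simp⟩

lemma auxW_pair_sum (h2 : Module.finrank ℂ H = 2) {x y : H}
    (hx : ‖x‖ = 1) (hy : ‖y‖ = 1) (hxy : ⟪x, y⟫ = 0)
    (f : H → ℂ) (w : ℂ)
    (hf : ∀ (ι : Type) [Fintype ι] (b : OrthonormalBasis ι ℂ H), ∑ i, f (b i) = w) :
    f x + f y = w := by
  obtain ⟨b, hb0, hb1⟩ := auxW_onb_pair h2 hx hy hxy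
  have := hf (Fin 2) b
  rwa [Fin.sum_univ_two, hb0, hb1] at this

lemma auxW_coord (h2 : Module.finrank ℂ H = 2) {x y z : H}
    (hx : ‖x‖ = 1) (hy : ‖y‖ = 1) (hxy : ⟪x, y⟫ = 0) (hxz : ⟪x, z⟫ = 0) :
    z = ⟪y, z⟫ • y := by
  obtain ⟨b, hb0, hb1⟩ := auxW_onb_pair h2 hx hy hxy
  have := b.sum_repr' z
  rw [Fin.sum_univ_two, hb0, hb1, hxz] at this
  simpa using this.symm

lemma auxW_exists_perp (h2 : Module.finrank ℂ H = 2) {x : H} (hx : ‖x‖ = 1) :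
    ∃ y : H, ‖y‖ = 1 ∧ ⟪x, y⟫ = 0 := by
  have hfin : FiniteDimensional ℂ H := Module.finite_of_finrank_eq_succ h2
  have hxne : x ≠ 0 := by intro h; rw [h] at hx; simp at hx
  have hrk : Module.finrank ℂ (ℂ ∙ x) + Module.finrank ℂ ((ℂ ∙ x)ᗮ) = 2 := by
    rw [Submodule.finrank_add_finrank_orthogonal, h2]
  rw [finrank_span_singleton hxne] at hrk
  have : ∃ z : (ℂ ∙ x)ᗮ, z ≠ 0 := by
    have h1 : Module.finrank ℂ ((ℂ ∙ x)ᗮ) = 1 := by omega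
    have := Module.nontrivial_of_finrank_eq_succ h1
    exact exists_ne 0
  obtain ⟨z, hz⟩ := this
  have hzne : (z : H) ≠ 0 := fun h => hz (Subtype.ext h)
  refine ⟨‖(z : H)‖⁻¹ • (z : H), ?_, ?_⟩
  · simp [norm_smul, norm_inv, inv_mul_cancel₀ (norm_ne_zero_iff.mpr hzne)]
  · have h0 : ⟪x, (z : H)⟫ = 0 :=
      z.2 x (Submodule.mem_span_singleton_self x)
    have : ‖(z : H)‖⁻¹ • (z : H) = ((‖(z : H)‖⁻¹ : ℝ) : ℂ) • (z : H) := by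
      norm_cast
    rw [this, inner_smul_right, h0, mul_zero]

lemma auxW_exists_unit (h2 : Module.finrank ℂ H = 2) : ∃ x : H, ‖x‖ = 1 := by
  have hfin : FiniteDimensional ℂ H := Module.finite_of_finrank_eq_succ h2
  have : Nontrivial H := Module.nontrivial_of_finrank_eq_succ h2
  obtain ⟨x, hx⟩ := exists_ne (0 : H)
  exact ⟨‖x‖⁻¹ • x, by simp [norm_smul, inv_mul_cancel₀ (norm_ne_zero_iff.mpr hx)]⟩

lemma auxW_scal_ne {d p : H} {c : ℂ} (hp : p = c • d) (hpn : ‖p‖ = 1) : c ≠ 0 := by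
  rintro rfl
  rw [zero_smul] at hp
  rw [hp] at hpn
  simp at hpn

lemma auxW_unimod {d p : H} (hd : ‖d‖ = 1) {c : ℂ} (hp : p = c • d) (hpn : ‖p‖ = 1) :
    c * (starRingEnd ℂ) c = 1 := by
  have hc : ‖c‖ = 1 := by
    have := hpn; rw [hp, norm_smul, hd, mul_one] at this; exact this
  rw [Complex.mul_conj]
  norm_cast
  rw [Complex.normSq_eq_norm_sq, hc]; norm_num

lemma auxW_not_orth {d p p' : H} (hd : ‖d‖ = 1) {c c' : ℂ}
    (hp : p = c • d) (hp' : p' = c' • d) (hpn : ‖p‖ = 1) (hp'n : ‖p'‖ = 1) :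
    ⟪p, p'⟫ ≠ 0 := by
  have hc := auxW_scal_ne hp hpn
  have hc' := auxW_scal_ne hp' hp'n
  rw [hp, hp', inner_smul_left, inner_smul_right, inner_self_eq_norm_sq_to_K, hd]
  simp [hc, hc']

lemma auxW_transfer (h2 : Module.finrank ℂ H = 2) {z z' p p' : H}
    (hz : ‖z‖ = 1) (hz' : ‖z'‖ = 1) (hzz' : ⟪z, z'⟫ = 0)
    {c : ℂ} (hp : p = c • z) (hpn : ‖p‖ = 1) (hp'n : ‖p'‖ = 1)
    (hperp : ⟪p, p'⟫ = 0) : ∃ c' : ℂ, p' = c' • z' := by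
  have hc := auxW_scal_ne hp hpn
  have h0 : ⟪z, p'⟫ = 0 := by
    have h1 : (starRingEnd ℂ) c * ⟪z, p'⟫ = 0 := by
      rw [← inner_smul_left, ← hp]; exact hperp
    rcases mul_eq_zero.mp h1 with h | h
    · exact absurd (by simpa using h) hc
    · exact h
  exact ⟨_, auxW_coord h2 hz hz' hzz' h0⟩

lemma auxW_phase (h2 : Module.finrank ℂ H = 2) {x x' : H}
    (hx : ‖x‖ = 1) (hx' : ‖x'‖ = 1) {c : ℂ} (hc : x' = c • x)
    (f : H → ℂ) (w : ℂ)
    (hf : ∀ (ι : Type) [Fintype ι] (b : OrthonormalBasis ι ℂ H), ∑ i, f (b i) = w) :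
    f x' = f x := by
  obtain ⟨y, hy, hxy⟩ := auxW_exists_perp h2 hx
  have h1 := auxW_pair_sum h2 hx hy hxy f w hf
  have hx'y : ⟪x', y⟫ = 0 := by rw [hc, inner_smul_left, hxy, mul_zero]
  have h2' := auxW_pair_sum h2 hx' hy hx'y f w hf
  have := h2'.trans h1.symm
  exact add_right_cancel this

lemma auxW_norm_one {w : H} (hw : ⟪w, w⟫ = (1 : ℂ)) : ‖w‖ = 1 := by
  rw [inner_self_eq_norm_sq_to_K] at hw
  have h2 : (‖w‖ : ℂ) ^ 2 = 1 := hw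
  have : (‖w‖ : ℝ) ^ 2 = 1 := by exact_mod_cast h2
  rcases sq_eq_one_iff.mp this with h | h
  · exact h
  · nlinarith [norm_nonneg w]

end Aux

set_option maxHeartbeats 1000000 in
set_option maxHeartbeats 1000000 in
/-- Let `H₁` be a `2`-dimensional complex Hilbert space and `H₂, …, Hₙ`
finite-dimensional complex Hilbert spaces (here `G k = H_{k+2}`).  Let
`F = H₂ ⊗ ⋯ ⊗ Hₙ` be their Hilbert tensor product (axiomatized by a multilinear map
`tq` with `⟪tq a, tq b⟫ = ∏ ⟪aᵢ, bᵢ⟫` whose range spans `F`), and let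
`E = H₁ ⊗ F = H₁ ⊗ ⋯ ⊗ Hₙ` (axiomatized by a bilinear map `tb` with
`⟪tb x u, tb y w⟫ = ⟪x, y⟫⟪u, w⟫` whose range spans `E`).  Let `f` be a frame
function on `S(H₁)` of weight `w₁` and `g` an unentangled frame function on
`Σ(H₂,…,Hₙ)` of weight `w₂`, and set `h (v ⊗ u) = f v * g u` for `v ∈ S(H₁)`,
`u ∈ Σ(H₂,…,Hₙ)`.  Then `h` is an unentangled frame function of weight `w₁ * w₂`:
every orthonormal basis of `E` consisting of unentangled unit vectors
`v ⊗ a₂ ⊗ ⋯ ⊗ aₙ` has `h`-sum `w₁ * w₂`. -/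
theorem unentangled_gleason_stmt2
    {H₁ : Type*} [NormedAddCommGroup H₁] [InnerProductSpace ℂ H₁]
    (hH₁ : Module.finrank ℂ H₁ = 2)
    {m : ℕ} (G : Fin m → Type*)
    [∀ k, NormedAddCommGroup (G k)] [∀ k, InnerProductSpace ℂ (G k)]
    [∀ k, FiniteDimensional ℂ (G k)]
    {F : Type*} [NormedAddCommGroup F] [InnerProductSpace ℂ F]
    (tq : MultilinearMap ℂ G F)
    (htq_inner : ∀ a b : (k : Fin m) → G k, ⟪tq a, tq b⟫ = ∏ k, ⟪a k, b k⟫)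
    (htq_span : Submodule.span ℂ (Set.range tq) = ⊤)
    {E : Type*} [NormedAddCommGroup E] [InnerProductSpace ℂ E]
    (tb : H₁ →ₗ[ℂ] F →ₗ[ℂ] E)
    (htb_inner : ∀ (x y : H₁) (u w : F), ⟪tb x u, tb y w⟫ = ⟪x, y⟫ * ⟪u, w⟫)
    (htb_span : Submodule.span ℂ {z : E | ∃ x u, z = tb x u} = ⊤)
    (f : H₁ → ℂ) (w₁ : ℂ)
    (hf : ∀ (ι : Type) [Fintype ι] (b : OrthonormalBasis ι ℂ H₁),
      ∑ i, f (b i) = w₁)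
    (g : F → ℂ) (w₂ : ℂ)
    (hg : ∀ (κ : Type) [Fintype κ] (b : OrthonormalBasis κ ℂ F),
      (∀ j, ∃ a : (k : Fin m) → G k, (∀ k, ‖a k‖ = 1) ∧ b j = tq a) →
      ∑ j, g (b j) = w₂)
    (h : E → ℂ)
    (hh : ∀ (v : H₁) (a : (k : Fin m) → G k), ‖v‖ = 1 → (∀ k, ‖a k‖ = 1) →
      h (tb v (tq a)) = f v * g (tq a)) :
    ∀ (ι : Type) [Fintype ι] (b : OrthonormalBasis ι ℂ E),
      (∀ j, ∃ (v : H₁) (a : (k : Fin m) → G k),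
        ‖v‖ = 1 ∧ (∀ k, ‖a k‖ = 1) ∧ b j = tb v (tq a)) →
      ∑ j, h (b j) = w₁ * w₂ := by
  intro ι _ b hb
  classical
  choose v a hv ha hbe using hb
  let u : ι → F := fun j => tq (a j)
  have hbu : ∀ j, b j = tb (v j) (u j) := hbe
  -- basic inner product facts
  have hv1 : ∀ j, ⟪v j, v j⟫ = (1 : ℂ) := by
    intro j; rw [inner_self_eq_norm_sq_to_K, hv j]; norm_num
  have hu1 : ∀ j, ⟪u j, u j⟫ = (1 : ℂ) := by
    intro j
    show ⟪tq (a j), tq (a j)⟫ = 1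
    rw [htq_inner]
    have : ∀ k, ⟪a j k, a j k⟫ = (1 : ℂ) := by
      intro k; rw [inner_self_eq_norm_sq_to_K, ha j k]; norm_num
    simp [this, ha j]
  have hun : ∀ j, ‖u j‖ = 1 := fun j => auxW_norm_one (hu1 j)
  have horth : ∀ i j, i ≠ j → ⟪v i, v j⟫ * ⟪u i, u j⟫ = 0 := by
    intro i j hij
    have h0 : ⟪b i, b j⟫ = 0 := b.orthonormal.2 hij
    rw [hbu i, hbu j, htb_inner] at h0
    exact h0
  have hvu : ∀ i j, i ≠ j → ⟪v i, v j⟫ ≠ 0 → ⟪u i, u j⟫ = 0 := by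
    intro i j hij hne
    rcases mul_eq_zero.mp (horth i j hij) with h | h
    · exact absurd h hne
    · exact h
  have huv : ∀ i j, i ≠ j → ⟪u i, u j⟫ ≠ 0 → ⟪v i, v j⟫ = 0 := by
    intro i j hij hne
    rcases mul_eq_zero.mp (horth i j hij) with h | h
    · exact h
    · exact absurd h hne
  -- Parseval / completeness identity
  have hK : ∀ (x x' : H₁) (w w' : F),
      ∑ j, (⟪x, v j⟫ * ⟪w, u j⟫) * (⟪v j, x'⟫ * ⟪u j, w'⟫) = ⟪x, x'⟫ * ⟪w, w'⟫ := by
    intro x x' w w'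
    have hbs := b.sum_inner_mul_inner (tb x w) (tb x' w')
    rw [htb_inner] at hbs
    rw [← hbs]
    refine Finset.sum_congr rfl (fun j _ => ?_)
    rw [hbu j, htb_inner, htb_inner]
  obtain ⟨e₁, he₁⟩ := auxW_exists_unit hH₁
  have he₁i : ⟪e₁, e₁⟫ = (1 : ℂ) := by
    rw [inner_self_eq_norm_sq_to_K, he₁]; norm_num
  have hK2 : ∀ w : F, (∀ j, ⟪u j, w⟫ = 0) → w = 0 := by
    intro w hw
    have hk := hK e₁ e₁ w w
    rw [Finset.sum_eq_zero (fun j _ => by rw [hw j]; ring)] at hk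
    rw [he₁i, one_mul] at hk
    exact inner_self_eq_zero.mp hk.symm
  -- the class structure
  let r : ι → ι → Prop := fun i j => ⟪u i, u j⟫ ≠ 0
  let s : Setoid ι := ⟨Relation.EqvGen r, Relation.EqvGen.is_equivalence r⟩
  letI : DecidableEq (Quotient s) := Classical.decEq _
  letI : Fintype (Quotient s) := @Quotient.fintype ι _ s (fun _ _ => Classical.dec _)
  let π : ι → Quotient s := Quotient.mk s
  have hπ : ∀ i j, Relation.EqvGen r i j → π i = π j := fun i j hij => Quotient.sound hij
  let ex : Quotient s → H₁ := fun q => v q.out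
  have hex : ∀ q, ‖ex q‖ = 1 := fun q => hv q.out
  choose ey hey heyp using fun q => auxW_exists_perp hH₁ (hex q)
  -- every class member is on the line of ex or of ey
  have key : ∀ (z z' : H₁), ‖z‖ = 1 → ‖z'‖ = 1 → ⟪z, z'⟫ = 0 →
      ∀ i j, Relation.EqvGen r i j →
      (((∃ c : ℂ, v i = c • z) ∨ (∃ c : ℂ, v i = c • z')) ↔
       ((∃ c : ℂ, v j = c • z) ∨ (∃ c : ℂ, v j = c • z'))) := by
    intro z z' hz hz' hzz' i j hij
    induction hij with
    | rel i j hr =>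
        by_cases hij : i = j
        · subst hij; rfl
        · have hvij : ⟪v i, v j⟫ = 0 := huv i j hij hr
          have hvji : ⟪v j, v i⟫ = 0 := by
            rw [← inner_conj_symm, hvij, map_zero]
          have hz'z : ⟪z', z⟫ = 0 := by
            rw [← inner_conj_symm, hzz', map_zero]
          constructor
          · rintro (⟨c, hc⟩ | ⟨c, hc⟩)
            · exact Or.inr (auxW_transfer hH₁ hz hz' hzz' hc (hv i) (hv j) hvij)
            · exact Or.inl (auxW_transfer hH₁ hz' hz hz'z hc (hv i) (hv j) hvij)
          · rintro (⟨c, hc⟩ | ⟨c, hc⟩)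
            · exact Or.inr (auxW_transfer hH₁ hz hz' hzz' hc (hv j) (hv i) hvji)
            · exact Or.inl (auxW_transfer hH₁ hz' hz hz'z hc (hv j) (hv i) hvji)
    | refl i => rfl
    | symm i j _ ih => exact ih.symm
    | trans i j k _ _ ih1 ih2 => exact ih1.trans ih2
  have hline : ∀ j, (∃ c : ℂ, v j = c • ex (π j)) ∨ (∃ c : ℂ, v j = c • ey (π j)) := by
    intro j
    have hrel : Relation.EqvGen r (π j).out j := Quotient.mk_out (s := s) j
    refine (key (ex (π j)) (ey (π j)) (hex _) (hey _) (heyp _) _ j hrel).mp ?_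
    left
    exact ⟨1, by rw [one_smul]⟩
  -- the side of each index
  let φ : ι → Bool := fun j => decide (⟪ex (π j), v j⟫ = 0)
  have hexi : ∀ q, ⟪ex q, ex q⟫ = (1 : ℂ) := by
    intro q; rw [inner_self_eq_norm_sq_to_K, hex q]; norm_num
  have hφt : ∀ j, φ j = true → ∃ c : ℂ, v j = c • ey (π j) := by
    intro j hj
    have h0 : ⟪ex (π j), v j⟫ = 0 := of_decide_eq_true hj
    rcases hline j with ⟨c, hc⟩ | hc
    · exfalso
      have hcne := auxW_scal_ne hc (hv j)
      rw [hc, inner_smul_right, hexi, mul_one] at h0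
      exact hcne h0
    · exact hc
  have hφf : ∀ j, φ j = false → ∃ c : ℂ, v j = c • ex (π j) := by
    intro j hj
    have hj' : decide (⟪ex (π j), v j⟫ = 0) = false := hj
    have h0 : ⟪ex (π j), v j⟫ ≠ 0 := of_decide_eq_false hj' 
    rcases hline j with hc | ⟨c, hc⟩
    · exact hc
    · exfalso
      apply h0
      rw [hc, inner_smul_right, heyp, mul_zero]
  -- same class, same side ⇒ not orthogonal in H₁
  have hsameline : ∀ i j, π i = π j → φ i = φ j → ⟪v i, v j⟫ ≠ 0 := by
    intro i j hq hs
    cases hφb : φ j with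
    | true =>
        obtain ⟨ci, hci⟩ := hφt i (hs.trans hφb)
        obtain ⟨cj, hcj⟩ := hφt j hφb
        rw [hq] at hci
        exact auxW_not_orth (hey (π j)) hci hcj (hv i) (hv j)
    | false =>
        obtain ⟨ci, hci⟩ := hφf i (hs.trans hφb)
        obtain ⟨cj, hcj⟩ := hφf j hφb
        rw [hq] at hci
        exact auxW_not_orth (hex (π j)) hci hcj (hv i) (hv j)
  -- orthonormality of the vectors u within a fixed line
  have hA : ∀ j i i', i ≠ i' → ⟪v i, v j⟫ = 0 → ⟪v i', v j⟫ = 0 → ⟪u i, u i'⟫ = 0 := by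
    intro j i i' hii hij hi'j
    obtain ⟨yj, hyj, hyjp⟩ := auxW_exists_perp hH₁ (hv j)
    have hji : ⟪v j, v i⟫ = 0 := by rw [← inner_conj_symm, hij, map_zero]
    have hji' : ⟪v j, v i'⟫ = 0 := by rw [← inner_conj_symm, hi'j, map_zero]
    have hci : v i = ⟪yj, v i⟫ • yj := auxW_coord hH₁ (hv j) hyj hyjp hji
    have hci' : v i' = ⟪yj, v i'⟫ • yj := auxW_coord hH₁ (hv j) hyj hyjp hji'
    exact hvu i i' hii (auxW_not_orth hyj hci hci' (hv i) (hv i'))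
  -- Parseval within perpendicular set
  have hP : ∀ j, ∑ i ∈ Finset.univ.filter (fun i => ⟪v i, v j⟫ = 0),
      ⟪u j, u i⟫ * ⟪u i, u j⟫ = 1 := by
    intro j
    obtain ⟨yj, hyj, hyjp⟩ := auxW_exists_perp hH₁ (hv j)
    have hyji : ⟪yj, yj⟫ = (1 : ℂ) := by
      rw [inner_self_eq_norm_sq_to_K, hyj]; norm_num
    have hk := hK yj yj (u j) (u j)
    rw [hyji, hu1 j, one_mul] at hk
    have hzero : ∀ i ∈ Finset.univ, i ∉ Finset.univ.filter (fun i => ⟪v i, v j⟫ = 0) →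
        (⟪yj, v i⟫ * ⟪u j, u i⟫) * (⟪v i, yj⟫ * ⟪u i, u j⟫) = 0 := by
      intro i _ hi
      rw [Finset.mem_filter] at hi
      push_neg at hi
      have hne : ⟪v i, v j⟫ ≠ 0 := hi (Finset.mem_univ i)
      by_cases hij : i = j
      · subst hij
        have h0 : ⟪yj, v i⟫ = 0 := by rw [← inner_conj_symm, hyjp, map_zero]
        rw [h0]; ring
      · rw [hvu i j hij hne]; ring
    have hsub := Finset.sum_subset
      (Finset.filter_subset (fun i => ⟪v i, v j⟫ = 0) Finset.univ) hzero
    rw [← hsub] at hk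
    rw [← hk]
    refine Finset.sum_congr rfl (fun i hi => ?_)
    rw [Finset.mem_filter] at hi
    have hji : ⟪v j, v i⟫ = 0 := by rw [← inner_conj_symm, hi.2, map_zero]
    have hci : v i = ⟪yj, v i⟫ • yj := auxW_coord hH₁ (hv j) hyj hyjp hji
    have hmod := auxW_unimod hyj hci (hv i)
    rw [← inner_conj_symm (v i) yj]
    linear_combination (-(⟪u j, u i⟫ * ⟪u i, u j⟫)) * hmod
  -- expansion of u j over its perpendicular set
  have hexp : ∀ j (w : F), (∀ i, ⟪v i, v j⟫ = 0 → ⟪u i, u j⟫ ≠ 0 → ⟪u i, w⟫ = 0) →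
      ⟪u j, w⟫ = 0 := by
    intro j w hw
    set Aj := Finset.univ.filter (fun i => ⟪v i, v j⟫ = 0) with hAj
    set σ : F := ∑ i ∈ Aj, ⟪u i, u j⟫ • u i with hσ
    have hort : ∀ i ∈ Aj, ∀ i' ∈ Aj, i ≠ i' → ⟪u i, u i'⟫ = 0 := by
      intro i hi i' hi' hii
      rw [hAj, Finset.mem_filter] at hi hi'
      exact hA j i i' hii hi.2 hi'.2
    have hjσ : ⟪u j, σ⟫ = 1 := by
      rw [hσ, inner_sum]
      calc ∑ i ∈ Aj, ⟪u j, ⟪u i, u j⟫ • u i⟫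
          = ∑ i ∈ Aj, ⟪u j, u i⟫ * ⟪u i, u j⟫ := by
            refine Finset.sum_congr rfl (fun i _ => ?_)
            rw [inner_smul_right]; ring
        _ = 1 := hP j
    have hiσ : ∀ i ∈ Aj, ⟪u i, σ⟫ = ⟪u i, u j⟫ := by
      intro i hi
      rw [hσ, inner_sum]
      rw [Finset.sum_eq_single_of_mem i hi (fun i' hi' hne => by
        rw [inner_smul_right, hort i hi i' hi' (Ne.symm hne), mul_zero])]
      rw [inner_smul_right, hu1 i, mul_one]
    set ρ : F := u j - σ with hρdef
    have hujρ : ⟪u j, ρ⟫ = 0 := by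
      rw [hρdef, inner_sub_right, hu1 j, hjσ, sub_self]
    have hiρ : ∀ i ∈ Aj, ⟪u i, ρ⟫ = 0 := fun i hi => by
      rw [hρdef, inner_sub_right, hiσ i hi, sub_self]
    have hσρ : ⟪σ, ρ⟫ = 0 := by
      conv_lhs => rw [hσ]
      rw [sum_inner]
      refine Finset.sum_eq_zero (fun i hi => ?_)
      rw [inner_smul_left, hiρ i hi, mul_zero]
    have hρρ : ⟪ρ, ρ⟫ = (0 : ℂ) := by
      conv_lhs => rw [hρdef, inner_sub_left, ← hρdef]
      rw [hujρ, hσρ, sub_zero]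
    have hρ0 : ρ = 0 := inner_self_eq_zero.mp hρρ
    have h6 : u j - σ = 0 := by rw [← hρdef]; exact hρ0
    have hujσ : u j = σ := sub_eq_zero.mp h6
    rw [hujσ, hσ, sum_inner]
    refine Finset.sum_eq_zero (fun i hi => ?_)
    rw [inner_smul_left]
    by_cases h0 : ⟪u i, u j⟫ = 0
    · rw [h0, map_zero, zero_mul]
    · rw [hAj, Finset.mem_filter] at hi
      rw [hw i hi.2 h0, mul_zero]
  -- every selection of one side per class gives an unentangled basis of F
  have hC1 : ∀ c : Quotient s → Bool,
      ∑ j ∈ Finset.univ.filter (fun j => φ j = c (π j)), g (u j) = w₂ := by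
    intro c
    set T := Finset.univ.filter (fun j => φ j = c (π j)) with hT
    have hmemT : ∀ {j}, j ∈ T → φ j = c (π j) := by
      intro j hj
      rw [hT, Finset.mem_filter] at hj
      exact hj.2
    have hon : Orthonormal ℂ (fun j : {x // x ∈ T} => u j) := by
      constructor
      · intro i; exact hun i
      · rintro ⟨i, hi⟩ ⟨j, hj⟩ hne
        have hij : i ≠ j := fun hh => hne (Subtype.ext hh)
        show ⟪u i, u j⟫ = 0
        by_cases hq : π i = π j
        · refine hvu i j hij (hsameline i j hq ?_)
          rw [hmemT hi, hmemT hj, hq]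
        · by_contra hne0
          exact hq (hπ i j (Relation.EqvGen.rel i j hne0))
    have hspan : ⊤ ≤ Submodule.span ℂ (Set.range (fun j : {x // x ∈ T} => u j)) := by
      set K := Submodule.span ℂ (Set.range (fun j : {x // x ∈ T} => u j)) with hKdef
      haveI : FiniteDimensional ℂ K :=
        FiniteDimensional.span_of_finite ℂ (Set.finite_range _)
      have hbot : Kᗮ = ⊥ := by
        rw [Submodule.eq_bot_iff]
        intro w hwmem
        have hw' : ∀ j ∈ T, ⟪u j, w⟫ = 0 := fun j hj =>
          ((Submodule.mem_orthogonal K w).mp hwmem) (u j)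
            (Submodule.subset_span ⟨⟨j, hj⟩, rfl⟩)
        refine hK2 w (fun j => ?_)
        by_cases hj : j ∈ T
        · exact hw' j hj
        · refine hexp j w (fun i hvi hui => ?_)
          refine hw' i ?_
          have hqij : π i = π j := hπ i j (Relation.EqvGen.rel i j hui)
          have hφne : φ i ≠ φ j := fun hs => (hsameline i j hqij hs) hvi
          have hjne : φ j ≠ c (π j) := fun hh =>
            hj (by rw [hT]; exact Finset.mem_filter.mpr ⟨Finset.mem_univ j, hh⟩)
          rw [hT, Finset.mem_filter]
          refine ⟨Finset.mem_univ i, ?_⟩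
          rw [hqij]
          revert hφne hjne
          cases φ i <;> cases φ j <;> cases c (π j) <;> simp
      exact (Submodule.orthogonal_eq_bot_iff.mp hbot).ge
    have hw2 := hg {x // x ∈ T} (OrthonormalBasis.mk hon hspan)
      (fun j => ⟨a j, ha j, by rw [OrthonormalBasis.coe_mk]⟩)
    rw [← hw2, ← Finset.sum_coe_sort T (fun j => g (u j))]
    refine Finset.sum_congr rfl (fun j _ => ?_)
    rw [OrthonormalBasis.coe_mk]
  -- side sums per class
  set Sq : Quotient s → Bool → ℂ := fun q e =>
    ∑ j ∈ Finset.univ.filter (fun j => π j = q ∧ φ j = e), g (u j) with hSq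
  have hfib : ∀ c : Quotient s → Bool, ∑ q, Sq q (c q) = w₂ := by
    intro c
    rw [← hC1 c]
    rw [Finset.sum_filter]
    rw [← Finset.sum_fiberwise Finset.univ π
      (fun j => if φ j = c (π j) then g (u j) else 0)]
    refine Finset.sum_congr rfl (fun q _ => ?_)
    simp only [hSq]
    rw [← Finset.filter_filter, Finset.sum_filter]
    refine Finset.sum_congr rfl (fun j hj => ?_)
    rw [Finset.mem_filter] at hj
    rw [hj.2]
  have hswap : ∀ q, Sq q true = Sq q false := by
    intro q
    have h1 := hfib (fun _ => true)
    have h2 := hfib (Function.update (fun _ => true) q false)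
    rw [← h2] at h1
    rw [← Finset.add_sum_erase _ _ (Finset.mem_univ q),
        ← Finset.add_sum_erase _ _ (Finset.mem_univ q)] at h1
    rw [Function.update_self] at h1
    have he : ∑ q' ∈ Finset.univ.erase q,
        Sq q' (Function.update (fun _ => true) q false q') =
        ∑ q' ∈ Finset.univ.erase q, Sq q' true := by
      refine Finset.sum_congr rfl (fun q' hq' => ?_)
      rw [Function.update_of_ne (Finset.ne_of_mem_erase hq')]
    rw [he] at h1
    exact add_right_cancel h1
  have hpiece : ∀ (q : Quotient s) (e : Bool) (d : H₁), ‖d‖ = 1 →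
      (∀ j, π j = q → φ j = e → ∃ c : ℂ, v j = c • d) →
      ∑ j ∈ Finset.univ.filter (fun j => π j = q ∧ φ j = e), f (v j) * g (u j) =
        f d * Sq q e := by
    intro q e d hdn hd
    simp only [hSq]
    rw [Finset.mul_sum]
    refine Finset.sum_congr rfl (fun j hj => ?_)
    rw [Finset.mem_filter] at hj
    obtain ⟨c, hc⟩ := hd j hj.2.1 hj.2.2
    rw [auxW_phase hH₁ hdn (hv j) hc f w₁ hf]
  calc ∑ j, h (b j) = ∑ j, f (v j) * g (u j) := by
        refine Finset.sum_congr rfl (fun j _ => ?_)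
        rw [hbu j]
        exact hh (v j) (a j) (hv j) (ha j)
    _ = ∑ q : Quotient s, ∑ j ∈ Finset.univ.filter (fun j => π j = q),
          f (v j) * g (u j) :=
        (Finset.sum_fiberwise Finset.univ π _).symm
    _ = ∑ q : Quotient s, (f (ey q) * Sq q true + f (ex q) * Sq q false) := by
        refine Finset.sum_congr rfl (fun q _ => ?_)
        rw [← Finset.sum_filter_add_sum_filter_not
          (Finset.univ.filter fun j => π j = q) (fun j => φ j = true)]
        rw [Finset.filter_filter, Finset.filter_filter]
        congr 1
        · refine hpiece q true (ey q) (hey q) (fun j hq hφ => ?_)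
          obtain ⟨c, hc⟩ := hφt j hφ
          exact ⟨c, by rwa [hq] at hc⟩
        · have hfe : (Finset.univ.filter fun j => π j = q ∧ ¬ φ j = true) =
              (Finset.univ.filter fun j => π j = q ∧ φ j = false) := by
            refine Finset.filter_congr (fun j _ => ?_)
            simp [Bool.not_eq_true]
          rw [hfe]
          refine hpiece q false (ex q) (hex q) (fun j hq hφ => ?_)
          obtain ⟨c, hc⟩ := hφf j hφ
          exact ⟨c, by rwa [hq] at hc⟩
    _ = ∑ q : Quotient s, w₁ * Sq q true := by
        refine Finset.sum_congr rfl (fun q _ => ?_)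
        rw [← hswap q, ← auxW_pair_sum hH₁ (hex q) (hey q) (heyp q) f w₁ hf]
        ring
    _ = w₁ * w₂ := by
        rw [← Finset.mul_sum, hfib (fun _ => true)]
end

section
/- Let H₁, …, Hₙ be finite-dimensional complex Hilbert spaces and H = H₁ ⊗ ⋯ ⊗ Hₙ. If V ⊆ H is a subspace such that every nonzero v ∈ V is entangled (i.e. not of the form h₁ ⊗ ⋯ ⊗ hₙ with hᵢ ∈ Hᵢ), then dim V ≤ dim(H₁)⋯dim(Hₙ) − Σᵢ(dim Hᵢ − 1) − 1. -/
open scoped TensorProduct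
open MvPolynomial

namespace UnentangledAux

variable {n : ℕ} {d : Fin n → ℕ}

/-- block degree of an exponent vector -/
noncomputable def bdeg (d : Fin n → ℕ) (i : Fin n) (e : (Σ i : Fin n, Fin (d i)) →₀ ℕ) : ℕ :=
  ∑ a : Fin (d i), e ⟨i, a⟩

lemma bdeg_add (i : Fin n) (e f : (Σ i : Fin n, Fin (d i)) →₀ ℕ) :
    bdeg d i (e + f) = bdeg d i e + bdeg d i f := by
  simp [bdeg, Finset.sum_add_distrib]

lemma bdeg_single (i i' : Fin n) (a : Fin (d i')) (v : ℕ) :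
    bdeg d i (Finsupp.single ⟨i', a⟩ v) = if i' = i then v else 0 := by
  classical
  rcases eq_or_ne i' i with rfl | h
  · simp only [if_pos rfl, bdeg]
    rw [Finset.sum_eq_single a]
    · simp
    · intro b _ hb
      rw [Finsupp.single_apply, if_neg]
      intro hc
      exact hb (by cases hc; rfl)
    · simp
  · rw [if_neg h]
    refine Finset.sum_eq_zero fun b _ => ?_
    rw [Finsupp.single_apply, if_neg]
    intro hc
    exact h (congrArg Sigma.fst hc)

lemma bdeg_finsetSum {α : Type*} (s : Finset α) (f : α → ((Σ i : Fin n, Fin (d i)) →₀ ℕ))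
    (i : Fin n) : bdeg d i (∑ x ∈ s, f x) = ∑ x ∈ s, bdeg d i (f x) := by
  classical
  induction s using Finset.induction with
  | empty => simp [bdeg]
  | insert _ _ h ih => rw [Finset.sum_insert h, Finset.sum_insert h, bdeg_add, ih]

/-- exponent of the product monomial `∏ i, X ⟨i, c i⟩` -/
noncomputable def μexp (d : Fin n → ℕ) (c : Π i, Fin (d i)) : (Σ i : Fin n, Fin (d i)) →₀ ℕ :=
  ∑ i : Fin n, Finsupp.single ⟨i, c i⟩ 1

lemma bdeg_μexp (i : Fin n) (c : Π i, Fin (d i)) : bdeg d i (μexp d c) = 1 := by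
  classical
  rw [μexp, bdeg_finsetSum]
  rw [Finset.sum_eq_single i] <;> simp [bdeg_single]

lemma monomial_prod {α : Type*} (s : Finset α) (g : α → ((Σ i : Fin n, Fin (d i)) →₀ ℕ)) :
    (∏ x ∈ s, monomial (g x) (1 : ℂ)) = monomial (∑ x ∈ s, g x) 1 := by
  classical
  induction s using Finset.induction with
  | empty => simp
  | insert _ _ h ih =>
      rw [Finset.prod_insert h, Finset.sum_insert h, ih, monomial_mul, one_mul]

/-- the product monomial -/
noncomputable def μmon (d : Fin n → ℕ) (c : Π i, Fin (d i)) :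
    MvPolynomial (Σ i : Fin n, Fin (d i)) ℂ := monomial (μexp d c) 1

lemma μmon_eq_prod (c : Π i, Fin (d i)) :
    μmon d c = ∏ i : Fin n, X ⟨i, c i⟩ := by
  rw [μmon, μexp, ← monomial_prod]
  simp [X]

lemma eval_μmon (y : (Σ i : Fin n, Fin (d i)) → ℂ) (c : Π i, Fin (d i)) :
    eval y (μmon d c) = ∏ i : Fin n, y ⟨i, c i⟩ := by
  simp [μmon_eq_prod]


variable (d) in
/-- the multihomogeneous predicate: all block degrees equal `t` -/
def Pdeg (t : ℕ) (e : (Σ i : Fin n, Fin (d i)) →₀ ℕ) : Prop := ∀ i, bdeg d i e = t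

/-- multilinear polynomial with coefficients `a` -/
noncomputable def Fpoly (d : Fin n → ℕ) (a : (Π i, Fin (d i)) → ℂ) :
    MvPolynomial (Σ i : Fin n, Fin (d i)) ℂ :=
  ∑ c : Π i, Fin (d i), MvPolynomial.C (a c) * μmon d c

lemma eval_Fpoly (a : (Π i, Fin (d i)) → ℂ) (y : (Σ i : Fin n, Fin (d i)) → ℂ) :
    eval y (Fpoly d a) = ∑ c : Π i, Fin (d i), a c * ∏ i : Fin n, y ⟨i, c i⟩ := by
  simp [Fpoly, eval_μmon]

lemma support_Fpoly (a : (Π i, Fin (d i)) → ℂ) :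
    ∀ e ∈ (Fpoly d a).support, Pdeg d 1 e := by
  classical
  intro e he i
  have h1 : coeff e (Fpoly d a) ≠ 0 := mem_support_iff.mp he
  have h2 : coeff e (Fpoly d a) = ∑ c : Π i, Fin (d i),
      a c * (if μexp d c = e then (1:ℂ) else 0) := by
    simp [Fpoly, μmon, coeff_monomial, coeff_sum]
  by_cases hr : ∃ c, μexp d c = e
  · obtain ⟨c, rfl⟩ := hr
    rw [bdeg_μexp]
  · exfalso
    apply h1
    rw [h2]
    refine Finset.sum_eq_zero fun c _ => ?_
    rw [if_neg (fun hc => hr ⟨c, hc⟩), mul_zero]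

noncomputable instance (t : ℕ) : DecidablePred (Pdeg d t) :=
  fun e => inferInstanceAs (Decidable (∀ i, bdeg d i e = t))

variable (d) in
/-- projection onto the multidegree-`(t,…,t)` part -/
noncomputable def πproj (t : ℕ) (p : MvPolynomial (Σ i : Fin n, Fin (d i)) ℂ) :
    MvPolynomial (Σ i : Fin n, Fin (d i)) ℂ :=
  ∑ e ∈ p.support, if Pdeg d t e then monomial e (coeff e p) else 0

lemma coeff_πproj (t : ℕ) (p : MvPolynomial (Σ i : Fin n, Fin (d i)) ℂ)
    (f : (Σ i : Fin n, Fin (d i)) →₀ ℕ) :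
    coeff f (πproj d t p) = if Pdeg d t f then coeff f p else 0 := by
  classical
  rw [πproj, coeff_sum]
  by_cases hf : f ∈ p.support
  · rw [Finset.sum_eq_single_of_mem f hf]
    · by_cases hP : Pdeg d t f
      · rw [if_pos hP, if_pos hP, coeff_monomial, if_pos rfl]
      · rw [if_neg hP, if_neg hP, coeff_zero]
    · intro e _ hne
      by_cases hP : Pdeg d t e
      · rw [if_pos hP, coeff_monomial, if_neg hne]
      · rw [if_neg hP, coeff_zero]
  · have h0 : coeff f p = 0 := notMem_support_iff.mp hf
    rw [h0, Finset.sum_eq_zero, ite_self]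
    intro e he
    by_cases hP : Pdeg d t e
    · rw [if_pos hP, coeff_monomial, if_neg]
      intro h; exact hf (h ▸ he)
    · rw [if_neg hP, coeff_zero]

lemma πproj_eq_self {t : ℕ} {p : MvPolynomial (Σ i : Fin n, Fin (d i)) ℂ}
    (hp : ∀ e ∈ p.support, Pdeg d t e) : πproj d t p = p := by
  classical
  apply MvPolynomial.ext
  intro f
  rw [coeff_πproj]
  by_cases hf : f ∈ p.support
  · rw [if_pos (hp f hf)]
  · rw [notMem_support_iff.mp hf, ite_self]

lemma πproj_sum {α : Type*} (s : Finset α) (t : ℕ)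
    (g : α → MvPolynomial (Σ i : Fin n, Fin (d i)) ℂ) :
    πproj d t (∑ x ∈ s, g x) = ∑ x ∈ s, πproj d t (g x) := by
  classical
  apply MvPolynomial.ext
  intro f
  rw [coeff_πproj]
  by_cases hP : Pdeg d t f
  · rw [if_pos hP, coeff_sum, coeff_sum]
    exact Finset.sum_congr rfl fun x _ => (by rw [coeff_πproj, if_pos hP])
  · rw [if_neg hP, coeff_sum]
    symm
    exact Finset.sum_eq_zero fun x _ => (by rw [coeff_πproj, if_neg hP])

lemma Pdeg_add {t s : ℕ} {e f : (Σ i : Fin n, Fin (d i)) →₀ ℕ}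
    (he : Pdeg d t e) (hf : Pdeg d s f) : Pdeg d (t + s) (e + f) := by
  intro i; rw [bdeg_add, he i, hf i]

/-- key graded-extraction lemma -/
lemma πproj_mul (t : ℕ) (q F : MvPolynomial (Σ i : Fin n, Fin (d i)) ℂ)
    (hF : ∀ e ∈ F.support, Pdeg d 1 e) :
    πproj d (t + 1) (q * F) = πproj d t q * F := by
  classical
  apply MvPolynomial.ext
  intro f
  rw [coeff_πproj, coeff_mul, coeff_mul]
  by_cases hf : Pdeg d (t + 1) f
  · rw [if_pos hf]
    refine Finset.sum_congr rfl fun x hx => ?_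
    rw [Finset.HasAntidiagonal.mem_antidiagonal] at hx
    by_cases hFx : coeff x.2 F = 0
    · rw [hFx, mul_zero, mul_zero]
    · have h2 : Pdeg d 1 x.2 := hF _ (mem_support_iff.mpr hFx)
      have h1 : Pdeg d t x.1 := by
        intro i
        have := hf i
        rw [← hx, bdeg_add, h2 i] at this
        omega
      rw [coeff_πproj, if_pos h1]
  · rw [if_neg hf]
    symm
    refine Finset.sum_eq_zero fun x hx => ?_
    rw [Finset.HasAntidiagonal.mem_antidiagonal] at hx
    rw [coeff_πproj]
    by_cases hFx : coeff x.2 F = 0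
    · rw [hFx, mul_zero]
    · by_cases h1 : Pdeg d t x.1
      · exact absurd (hx ▸ Pdeg_add h1 (hF _ (mem_support_iff.mpr hFx))) hf
      · rw [if_neg h1, zero_mul]

lemma mumon_pow_mem
    {m : ℕ} (a : Fin m → (Π i, Fin (d i)) → ℂ)
    (hno : ¬ ∃ x : Π i, Fin (d i) → ℂ, (∀ i, x i ≠ 0) ∧
      ∀ j, ∑ c : Π i, Fin (d i), a j c * ∏ i, x i (c i) = 0)
    (c : Π i, Fin (d i)) :
    ∃ K, μmon d c ^ K ∈ Ideal.span (Set.range (fun j => Fpoly d (a j))) := by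
  classical
  set I : Ideal (MvPolynomial (Σ i : Fin n, Fin (d i)) ℂ) :=
    Ideal.span (Set.range (fun j => Fpoly d (a j))) with hI
  have hrad : μmon d c ∈ I.radical := by
    rw [← vanishingIdeal_zeroLocus_eq_radical (K := ℂ)]
    rw [mem_vanishingIdeal_iff]
    intro y hy
    rw [mem_zeroLocus_iff] at hy
    have hyF : ∀ j, ∑ cc : Π i, Fin (d i), a j cc * ∏ i, y ⟨i, cc i⟩ = 0 := by
      intro j
      have := hy (Fpoly d (a j)) (Ideal.subset_span ⟨j, rfl⟩)
      rwa [aeval_eq_eval, eval_Fpoly] at this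
    push_neg at hno
    have hx : ¬ (∀ i, (fun b => y ⟨i, b⟩) ≠ 0) := by
      intro hall
      obtain ⟨j, hj⟩ := hno (fun i b => y ⟨i, b⟩) hall
      exact hj (hyF j)
    push_neg at hx
    obtain ⟨i, hi⟩ := hx
    rw [aeval_eq_eval, eval_μmon]
    exact Finset.prod_eq_zero (Finset.mem_univ i) (congrFun hi (c i))
  exact Ideal.mem_radical_iff.mp hrad


lemma sum_single_apply (c : Π i, Fin (d i)) (v : ℕ) (i : Fin n) (b : Fin (d i)) :
    (∑ i' : Fin n, Finsupp.single (⟨i', c i'⟩ : Σ i : Fin n, Fin (d i)) v) ⟨i, b⟩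
      = if c i = b then v else 0 := by
  classical
  rw [Finsupp.finset_sum_apply]
  rw [Finset.sum_eq_single i]
  · rw [Finsupp.single_apply]
    congr 1
    simp [Sigma.mk.inj_iff]
  · intro i' _ hne
    rw [Finsupp.single_apply, if_neg]
    intro hc
    exact hne (congrArg Sigma.fst hc)
  · simp

lemma monomial_mem_of_big (hd : ∀ i, 1 ≤ d i)
    {m : ℕ} (a : Fin m → (Π i, Fin (d i)) → ℂ)
    (hno : ¬ ∃ x : Π i, Fin (d i) → ℂ, (∀ i, x i ≠ 0) ∧
      ∀ j, ∑ c : Π i, Fin (d i), a j c * ∏ i, x i (c i) = 0) :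
    ∃ T, ∀ t (e : (Σ i : Fin n, Fin (d i)) →₀ ℕ), Pdeg d t e → T ≤ t →
      monomial e (1 : ℂ) ∈ Ideal.span (Set.range (fun j => Fpoly d (a j))) := by
  classical
  choose k hk using mumon_pow_mem a hno
  set K : ℕ := (Finset.univ.sup k) + 1 with hK
  have hKmem : ∀ c : Π i, Fin (d i),
      μmon d c ^ K ∈ Ideal.span (Set.range (fun j => Fpoly d (a j))) := by
    intro c
    have hle : k c ≤ K := le_trans (Finset.le_sup (Finset.mem_univ c)) (Nat.le_succ _)
    have : μmon d c ^ K = μmon d c ^ (K - k c) * μmon d c ^ (k c) := by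
      rw [← pow_add, Nat.sub_add_cancel hle]
    rw [this]
    exact Ideal.mul_mem_left _ _ (hk c)
  refine ⟨K * ∑ i, d i, ?_⟩
  intro t e hPe ht
  have hbig : ∀ i, ∃ b : Fin (d i), K ≤ e ⟨i, b⟩ := by
    intro i
    by_contra hcon
    push_neg at hcon
    have hsum : bdeg d i e ≤ (d i) * (K - 1) := by
      rw [bdeg]
      calc ∑ b : Fin (d i), e ⟨i, b⟩ ≤ ∑ _b : Fin (d i), (K - 1) :=
            Finset.sum_le_sum (fun b _ => by have := hcon b; omega)
        _ = (d i) * (K - 1) := by simp [Finset.sum_const, Finset.card_univ, mul_comm]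
    have hdi : d i * K ≤ t := by
      calc d i * K ≤ (∑ i', d i') * K := by
            exact Nat.mul_le_mul_right K (Finset.single_le_sum (f := d)
              (fun _ _ => Nat.zero_le _) (Finset.mem_univ i))
        _ = K * ∑ i', d i' := mul_comm _ _
        _ ≤ t := ht
    rw [hPe i] at hsum
    have h1d : 1 ≤ d i := hd i
    have hK1 : 1 ≤ K := Nat.succ_le_succ (Nat.zero_le _)
    have hmul : d i * K = d i * (K - 1) + d i := by
      conv_lhs => rw [show K = (K - 1) + 1 by omega]
      rw [Nat.mul_add, Nat.mul_one]
    omega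
  choose c hc using hbig
  set e' := e - ∑ i : Fin n, Finsupp.single (⟨i, c i⟩ : Σ i : Fin n, Fin (d i)) K with he'
  have hsplit : e = (K • μexp d c) + e' := by
    have hKμ : K • μexp d c
        = ∑ i : Fin n, Finsupp.single (⟨i, c i⟩ : Σ i : Fin n, Fin (d i)) K := by
      rw [μexp, Finset.smul_sum]
      exact Finset.sum_congr rfl fun i _ => by rw [Finsupp.smul_single, smul_eq_mul, mul_one]
    ext s
    obtain ⟨i, b⟩ := s
    rw [Finsupp.add_apply, hKμ, he', Finsupp.tsub_apply, sum_single_apply]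
    split_ifs with hb
    · have := hc i
      rw [hb] at this
      omega
    · omega
  have : monomial e (1 : ℂ) = μmon d c ^ K * monomial e' 1 := by
    rw [μmon, monomial_pow, one_pow, monomial_mul, one_mul, ← hsplit]
  rw [this]
  exact Ideal.mul_mem_right _ _ (hKmem c)

variable (d) in
/-- generating set at level `u` over base level `T` -/
def Gset {m : ℕ} (a : Fin m → (Π i, Fin (d i)) → ℂ) (T u : ℕ) :
    Set (MvPolynomial (Σ i : Fin n, Fin (d i)) ℂ) :=
  {p | ∃ (α : Fin m → ℕ) (e : (Σ i : Fin n, Fin (d i)) →₀ ℕ),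
    (∑ j, α j) = u ∧ Pdeg d T e ∧ p = (∏ j, Fpoly d (a j) ^ α j) * monomial e 1}

lemma mul_F_span {m : ℕ} (a : Fin m → (Π i, Fin (d i)) → ℂ) (T u : ℕ) (j : Fin m)
    {x : MvPolynomial (Σ i : Fin n, Fin (d i)) ℂ}
    (hx : x ∈ Submodule.span ℂ (Gset d a T u)) :
    x * Fpoly d (a j) ∈ Submodule.span ℂ (Gset d a T (u + 1)) := by
  classical
  induction hx using Submodule.span_induction with
  | mem p hp =>
      obtain ⟨α, e, hα, he, rfl⟩ := hp
      apply Submodule.subset_span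
      refine ⟨(fun j' => α j' + if j' = j then 1 else 0), e, ?_, he, ?_⟩
      · rw [Finset.sum_add_distrib, hα, Finset.sum_ite_eq' Finset.univ j (fun _ => (1:ℕ))]
        simp
      · have hprod : (∏ j', Fpoly d (a j') ^ (α j' + if j' = j then 1 else 0))
            = (∏ j', Fpoly d (a j') ^ α j') * Fpoly d (a j) := by
          have hsplit : ∀ j', Fpoly d (a j') ^ (α j' + if j' = j then 1 else 0)
              = Fpoly d (a j') ^ α j' * Fpoly d (a j') ^ (if j' = j then 1 else 0) := by
            intro j'; rw [pow_add]
          rw [Finset.prod_congr rfl (fun j' _ => hsplit j'), Finset.prod_mul_distrib]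
          congr 1
          rw [Finset.prod_eq_single j]
          · simp
          · intro b _ hb; rw [if_neg hb, pow_zero]
          · simp
        rw [hprod]
        ring
  | zero => rw [zero_mul]; exact Submodule.zero_mem _
  | add x y hx hy ihx ihy => rw [add_mul]; exact Submodule.add_mem _ ihx ihy
  | smul c x hx ihx => rw [smul_mul_assoc]; exact Submodule.smul_mem _ _ ihx

lemma span_claim (hd : ∀ i, 1 ≤ d i)
    {m : ℕ} (a : Fin m → (Π i, Fin (d i)) → ℂ) (T : ℕ)
    (hT : ∀ t (e : (Σ i : Fin n, Fin (d i)) →₀ ℕ), Pdeg d t e → T ≤ t →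
      monomial e (1 : ℂ) ∈ Ideal.span (Set.range (fun j => Fpoly d (a j))))
    (u : ℕ) :
    ∀ p : MvPolynomial (Σ i : Fin n, Fin (d i)) ℂ,
      (∀ e ∈ p.support, Pdeg d (T + u) e) → p ∈ Submodule.span ℂ (Gset d a T u) := by
  classical
  induction u with
  | zero =>
      intro p hp
      rw [p.as_sum]
      refine Submodule.sum_mem _ fun e he => ?_
      have : monomial e (coeff e p) = (coeff e p) • ((∏ j, Fpoly d (a j) ^ (0:ℕ)) * monomial e 1) := by
        simp [smul_monomial]
      rw [this]
      exact Submodule.smul_mem _ _ (Submodule.subset_span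
        ⟨0, e, by simp, by simpa using hp e he, by simp⟩)
  | succ u ih =>
      intro p hp
      have hpI : p ∈ Ideal.span (Set.range (fun j => Fpoly d (a j))) := by
        rw [p.as_sum]
        refine Submodule.sum_mem _ fun e he => ?_
        rw [← mul_one (coeff e p), ← C_mul_monomial]
        exact Ideal.mul_mem_left _ _ (hT (T + (u+1)) e (hp e he) (Nat.le_add_right _ _))
      rw [Ideal.mem_span_range_iff_exists_fun] at hpI
      obtain ⟨q, hq⟩ := hpI
      have hrw : p = ∑ j, (πproj d (T + u) (q j)) * Fpoly d (a j) := by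
        conv_lhs => rw [← πproj_eq_self hp, ← hq]
        rw [πproj_sum]
        refine Finset.sum_congr rfl fun j _ => ?_
        rw [show T + (u + 1) = (T + u) + 1 by omega]
        exact πproj_mul (T+u) (q j) _ (support_Fpoly (a j))
      rw [hrw]
      refine Submodule.sum_mem _ fun j _ => ?_
      refine mul_F_span a T u j (ih _ fun e he => ?_)
      have := mem_support_iff.mp he
      rw [coeff_πproj] at this
      by_contra hcon
      rw [if_neg hcon] at this
      exact this rfl

lemma finsupp_univ_sum_single {τ : Type*} [Fintype τ] [DecidableEq τ] (f : τ →₀ ℕ) :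
    ∑ s : τ, Finsupp.single s (f s) = f := by
  ext s'
  rw [Finsupp.finset_sum_apply, Finset.sum_eq_single s']
  · rw [Finsupp.single_eq_same]
  · intro b _ hb; rw [Finsupp.single_apply, if_neg hb]
  · simp

section counting

variable (hd : ∀ i, 1 ≤ d i)

/-- embedding of "non-first" variables -/
def emb (hd : ∀ i, 1 ≤ d i) (i : Fin n) (b : Fin (d i - 1)) : Fin (d i) :=
  ⟨b.val + 1, by have := b.isLt; omega⟩

/-- the first variable in block `i` -/
def fst0 (hd : ∀ i, 1 ≤ d i) (i : Fin n) : Fin (d i) := ⟨0, hd i⟩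

/-- exponent family for counting -/
noncomputable def ψexp (hd : ∀ i, 1 ≤ d i) (t : ℕ) (g : Π i, Fin (d i - 1) → ℕ) :
    (Σ i : Fin n, Fin (d i)) →₀ ℕ :=
  ∑ i : Fin n, (Finsupp.single (⟨i, fst0 hd i⟩ : Σ i : Fin n, Fin (d i)) (t - ∑ b, g i b)
    + ∑ b : Fin (d i - 1), Finsupp.single (⟨i, emb hd i b⟩ : Σ i : Fin n, Fin (d i)) (g i b))

lemma Pdeg_ψexp (t : ℕ) (g : Π i, Fin (d i - 1) → ℕ) (hg : ∀ i, (∑ b, g i b) ≤ t) :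
    Pdeg d t (ψexp hd t g) := by
  classical
  intro i
  rw [ψexp, bdeg_finsetSum]
  rw [Finset.sum_eq_single i]
  · rw [bdeg_add, bdeg_single, if_pos rfl, bdeg_finsetSum]
    have : ∀ b : Fin (d i - 1),
        bdeg d i (Finsupp.single (⟨i, emb hd i b⟩ : Σ i : Fin n, Fin (d i)) (g i b)) = g i b := by
      intro b; rw [bdeg_single, if_pos rfl]
    rw [Finset.sum_congr rfl fun b _ => this b]
    have h1 := hg i
    have h2 : (Finset.univ.sum (g i)) = ∑ b : Fin (d i - 1), g i b := rfl
    omega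
  · intro i' _ hne
    rw [bdeg_add, bdeg_single, if_neg hne, bdeg_finsetSum, Finset.sum_eq_zero, add_zero]
    intro b _
    rw [bdeg_single, if_neg hne]
  · simp

lemma ψexp_apply_emb (t : ℕ) (g : Π i, Fin (d i - 1) → ℕ) (i : Fin n) (b : Fin (d i - 1)) :
    ψexp hd t g ⟨i, emb hd i b⟩ = g i b := by
  classical
  rw [ψexp, Finsupp.finset_sum_apply, Finset.sum_eq_single i]
  · rw [Finsupp.add_apply, Finsupp.single_apply, if_neg, zero_add,
      Finsupp.finset_sum_apply, Finset.sum_eq_single b]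
    · rw [Finsupp.single_eq_same]
    · intro b' _ hb'
      rw [Finsupp.single_apply, if_neg]
      simp only [Sigma.mk.inj_iff, heq_eq_eq]
      rintro ⟨-, h⟩
      apply hb'
      have : b'.val + 1 = b.val + 1 := congrArg Fin.val h
      exact Fin.ext (by omega)
    · simp
    · simp only [Sigma.mk.inj_iff, heq_eq_eq]
      rintro ⟨-, h⟩
      have : (0 : ℕ) = b.val + 1 := congrArg Fin.val h
      omega
  · intro i' _ hne
    rw [Finsupp.add_apply, Finsupp.single_apply, if_neg, Finsupp.finset_sum_apply,
      Finset.sum_eq_zero, add_zero]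
    · intro b' _
      rw [Finsupp.single_apply, if_neg]
      intro hc
      exact hne (congrArg Sigma.fst hc)
    · intro hc
      exact hne (congrArg Sigma.fst hc)
  · simp

lemma ψexp_injective (t β : ℕ) : Function.Injective
    (fun g : Π i : Fin n, Fin (d i - 1) → Fin (β+1) =>
      ψexp hd t (fun i b => (g i b : ℕ))) := by
  intro g g' hgg
  funext i b
  have := congrArg (fun e => e ⟨i, emb hd i b⟩) hgg
  simp only [ψexp_apply_emb] at this
  exact Fin.ext this

end counting

lemma Gset_subset_span {m' T u : ℕ} (a : Fin (m' + 1) → (Π i, Fin (d i)) → ℂ) :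
    Gset d a T u ⊆ Set.range (fun p :
        (Fin m' → Fin (u + 1)) × ((Σ i : Fin n, Fin (d i)) → Fin (T + 1)) =>
      (∏ j, Fpoly d (a j) ^ (Fin.snoc (fun b => (p.1 b : ℕ)) (u - ∑ b, (p.1 b : ℕ)) j))
        * monomial (∑ s : Σ i : Fin n, Fin (d i), Finsupp.single s (p.2 s)) 1) := by
  classical
  rintro p ⟨α, e, hα, he, rfl⟩
  have hbound : ∀ j, α j ≤ u := by
    intro j
    rw [← hα]
    exact Finset.single_le_sum (fun _ _ => Nat.zero_le _) (Finset.mem_univ j)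
  have hebound : ∀ s : Σ i : Fin n, Fin (d i), e s ≤ T := by
    rintro ⟨i, b⟩
    have : e ⟨i, b⟩ ≤ bdeg d i e :=
      Finset.single_le_sum (f := fun b' => e ⟨i, b'⟩) (fun _ _ => Nat.zero_le _)
        (Finset.mem_univ b)
    rw [he i] at this
    exact this
  refine ⟨⟨fun b => ⟨α b.castSucc, Nat.lt_succ_of_le (hbound _)⟩,
    fun s => ⟨e s, Nat.lt_succ_of_le (hebound s)⟩⟩, ?_⟩
  simp only
  have h1 : (Fin.snoc (fun b : Fin m' => α b.castSucc)
      (u - ∑ b : Fin m', α b.castSucc) : Fin (m' + 1) → ℕ) = α := by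
    funext j
    induction j using Fin.lastCases with
    | last =>
        rw [Fin.snoc_last]
        have := Fin.sum_univ_castSucc (f := α)
        rw [this] at hα
        omega
    | cast b => rw [Fin.snoc_castSucc]
  rw [show (fun b : Fin m' => ((⟨α b.castSucc, Nat.lt_succ_of_le (hbound _)⟩ : Fin (u+1)) : ℕ))
      = fun b : Fin m' => α b.castSucc from rfl]
  rw [h1]
  congr 1
  congr 1
  rw [finsupp_univ_sum_single e]

lemma core_lemma (hd : ∀ i, 1 ≤ d i) {m : ℕ} (hm : m ≤ ∑ i, (d i - 1))
    (a : Fin m → (Π i, Fin (d i)) → ℂ) :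
    ∃ x : Π i, Fin (d i) → ℂ, (∀ i, x i ≠ 0) ∧
      ∀ j, ∑ c : Π i, Fin (d i), a j c * ∏ i, x i (c i) = 0 := by
  classical
  by_contra hno
  rcases Nat.eq_zero_or_pos m with rfl | hm1
  · refine hno ⟨fun i b => 1, fun i h0 => ?_, fun j => Fin.elim0 j⟩
    have := congrFun h0 (fst0 hd i)
    simp at this
  obtain ⟨m', rfl⟩ : ∃ m', m = m' + 1 := ⟨m - 1, by omega⟩
  obtain ⟨T, hT⟩ := monomial_mem_of_big hd a hno
  set S := ∑ i, (d i - 1) with hS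
  have hS1 : 1 ≤ S := le_trans hm1 hm
  set E := (T + 1) ^ (Fintype.card (Σ i : Fin n, Fin (d i))) with hE
  set B := S ^ (S - 1) * E + T with hB
  set t := S * B with ht
  have hBt : B ≤ t := Nat.le_mul_of_pos_left B hS1
  have htT : T ≤ t := le_trans (Nat.le_add_left T _) hBt
  set u := t - T with hu
  have htu : T + u = t := by omega
  -- the linearly independent family of monomials
  set ψ : (Π i : Fin n, Fin (d i - 1) → Fin (B+1)) → MvPolynomial (Σ i : Fin n, Fin (d i)) ℂ :=
    fun g => monomial (ψexp hd t (fun i b => (g i b : ℕ))) 1 with hψ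
  have hli : LinearIndependent ℂ ψ := by
    have h := (MvPolynomial.basisMonomials (Σ i : Fin n, Fin (d i)) ℂ).linearIndependent.comp
      _ (ψexp_injective hd t B)
    have hcoe : ψ = (MvPolynomial.basisMonomials (Σ i : Fin n, Fin (d i)) ℂ) ∘
        (fun g : Π i : Fin n, Fin (d i - 1) → Fin (B+1) =>
          ψexp hd t (fun i b => (g i b : ℕ))) := by
      funext g
      exact (congrFun (coe_basisMonomials _ _) _).symm
    rw [hcoe]
    exact h
  -- each lies in the span of the generators
  have hmem : ∀ g, ψ g ∈ Submodule.span ℂ (Gset d a T u) := by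
    intro g
    apply span_claim hd a T hT u
    intro e he
    rw [MvPolynomial.support_monomial, if_neg one_ne_zero] at he
    rw [Finset.mem_singleton] at he
    subst he
    rw [htu]
    apply Pdeg_ψexp hd t
    intro i
    calc ∑ b, ((g i b : ℕ)) ≤ ∑ _b : Fin (d i - 1), B :=
          Finset.sum_le_sum fun b _ => Fin.is_le _
      _ = (d i - 1) * B := by rw [Finset.sum_const, Finset.card_univ, Fintype.card_fin, smul_eq_mul]
      _ ≤ S * B := Nat.mul_le_mul_right B
          (Finset.single_le_sum (f := fun i => d i - 1) (fun _ _ => Nat.zero_le _)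
            (Finset.mem_univ i))
  -- the finite generating family
  set genF : (Fin m' → Fin (u + 1)) × ((Σ i : Fin n, Fin (d i)) → Fin (T + 1)) →
      MvPolynomial (Σ i : Fin n, Fin (d i)) ℂ :=
    fun p => (∏ j, Fpoly d (a j) ^ (Fin.snoc (fun b => (p.1 b : ℕ)) (u - ∑ b, (p.1 b : ℕ)) j))
        * monomial (∑ s : Σ i : Fin n, Fin (d i), Finsupp.single s (p.2 s)) 1 with hgenF
  set U : Submodule ℂ (MvPolynomial (Σ i : Fin n, Fin (d i)) ℂ) :=
    Submodule.span ℂ (Set.range genF) with hU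
  haveI : Module.Finite ℂ U := FiniteDimensional.span_of_finite ℂ (Set.finite_range genF)
  have hsub : Submodule.span ℂ (Set.range ψ) ≤ U := by
    rw [Submodule.span_le]
    rintro _ ⟨g, rfl⟩
    have h1 : Submodule.span ℂ (Gset d a T u) ≤ U :=
      Submodule.span_mono (Gset_subset_span a)
    exact h1 (hmem g)
  -- dimension comparison
  have hcard : Fintype.card (Π i : Fin n, Fin (d i - 1) → Fin (B+1)) ≤
      Fintype.card ((Fin m' → Fin (u + 1)) × ((Σ i : Fin n, Fin (d i)) → Fin (T + 1))) := by
    calc Fintype.card (Π i : Fin n, Fin (d i - 1) → Fin (B+1))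
        ≤ (Set.range ψ).finrank ℂ := linearIndependent_iff_card_le_finrank_span.mp hli
      _ ≤ Module.finrank ℂ U := Submodule.finrank_mono hsub
      _ = (Set.range genF).finrank ℂ := rfl
      _ ≤ _ := finrank_range_le_card _
  -- numeric contradiction
  have hΓ : Fintype.card (Π i : Fin n, Fin (d i - 1) → Fin (B+1)) = (B+1) ^ S := by
    rw [Fintype.card_pi]
    rw [Finset.prod_congr rfl (fun i _ => by
      rw [Fintype.card_fun, Fintype.card_fin, Fintype.card_fin])]
    rw [Finset.prod_pow_eq_pow_sum]
  have hΘ : Fintype.card ((Fin m' → Fin (u + 1)) × ((Σ i : Fin n, Fin (d i)) → Fin (T + 1)))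
      = (u+1) ^ m' * E := by
    rw [Fintype.card_prod, Fintype.card_fun, Fintype.card_fun, Fintype.card_fin,
      Fintype.card_fin, Fintype.card_fin, hE]
  rw [hΓ, hΘ] at hcard
  -- now derive False
  have hm' : m' ≤ S - 1 := by omega
  have hu1 : u + 1 ≤ S * (B + 1) := by
    have : u ≤ S * B := by omega
    calc u + 1 ≤ S * B + 1 := by omega
      _ ≤ S * B + S := by omega
      _ = S * (B + 1) := by ring
  have hstep : (u+1) ^ m' * E ≤ S ^ (S-1) * (B+1) ^ (S-1) * E := by
    have h1 : (u+1) ^ m' ≤ (S * (B+1)) ^ m' := Nat.pow_le_pow_left hu1 m'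
    have h2 : (S * (B+1)) ^ m' ≤ (S * (B+1)) ^ (S-1) :=
      Nat.pow_le_pow_right (by positivity) hm'
    calc (u+1) ^ m' * E ≤ (S * (B+1)) ^ (S-1) * E :=
          Nat.mul_le_mul_right E (le_trans h1 h2)
      _ = S ^ (S-1) * (B+1) ^ (S-1) * E := by rw [mul_pow]
  have hfinal : (B+1) ^ S ≤ (B+1) ^ (S-1) * (S ^ (S-1) * E) := by
    calc (B+1) ^ S ≤ S ^ (S-1) * (B+1) ^ (S-1) * E := le_trans hcard hstep
      _ = (B+1) ^ (S-1) * (S ^ (S-1) * E) := by ring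
  have hpowS : (B+1) ^ S = (B+1) ^ (S-1) * (B+1) := by
    conv_lhs => rw [show S = (S-1) + 1 by omega]
    rw [pow_succ]
  rw [hpowS] at hfinal
  have hcancel : B + 1 ≤ S ^ (S-1) * E :=
    Nat.le_of_mul_le_mul_left hfinal (pow_pos (Nat.succ_pos B) (S-1))
  omega

end UnentangledAux

open UnentangledAux in
/-- Let `H₁, …, Hₙ` (`n ≥ 1`) be finite-dimensional complex Hilbert spaces and
`H = H₁ ⊗ ⋯ ⊗ Hₙ`.  If `V ⊆ H` is a subspace all of whose nonzero elements are
entangled (i.e. not product tensors `h₁ ⊗ ⋯ ⊗ hₙ`), then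
`dim V ≤ dim H₁ ⋯ dim Hₙ − ∑ᵢ (dim Hᵢ − 1) − 1`. -/
theorem unentangled_gleason_stmt3
    {n : ℕ} (hn : 0 < n)
    (H : Fin n → Type*) [∀ i, NormedAddCommGroup (H i)]
    [∀ i, InnerProductSpace ℂ (H i)] [∀ i, FiniteDimensional ℂ (H i)]
    (V : Submodule ℂ (⨂[ℂ] i, H i))
    (hV : ∀ v ∈ V, v ≠ 0 → v ∉ Set.range (PiTensorProduct.tprod ℂ (s := H))) :
    Module.finrank ℂ V ≤
      (∏ i, Module.finrank ℂ (H i)) - (∑ i, (Module.finrank ℂ (H i) - 1)) - 1 := by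
  classical
  set d : Fin n → ℕ := fun i => Module.finrank ℂ (H i) with hdd
  set e : Π i, Module.Basis (Fin (d i)) ℂ (H i) := fun i => Module.finBasis ℂ (H i) with hee
  set Λ : MultilinearMap ℂ H ((Π i, Fin (d i)) → ℂ) :=
    MultilinearMap.pi (fun c => (MultilinearMap.mkPiAlgebra ℂ (Fin n) ℂ).compLinearMap
      (fun i => (Finsupp.lapply (c i)) ∘ₗ ((e i).repr : H i ≃ₗ[ℂ] _).toLinearMap)) with hΛ
  set Φ : (⨂[ℂ] i, H i) →ₗ[ℂ] ((Π i, Fin (d i)) → ℂ) := PiTensorProduct.lift Λ with hΦ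
  have hΦt : ∀ h : Π i, H i, Φ ((PiTensorProduct.tprod ℂ) h)
      = fun c => ∏ i, (e i).repr (h i) (c i) := by
    intro h
    rw [hΦ, PiTensorProduct.lift.tprod]
    rfl
  set Ψ : ((Π i, Fin (d i)) → ℂ) →ₗ[ℂ] ⨂[ℂ] i, H i :=
    { toFun := fun f => ∑ c, f c • (PiTensorProduct.tprod ℂ) (fun i => e i (c i)),
      map_add' := by intro f g; simp [add_smul, Finset.sum_add_distrib],
      map_smul' := by intro r f; simp [smul_smul, Finset.smul_sum] } with hΨ
  have hexp : ∀ h : Π i, H i, (PiTensorProduct.tprod ℂ) h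
      = ∑ c : Π i, Fin (d i),
          (∏ i, (e i).repr (h i) (c i)) • (PiTensorProduct.tprod ℂ) (fun i => e i (c i)) := by
    intro h
    conv_lhs => rw [show h = fun i => ∑ a, (e i).repr (h i) a • e i a from
      funext fun i => ((e i).sum_repr (h i)).symm]
    rw [MultilinearMap.map_sum]
    exact Finset.sum_congr rfl fun c _ => MultilinearMap.map_smul_univ _ _ _
  have hΨΦ : ∀ z : ⨂[ℂ] i, H i, Ψ (Φ z) = z := by
    suffices hc : Ψ ∘ₗ Φ = LinearMap.id by
      intro z
      exact congrArg (fun g => g z) (congrArg DFunLike.coe hc)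
    apply PiTensorProduct.ext
    apply MultilinearMap.ext
    intro h
    simp only [LinearMap.compMultilinearMap_apply, LinearMap.comp_apply, LinearMap.id_apply,
      LinearMap.compMultilinearMap_apply]
    rw [hΦt]
    show ∑ c : Π i, Fin (d i),
        (fun c => ∏ i, (e i).repr (h i) (c i)) c • (PiTensorProduct.tprod ℂ) (fun i => e i (c i))
      = (PiTensorProduct.tprod ℂ) h
    rw [← hexp]
  have hinj : Function.Injective Φ := Function.LeftInverse.injective hΨΦ
  haveI : FiniteDimensional ℂ (⨂[ℂ] i, H i) := FiniteDimensional.of_injective Φ hinj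
  set V' := V.map Φ with hV'
  have hrank : Module.finrank ℂ V = Module.finrank ℂ V' :=
    (Submodule.equivMapOfInjective Φ hinj V).finrank_eq
  have hprodfun : ∀ x : Π i, Fin (d i) → ℂ,
      (fun c => ∏ i, x i (c i))
        = Φ ((PiTensorProduct.tprod ℂ) (fun i => ∑ a, x i a • e i a)) := by
    intro x
    rw [hΦt]
    funext c
    refine (Finset.prod_congr rfl fun i _ => ?_).symm
    rw [Module.Basis.repr_sum_self]
  have hW : Module.finrank ℂ ((Π i, Fin (d i)) → ℂ) = ∏ i, d i := by
    rw [Module.finrank_fintype_fun_eq_card, Fintype.card_pi]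
    exact Finset.prod_congr rfl fun i _ => Fintype.card_fin _
  by_cases hdall : ∀ i, 1 ≤ d i
  · -- main case
    suffices hsuff : Module.finrank ℂ V' + ((∑ i, (d i - 1)) + 1) ≤ ∏ i, d i by
      have h1 : (∏ i, Module.finrank ℂ (H i)) = ∏ i, d i := rfl
      have h2 : (∑ i, (Module.finrank ℂ (H i) - 1)) = ∑ i, (d i - 1) := rfl
      rw [hrank, h1, h2]
      omega
    by_contra hcon
    push_neg at hcon
    have hQrank := Submodule.finrank_quotient_add_finrank V'
    set q := Module.finrank ℂ ((((Π i, Fin (d i)) → ℂ)) ⧸ V') with hq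
    have hqS : q ≤ ∑ i, (d i - 1) := by
      rw [hW] at hQrank
      omega
    set bq : Module.Basis (Fin q) ℂ ((((Π i, Fin (d i)) → ℂ)) ⧸ V') :=
      Module.finBasis ℂ _ with hbq
    set ℓ : Fin q → (((Π i, Fin (d i)) → ℂ) →ₗ[ℂ] ℂ) :=
      fun j => (Finsupp.lapply j) ∘ₗ bq.repr.toLinearMap ∘ₗ V'.mkQ with hℓ
    have hmemV' : ∀ w : ((Π i, Fin (d i)) → ℂ), (∀ j, ℓ j w = 0) → w ∈ V' := by
      intro w hw
      have h1 : bq.repr (V'.mkQ w) = 0 := by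
        ext j
        exact hw j
      have h2 : V'.mkQ w = 0 := by
        have := congrArg bq.repr.symm h1
        rwa [LinearEquiv.symm_apply_apply, map_zero] at this
      rwa [Submodule.mkQ_apply, Submodule.Quotient.mk_eq_zero] at h2
    set A : Fin q → (Π i, Fin (d i)) → ℂ := fun j c => ℓ j (Pi.single c 1) with hA
    obtain ⟨x, hx0, hxz⟩ := core_lemma hdall hqS A
    set pf : (Π i, Fin (d i)) → ℂ := fun c => ∏ i, x i (c i) with hpf
    have hdecomp : pf = ∑ c, pf c • (Pi.single c (1:ℂ) : (Π i, Fin (d i)) → ℂ) := by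
      rw [← Finset.univ_sum_single pf]
      refine Finset.sum_congr rfl fun c _ => ?_
      funext c'
      by_cases hc : c' = c
      · subst hc; simp
      · simp [Pi.single_apply, hc]
    have hpfV' : pf ∈ V' := by
      apply hmemV'
      intro j
      have : ℓ j pf = ∑ c, pf c * A j c := by
        conv_lhs => rw [hdecomp]
        rw [map_sum]
        exact Finset.sum_congr rfl fun c _ => by rw [map_smul, smul_eq_mul]
      rw [this]
      rw [← hxz j]
      exact Finset.sum_congr rfl fun c _ => mul_comm _ _
    have hpfne : pf ≠ 0 := by
      have : ∀ i, ∃ a, x i a ≠ 0 := by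
        intro i
        by_contra hcc
        push_neg at hcc
        exact hx0 i (funext hcc)
      choose cx hcx using this
      intro h0
      have := congrFun h0 cx
      exact (Finset.prod_ne_zero_iff.mpr fun i _ => hcx i) this
    obtain ⟨z, hzV, hzΦ⟩ := hpfV'
    have hzt : z = (PiTensorProduct.tprod ℂ) (fun i => ∑ a, x i a • e i a) := by
      apply hinj
      rw [hzΦ, ← hprodfun x]
    have hzne : z ≠ 0 := by
      intro h0
      rw [h0, map_zero] at hzΦ
      exact hpfne hzΦ.symm
    exact hV z hzV hzne ⟨_, hzt.symm⟩
  · -- degenerate case: some `d i = 0`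
    push_neg at hdall
    obtain ⟨i0, hi0⟩ := hdall
    have hP0 : (∏ i, d i) = 0 := Finset.prod_eq_zero (Finset.mem_univ i0) (by omega)
    have hle : Module.finrank ℂ V ≤ ∏ i, d i := by
      rw [hrank, ← hW]
      exact le_trans (Submodule.finrank_le V') le_rfl
    have h1 : (∏ i, Module.finrank ℂ (H i)) = ∏ i, d i := rfl
    rw [h1]
    omega
end

section
/- Let H₁, …, Hₙ be finite-dimensional complex Hilbert spaces and H = H₁ ⊗ ⋯ ⊗ Hₙ. There exists a subspace V ⊆ H such that every nonzero v ∈ V is entangled and dim V = dim(H₁)⋯dim(Hₙ) − Σᵢ(dim Hᵢ − 1) − 1. -/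
/-!
Fix bases and send the `j`-th basis vector of `Hᵢ` to `Xʲ ∈ ℂ[X]`. The induced map
`x₁ ⊗ ⋯ ⊗ xₙ ↦ ∏ᵢ pᵢ(xᵢ)` on `⨂ᵢ Hᵢ` kills no nonzero product tensor, because `ℂ[X]` is a
domain and each `pᵢ` is injective. Its image is spanned by the monomials `X^(k₁ + ⋯ + kₙ)` with
`kᵢ < dim Hᵢ`, i.e. it consists of all polynomials of degree at most `∑ᵢ (dim Hᵢ - 1)`. The kernel
is therefore an entangled subspace of dimension `∏ᵢ dim Hᵢ - ∑ᵢ (dim Hᵢ - 1) - 1`.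
-/

open scoped TensorProduct
open Polynomial Module PiTensorProduct

theorem range_sum_fin_val_eq_Iic {ι : Type*} [Fintype ι] {d : ι → ℕ} (hd : ∀ i, 0 < d i) :
    Set.range (fun k : Π i, Fin (d i) => ∑ i, (k i : ℕ)) = Set.Iic (∑ i, (d i - 1)) := by
  classical
  refine Set.Subset.antisymm ?_ fun s hs => ?_
  · rintro _ ⟨k, rfl⟩
    exact Finset.sum_le_sum fun i _ => Nat.le_sub_one_of_lt (k i).isLt
  induction s with
  | zero => exact ⟨fun i => ⟨0, hd i⟩, by simp⟩
  | succ s ih =>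
    obtain ⟨k, hk⟩ := ih (Nat.le_of_succ_le hs)
    simp only at hk
    obtain ⟨i, hi⟩ : ∃ i, (k i : ℕ) + 1 < d i := by
      by_contra! hmax
      have : ∑ i, (k i : ℕ) = ∑ i, (d i - 1) :=
        Finset.sum_congr rfl fun i _ => by have := (k i).isLt; have := hmax i; omega
      simp only [Set.mem_Iic] at hs
      omega
    refine ⟨Function.update k i ⟨k i + 1, hi⟩, ?_⟩
    simp only
    rw [← Finset.add_sum_erase _ _ (Finset.mem_univ i), ← hk,
      ← Finset.add_sum_erase _ _ (Finset.mem_univ i), Function.update_self,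
      Finset.sum_congr rfl fun j hj => by rw [Function.update_of_ne (Finset.ne_of_mem_erase hj)]]
    simp only
    omega

theorem Polynomial.finrank_degreeLT (R : Type*) [Ring R] [StrongRankCondition R] (n : ℕ) :
    finrank R (degreeLT R n) = n := by
  rw [(degreeLTEquiv R n).finrank_eq, finrank_fin_fun]

theorem Polynomial.linearIndependent_X_pow_fin (R : Type*) [Semiring R] (n : ℕ) :
    LinearIndependent R fun j : Fin n => (X : R[X]) ^ (j : ℕ) := by
  simpa [Function.comp_def, X_pow_eq_monomial] using
    (basisMonomials R).linearIndependent.comp _ Fin.val_injective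

namespace PiTensorProduct

theorem finrank_eq_prod {ι R : Type*} [Fintype ι] [CommRing R] [StrongRankCondition R]
    {M : ι → Type*} [∀ i, AddCommGroup (M i)] [∀ i, Module R (M i)]
    [∀ i, Module.Free R (M i)] [∀ i, Module.Finite R (M i)] :
    finrank R (⨂[R] i, M i) = ∏ i, finrank R (M i) := by
  classical
  rw [finrank_eq_card_basis (Basis.piTensorProduct fun i => Free.chooseBasis R (M i)),
    Fintype.card_pi]
  simp [finrank_eq_card_chooseBasisIndex]

section LiftProd

variable {ι R A : Type*} [Fintype ι] [CommSemiring R] [CommSemiring A] [Algebra R A]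
  {M : ι → Type*} [∀ i, AddCommMonoid (M i)] [∀ i, Module R (M i)]

noncomputable def liftProd (f : Π i, M i →ₗ[R] A) : (⨂[R] i, M i) →ₗ[R] A :=
  lift ((MultilinearMap.mkPiAlgebra R ι A).compLinearMap f)

@[simp]
theorem liftProd_tprod (f : Π i, M i →ₗ[R] A) (x : Π i, M i) :
    liftProd f (tprod R x) = ∏ i, f i (x i) := by
  simp [liftProd]

theorem eq_zero_of_mem_ker_liftProd_of_mem_range_tprod [Nontrivial A] [NoZeroDivisors A]
    {f : Π i, M i →ₗ[R] A} (hf : ∀ i, Function.Injective (f i)) {v : ⨂[R] i, M i}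
    (hv : v ∈ LinearMap.ker (liftProd f)) (hv' : v ∈ Set.range (tprod R)) : v = 0 := by
  obtain ⟨x, rfl⟩ := hv'
  rw [LinearMap.mem_ker, liftProd_tprod, Finset.prod_eq_zero_iff] at hv
  obtain ⟨i, -, hi⟩ := hv
  exact MultilinearMap.map_coord_zero _ i (hf i (hi.trans (map_zero _).symm))

theorem range_liftProd_eq_span {κ : ι → Type*} (b : Π i, Basis (κ i) R (M i))
    (f : Π i, M i →ₗ[R] A) :
    LinearMap.range (liftProd f) =
      Submodule.span R (Set.range fun k : Π i, κ i => ∏ i, f i (b i (k i))) := by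
  rw [LinearMap.range_eq_map, ← (Basis.piTensorProduct b).span_eq, Submodule.map_span,
    ← Set.range_comp]
  simp [Function.comp_def]

theorem range_liftProd_constr_X_pow {d : ι → ℕ} (hd : ∀ i, 0 < d i)
    (b : Π i, Basis (Fin (d i)) R (M i)) :
    LinearMap.range (liftProd fun i => (b i).constr R fun j => (X : R[X]) ^ (j : ℕ)) =
      degreeLT R (∑ i, (d i - 1) + 1) := by
  classical
  rw [range_liftProd_eq_span b, degreeLT_eq_span_X_pow, Finset.coe_image, Finset.coe_range,
    Set.Iio_add_one_eq_Iic, ← range_sum_fin_val_eq_Iic hd, ← Set.range_comp]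
  simp [Function.comp_def, Finset.prod_pow_eq_pow_sum]

end LiftProd

theorem exists_entangled_submodule_finrank_eq {ι K : Type*} [Fintype ι] [Field K]
    {M : ι → Type*} [∀ i, AddCommGroup (M i)] [∀ i, Module K (M i)] :
    ∃ V : Submodule K (⨂[K] i, M i),
      (∀ v ∈ V, v ≠ 0 → v ∉ Set.range (tprod K (s := M))) ∧
      finrank K V = (∏ i, finrank K (M i)) - (∑ i, (finrank K (M i) - 1)) - 1 := by
  by_cases hzero : ∃ i, finrank K (M i) = 0
  · -- a trivial or infinite-dimensional factor makes the right-hand side truncate to `0`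
    obtain ⟨i, hi⟩ := hzero
    refine ⟨⊥, fun v hv hv0 _ => hv0 ((Submodule.mem_bot K).mp hv), ?_⟩
    simp [Finset.prod_eq_zero (f := fun i => finrank K (M i)) (Finset.mem_univ i) hi]
  have hd : ∀ i, 0 < finrank K (M i) := fun i => Nat.pos_of_ne_zero fun h => hzero ⟨i, h⟩
  have := fun i => Module.finite_of_finrank_pos (hd i)
  let P := fun i => (finBasis K (M i)).constr K fun j => (X : K[X]) ^ (j : ℕ)
  have hP : ∀ i, Function.Injective (P i) := fun i =>
    (finBasis K (M i)).injective_constr_of_linearIndependent (linearIndependent_X_pow_fin K _)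
  refine ⟨LinearMap.ker (liftProd P),
    fun v hv hv0 hv' => hv0 (eq_zero_of_mem_ker_liftProd_of_mem_range_tprod hP hv hv'), ?_⟩
  have hrank := (liftProd P).finrank_range_add_finrank_ker
  rw [range_liftProd_constr_X_pow hd, finrank_degreeLT, finrank_eq_prod] at hrank
  omega

end PiTensorProduct

theorem unentangled_gleason_stmt4_general
    {n : ℕ}
    (H : Fin n → Type*) [∀ i, NormedAddCommGroup (H i)]
    [∀ i, InnerProductSpace ℂ (H i)] :
    ∃ V : Submodule ℂ (⨂[ℂ] i, H i),
      (∀ v ∈ V, v ≠ 0 → v ∉ Set.range (PiTensorProduct.tprod ℂ (s := H))) ∧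
      Module.finrank ℂ V =
        (∏ i, Module.finrank ℂ (H i)) - (∑ i, (Module.finrank ℂ (H i) - 1)) - 1 :=
  PiTensorProduct.exists_entangled_submodule_finrank_eq

/-- The bound of the entangled-subspace theorem is attained: for finite-dimensional
complex Hilbert spaces `H₁, …, Hₙ` (`n ≥ 1`) and `H = H₁ ⊗ ⋯ ⊗ Hₙ` there exists a
subspace `V ⊆ H`, every nonzero element of which is entangled (not a product tensor),
with `dim V = dim H₁ ⋯ dim Hₙ − ∑ᵢ (dim Hᵢ − 1) − 1`. -/
theorem unentangled_gleason_stmt4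
    {n : ℕ} (hn : 0 < n)
    (H : Fin n → Type*) [∀ i, NormedAddCommGroup (H i)]
    [∀ i, InnerProductSpace ℂ (H i)] [∀ i, FiniteDimensional ℂ (H i)] :
    ∃ V : Submodule ℂ (⨂[ℂ] i, H i),
      (∀ v ∈ V, v ≠ 0 → v ∉ Set.range (PiTensorProduct.tprod ℂ (s := H))) ∧
      Module.finrank ℂ V =
        (∏ i, Module.finrank ℂ (H i)) - (∑ i, (Module.finrank ℂ (H i) - 1)) - 1 :=
  unentangled_gleason_stmt4_general H
end

section
/- Let V be a 2-dimensional complex Hilbert space, H an n-dimensional complex Hilbert space, and Σ ⊂ S(H) a subset invariant under multiplication by all complex scalars of absolute value 1. Suppose {u_j}_{j=1}^{2n} is an orthonormal basis of V ⊗ H with each u_j ∈ S(V) ⊗ Σ. Then there exist a partition n₁ ≥ n₂ ≥ … ≥ n_r > 0 of n, an orthogonal decomposition H = U₁ ⊕ … ⊕ U_r, unit vectors a₁, …, a_r ∈ S(V), and for each i = 1,…,r orthonormal bases {b_{i1},…,b_{i n_i}} and {c_{i1},…,c_{i n_i}} of U_i, such that {u_j | j = 1,…,2n} = ⋃_{i=1}^{r}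 ({a_i ⊗ b_{ij} | j = 1,…,n_i} ∪ {â_i ⊗ c_{ij} | j = 1,…,n_i}), where â_i denotes a unit vector in V orthogonal to a_i. -/
open scoped ComplexInnerProductSpace

open Module Submodule Finset

private lemma aux_dim2_parallel {V : Type*} [NormedAddCommGroup V] [InnerProductSpace ℂ V]
    (hV : Module.finrank ℂ V = 2) {a x y : V} (ha : a ≠ 0) (hx : x ≠ 0)
    (hax : ⟪a, x⟫ = 0) (hay : ⟪a, y⟫ = 0) : ∃ c : ℂ, y = c • x := by
  haveI : FiniteDimensional ℂ V := .of_finrank_eq_succ hV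
  have h1 : finrank ℂ (ℂ ∙ a) = 1 := finrank_span_singleton ha
  have h2 : finrank ℂ ((ℂ ∙ a)ᗮ) = 1 := by
    have h := Submodule.finrank_add_finrank_orthogonal (𝕜 := ℂ) (ℂ ∙ a)
    rw [hV, h1] at h; omega
  have hxm : x ∈ (ℂ ∙ a)ᗮ := Submodule.mem_orthogonal_singleton_iff_inner_right.mpr hax
  have hym : y ∈ (ℂ ∙ a)ᗮ := Submodule.mem_orthogonal_singleton_iff_inner_right.mpr hay
  have hle : (ℂ ∙ x) ≤ (ℂ ∙ a)ᗮ := (Submodule.span_singleton_le_iff_mem _ _).mpr hxm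
  have heq : (ℂ ∙ x) = (ℂ ∙ a)ᗮ :=
    Submodule.eq_of_le_of_finrank_le hle (by rw [h2, finrank_span_singleton hx])
  rw [← heq] at hym
  obtain ⟨c, hc⟩ := Submodule.mem_span_singleton.mp hym
  exact ⟨c, hc.symm⟩

private lemma aux_unit_orth {V : Type*} [NormedAddCommGroup V] [InnerProductSpace ℂ V]
    (hV : Module.finrank ℂ V = 2) (a : V) : ∃ b : V, ‖b‖ = 1 ∧ ⟪a, b⟫ = 0 := by
  haveI : FiniteDimensional ℂ V := .of_finrank_eq_succ hV
  have h1 : finrank ℂ (ℂ ∙ a) ≤ 1 := by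
    rcases eq_or_ne a 0 with rfl | h
    · rw [Submodule.span_zero_singleton]; simp
    · rw [finrank_span_singleton h]
  have h2 : 0 < finrank ℂ ((ℂ ∙ a)ᗮ) := by
    have h := Submodule.finrank_add_finrank_orthogonal (𝕜 := ℂ) (ℂ ∙ a)
    rw [hV] at h; omega
  haveI : Nontrivial ((ℂ ∙ a)ᗮ) := finrank_pos_iff.mp h2
  obtain ⟨x, hx0⟩ := exists_ne (0 : (ℂ ∙ a)ᗮ)
  have hx0' : (x : V) ≠ 0 := fun h => hx0 (Subtype.ext h)
  have hn : ‖(x : V)‖ ≠ 0 := norm_ne_zero_iff.mpr hx0'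
  refine ⟨(‖(x : V)‖ : ℂ)⁻¹ • (x : V), ?_, ?_⟩
  · rw [norm_smul]
    simp [hn, inv_mul_cancel₀ hn]
  · rw [inner_smul_right, Submodule.mem_orthogonal_singleton_iff_inner_right.mp x.2, mul_zero]

/-- Structure theorem for unentangled orthonormal bases of `V ⊗ H`, where `V` is a
`2`-dimensional and `H` an `n`-dimensional complex Hilbert space; the Hilbert tensor
product `E = V ⊗ H` is axiomatized by a bilinear map `tp` with
`⟪v ⊗ h, v' ⊗ h'⟫ = ⟪v, v'⟫⟪h, h'⟫` whose range spans `E`.  Let `Σ ⊆ S(H)` be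
invariant under unimodular scalars, and let `(u j)_{j=1}^{2n}` be an orthonormal
basis of `E` with every `u j ∈ S(V) ⊗ Σ`.  Then there are a partition
`n₁ ≥ ⋯ ≥ n_r > 0` of `n`, an orthogonal decomposition `H = U₁ ⊕ ⋯ ⊕ U_r`, unit
vectors `a₁, …, a_r ∈ S(V)` together with orthogonal unit vectors `â₁, …, â_r`, and
orthonormal bases `(b i 1, …, b i nᵢ)`, `(c i 1, …, c i nᵢ)` of `U i`, such that
`{u j} = ⋃ᵢ ({aᵢ ⊗ b i j} ∪ {âᵢ ⊗ c i j})`. -/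
theorem unentangled_gleason_stmt5
    {V H E : Type*}
    [NormedAddCommGroup V] [InnerProductSpace ℂ V]
    [NormedAddCommGroup H] [InnerProductSpace ℂ H]
    [NormedAddCommGroup E] [InnerProductSpace ℂ E]
    {n : ℕ} (hV : Module.finrank ℂ V = 2) (hH : Module.finrank ℂ H = n)
    (tp : V →ₗ[ℂ] H →ₗ[ℂ] E)
    (htp_inner : ∀ (v v' : V) (h h' : H), ⟪tp v h, tp v' h'⟫ = ⟪v, v'⟫ * ⟪h, h'⟫)
    (htp_span : Submodule.span ℂ {x : E | ∃ v h, x = tp v h} = ⊤)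
    (Sgm : Set H) (hSgm_sphere : ∀ w ∈ Sgm, ‖w‖ = 1)
    (hSgm_inv : ∀ (c : ℂ), ‖c‖ = 1 → ∀ w ∈ Sgm, c • w ∈ Sgm)
    (u : OrthonormalBasis (Fin (2 * n)) ℂ E)
    (hu : ∀ j, ∃ v w, ‖v‖ = 1 ∧ w ∈ Sgm ∧ u j = tp v w) :
    ∃ (r : ℕ) (N : Fin r → ℕ),
      Antitone N ∧ (∀ i, 0 < N i) ∧ (∑ i, N i = n) ∧
      ∃ (U : Fin r → Submodule ℂ H),
        (∀ i j, i ≠ j → ∀ x ∈ U i, ∀ y ∈ U j, ⟪x, y⟫ = 0) ∧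
        (⨆ i, U i) = ⊤ ∧
        ∃ (a ahat : Fin r → V),
          (∀ i, ‖a i‖ = 1) ∧ (∀ i, ‖ahat i‖ = 1) ∧ (∀ i, ⟪a i, ahat i⟫ = 0) ∧
          ∃ (b c : (i : Fin r) → Fin (N i) → H),
            (∀ i j, b i j ∈ U i) ∧ (∀ i, Orthonormal ℂ (b i)) ∧
            (∀ i, Submodule.span ℂ (Set.range (b i)) = U i) ∧
            (∀ i j, c i j ∈ U i) ∧ (∀ i, Orthonormal ℂ (c i)) ∧
            (∀ i, Submodule.span ℂ (Set.range (c i)) = U i) ∧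
            Set.range u =
              ⋃ i, (Set.range (fun j => tp (a i) (b i j)) ∪
                    Set.range (fun j => tp (ahat i) (c i j))) := by
  classical
  haveI hVfd : FiniteDimensional ℂ V := .of_finrank_eq_succ hV
  -- a unit vector in V
  obtain ⟨v₀, hv₀⟩ : ∃ v : V, ‖v‖ = 1 := by
    haveI : Nontrivial V := finrank_pos_iff.mp (by rw [hV]; norm_num)
    obtain ⟨x, hx⟩ := exists_ne (0 : V)
    have hn : ‖x‖ ≠ 0 := norm_ne_zero_iff.mpr hx
    exact ⟨(‖x‖ : ℂ)⁻¹ • x, by rw [norm_smul]; simp [hn, inv_mul_cancel₀ hn]⟩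
  haveI hHfd : FiniteDimensional ℂ H := by
    by_contra hfd
    have h0 : n = 0 := by
      rw [← hH]; exact (Module.finrank_of_infinite_dimensional hfd)
    have hEsub : ∀ x : E, x = 0 := by
      intro x
      have hx : x ∈ Submodule.span ℂ (Set.range u.toBasis) := by
        rw [u.toBasis.span_eq]; trivial
      haveI : IsEmpty (Fin (2 * n)) := ⟨fun i => by have := i.isLt; omega⟩
      rw [Set.range_eq_empty u.toBasis, Submodule.span_empty, Submodule.mem_bot] at hx
      exact hx
    have hH0 : ∀ h : H, h = 0 := by
      intro h
      have h1 : ⟪tp v₀ h, tp v₀ h⟫ = 0 := by rw [hEsub (tp v₀ h)]; simp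
      rw [htp_inner, inner_self_eq_norm_sq_to_K, hv₀] at h1
      norm_num at h1
      exact h1
    haveI : Subsingleton H := ⟨fun a b => by rw [hH0 a, hH0 b]⟩
    exact hfd inferInstance
  rcases Nat.eq_zero_or_pos n with hn | hn
  · -- trivial case n = 0
    subst hn
    haveI : Subsingleton H := finrank_zero_iff.mp hH
    haveI : IsEmpty (Fin (2 * 0)) := ⟨fun i => by have := i.isLt; omega⟩
    refine ⟨0, Fin.elim0, fun i => i.elim0, fun i => i.elim0,
      by rw [Finset.univ_eq_empty, Finset.sum_empty], Fin.elim0,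
      fun i => i.elim0, ?_, Fin.elim0, Fin.elim0, fun i => i.elim0, fun i => i.elim0,
      fun i => i.elim0, fun i => i.elim0, fun i => i.elim0, fun i => i.elim0,
      fun i => i.elim0, fun i => i.elim0, fun i => i.elim0, fun i => i.elim0,
      fun i => i.elim0, ?_⟩
    · apply Submodule.eq_top_iff'.mpr
      intro x
      rw [Subsingleton.elim x 0]
      exact zero_mem _
    · rw [Set.range_eq_empty u, Set.iUnion_of_empty]
  -- main case
  obtain ⟨v, w, hv, hwS, hvw⟩ :
      ∃ (v : Fin (2 * n) → V) (w : Fin (2 * n) → H),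
        (∀ j, ‖v j‖ = 1) ∧ (∀ j, w j ∈ Sgm) ∧ ∀ j, u j = tp (v j) (w j) := by
    choose v w h1 h2 h3 using hu
    exact ⟨v, w, h1, h2, h3⟩
  have hw : ∀ j, ‖w j‖ = 1 := fun j => hSgm_sphere _ (hwS j)
  have hvne : ∀ j, v j ≠ 0 := fun j => by
    intro h; have := hv j; rw [h, norm_zero] at this; norm_num at this
  have hwne : ∀ j, w j ≠ 0 := fun j => by
    intro h; have := hw j; rw [h, norm_zero] at this; norm_num at this
  have hv1 : ∀ j, ⟪v j, v j⟫ = 1 := fun j => by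
    rw [inner_self_eq_norm_sq_to_K, hv j]; norm_num
  have hw1 : ∀ j, ⟪w j, w j⟫ = 1 := fun j => by
    rw [inner_self_eq_norm_sq_to_K, hw j]; norm_num
  have horth : ∀ j k, ⟪v j, v k⟫ * ⟪w j, w k⟫ = if j = k then (1 : ℂ) else 0 := by
    intro j k
    rw [← htp_inner, ← hvw j, ← hvw k]
    exact orthonormal_iff_ite.mp u.orthonormal j k
  have hdich : ∀ j k, j ≠ k → ⟪v j, v k⟫ = 0 ∨ ⟪w j, w k⟫ = 0 := fun j k h =>
    mul_eq_zero.mp (by rw [horth j k, if_neg h])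
  -- parallelism relation
  set par : Fin (2 * n) → Fin (2 * n) → Prop := fun j k => ∃ c : ℂ, v k = c • v j with hpar_def
  have hpar_refl : ∀ j, par j j := fun j => ⟨1, (one_smul _ _).symm⟩
  have hpar_c_ne : ∀ {j k : Fin (2 * n)} {c : ℂ}, v k = c • v j → c ≠ 0 := by
    intro j k c hc h0
    exact hvne k (by rw [hc, h0, zero_smul])
  have hpar_c_norm : ∀ {j k : Fin (2 * n)} {c : ℂ}, v k = c • v j → ‖c‖ = 1 := by
    intro j k c hc
    have h1 := hv k
    rw [hc, norm_smul, hv j, mul_one] at h1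
    exact h1
  have hpar_inner : ∀ i j k, par i j → par i k → ⟪v j, v k⟫ ≠ 0 := by
    rintro i j k ⟨c, hc⟩ ⟨d, hd⟩
    rw [hc, hd, inner_smul_left, inner_smul_right, hv1 i, mul_one]
    exact mul_ne_zero (star_ne_zero.mpr (hpar_c_ne hc)) (hpar_c_ne hd)
  set rel : Fin (2 * n) → Fin (2 * n) → Prop :=
    fun j k => par j k ∨ ⟪v j, v k⟫ = 0 with hrel_def
  have hrel_refl : ∀ j, rel j j := fun j => Or.inl (hpar_refl j)
  have hrel_symm : ∀ j k, rel j k → rel k j := by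
    rintro j k (⟨c, hc⟩ | h)
    · exact Or.inl ⟨c⁻¹, by rw [hc, smul_smul, inv_mul_cancel₀ (hpar_c_ne hc), one_smul]⟩
    · exact Or.inr (inner_eq_zero_symm.mp h)
  have hrel_trans : ∀ j k l, rel j k → rel k l → rel j l := by
    rintro j k l (⟨c, hc⟩ | h1) (⟨d, hd⟩ | h2)
    · exact Or.inl ⟨d * c, by rw [hd, hc, smul_smul]⟩
    · refine Or.inr ?_
      have hj : v j = c⁻¹ • v k := by
        rw [hc, smul_smul, inv_mul_cancel₀ (hpar_c_ne hc), one_smul]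
      rw [hj, inner_smul_left, h2, mul_zero]
    · exact Or.inr (by rw [hd, inner_smul_right, h1, mul_zero])
    · exact Or.inl (aux_dim2_parallel hV (hvne k) (hvne j) (inner_eq_zero_symm.mp h1) h2)
  -- class leader function
  have hmem_self : ∀ j : Fin (2 * n), j ∈ univ.filter (fun k => rel j k) := fun j => by
    simp [hrel_refl j]
  set cls : Fin (2 * n) → Fin (2 * n) :=
    fun j => (univ.filter (fun k => rel j k)).min' ⟨j, hmem_self j⟩ with hcls_def
  have hcls_rel : ∀ j, rel j (cls j) := by
    intro j
    have h := Finset.min'_mem (univ.filter (fun k => rel j k)) ⟨j, hmem_self j⟩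
    simp only [Finset.mem_filter] at h
    exact h.2
  have hcls_eq : ∀ j k, rel j k → cls j = cls k := by
    intro j k h
    have hfe : univ.filter (fun l => rel j l) = univ.filter (fun l => rel k l) := by
      ext l
      simp only [Finset.mem_filter, Finset.mem_univ, true_and]
      exact ⟨fun h' => hrel_trans _ _ _ (hrel_symm _ _ h) h',
        fun h' => hrel_trans _ _ _ h h'⟩
    have haux : ∀ (s t : Finset (Fin (2 * n))) (hs : s.Nonempty) (ht : t.Nonempty),
        s = t → s.min' hs = t.min' ht := by rintro s t hs ht rfl; rfl
    exact haux _ _ _ _ hfe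
  have hrel_of_cls : ∀ j k, cls j = cls k → rel j k := by
    intro j k h
    have h1 : rel (cls j) k := by rw [h]; exact hrel_symm _ _ (hcls_rel k)
    exact hrel_trans _ _ _ (hcls_rel j) h1
  have hclscls : ∀ j, cls (cls j) = cls j := fun j => (hcls_eq _ _ (hcls_rel j)).symm
  -- the J-side and K-side
  set JJ : Finset (Fin (2 * n)) := univ.filter (fun j => par (cls j) j) with hJJ_def
  have hJJ_iff : ∀ j, j ∈ JJ ↔ par (cls j) j := fun j => by simp [hJJ_def]
  have hKKo : ∀ j, j ∉ JJ → ⟪v (cls j), v j⟫ = 0 := by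
    intro j hj
    rcases hrel_symm _ _ (hcls_rel j) with hp | ho
    · exact absurd ((hJJ_iff j).mpr hp) hj
    · exact ho
  have hpairJ : ∀ j k, j ∈ JJ → k ∈ JJ → j ≠ k → ⟪w j, w k⟫ = 0 := by
    intro j k hj hk hne
    rcases eq_or_ne (cls j) (cls k) with he | he
    · refine (hdich j k hne).resolve_left ?_
      have hk' : par (cls j) k := by rw [he]; exact (hJJ_iff k).mp hk
      exact hpar_inner (cls j) j k ((hJJ_iff j).mp hj) hk'
    · exact (hdich j k hne).resolve_left fun h0 => he (hcls_eq _ _ (Or.inr h0))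
  have hpairK : ∀ j k, j ∉ JJ → k ∉ JJ → j ≠ k → ⟪w j, w k⟫ = 0 := by
    intro j k hj hk hne
    rcases eq_or_ne (cls j) (cls k) with he | he
    · have h1 := hKKo j hj
      have h2 : ⟪v (cls j), v k⟫ = 0 := by rw [he]; exact hKKo k hk
      obtain ⟨c, hc⟩ := aux_dim2_parallel hV (hvne (cls j)) (hvne j) h1 h2
      refine (hdich j k hne).resolve_left ?_
      rw [hc, inner_smul_right, hv1 j, mul_one]
      exact hpar_c_ne hc
    · exact (hdich j k hne).resolve_left fun h0 => he (hcls_eq _ _ (Or.inr h0))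
  have hcross : ∀ j k, cls j ≠ cls k → ⟪w j, w k⟫ = 0 := by
    intro j k h
    have hne : j ≠ k := fun e => h (by rw [e])
    exact (hdich j k hne).resolve_left fun h0 => h (hcls_eq _ _ (Or.inr h0))
  -- orthonormal subfamilies
  have honsub : ∀ s : Finset (Fin (2 * n)),
      (∀ j ∈ s, ∀ k ∈ s, j ≠ k → ⟪w j, w k⟫ = 0) →
      Orthonormal ℂ (fun j : s => w (j : Fin (2 * n))) := by
    intro s hs
    rw [orthonormal_iff_ite]
    rintro ⟨j, hj⟩ ⟨k, hk⟩
    by_cases h : j = k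
    · subst h
      simp [hw1 j, hw j]
    · rw [if_neg (by simp [Subtype.mk.injEq, h])]
      exact hs j hj k hk h
  have honJJ : Orthonormal ℂ (fun j : JJ => w (j : Fin (2 * n))) :=
    honsub JJ fun j hj k hk => hpairJ j k hj hk
  have honKK : Orthonormal ℂ (fun j : (JJᶜ : Finset _) => w (j : Fin (2 * n))) :=
    honsub JJᶜ fun j hj k hk =>
      hpairK j k (Finset.mem_compl.mp hj) (Finset.mem_compl.mp hk)
  have hcardJJ : JJ.card ≤ n := by
    have h := honJJ.linearIndependent.fintype_card_le_finrank
    rwa [Fintype.card_coe, hH] at h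
  have hcardKK : (JJᶜ).card ≤ n := by
    have h := honKK.linearIndependent.fintype_card_le_finrank
    rwa [Fintype.card_coe, hH] at h
  have hsum2n : JJ.card + (JJᶜ).card = 2 * n := by
    simpa using Finset.card_add_card_compl JJ
  have hJJn : JJ.card = n := by omega
  have hKKn : (JJᶜ).card = n := by omega
  haveI : Nonempty JJ := by
    obtain ⟨x, hx⟩ := Finset.card_pos.mp (show 0 < JJ.card by omega)
    exact ⟨⟨x, hx⟩⟩
  haveI : Nonempty (JJᶜ : Finset _) := by
    obtain ⟨x, hx⟩ := Finset.card_pos.mp (show 0 < (JJᶜ).card by omega)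
    exact ⟨⟨x, hx⟩⟩
  have hspanJJ : Submodule.span ℂ (Set.range fun j : JJ => w (j : Fin (2 * n))) = ⊤ :=
    honJJ.linearIndependent.span_eq_top_of_card_eq_finrank
      (by rw [Fintype.card_coe, hJJn, hH])
  have hspanKK : Submodule.span ℂ (Set.range fun j : (JJᶜ : Finset _) => w (j : Fin (2 * n))) = ⊤ :=
    honKK.linearIndependent.span_eq_top_of_card_eq_finrank
      (by rw [Fintype.card_coe, hKKn, hH])
  set basJ : OrthonormalBasis JJ ℂ H := OrthonormalBasis.mk honJJ hspanJJ.ge with hbasJ_def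
  set basK : OrthonormalBasis (JJᶜ : Finset _) ℂ H :=
    OrthonormalBasis.mk honKK hspanKK.ge with hbasK_def
  -- fibers
  set J : Fin (2 * n) → Finset (Fin (2 * n)) :=
    fun i => univ.filter (fun j => cls j = i ∧ par i j) with hJ_def
  set K : Fin (2 * n) → Finset (Fin (2 * n)) :=
    fun i => univ.filter (fun j => cls j = i ∧ ¬ par i j) with hK_def
  have hJ_iff : ∀ i j, j ∈ J i ↔ cls j = i ∧ par i j := fun i j => by simp [hJ_def]
  have hK_iff : ∀ i j, j ∈ K i ↔ cls j = i ∧ ¬ par i j := fun i j => by simp [hK_def]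
  have hJsub : ∀ i j, j ∈ J i → j ∈ JJ := by
    intro i j hj
    obtain ⟨h1, h2⟩ := (hJ_iff i j).mp hj
    exact (hJJ_iff j).mpr (h1 ▸ h2)
  have hKsub : ∀ i j, j ∈ K i → j ∉ JJ := by
    intro i j hj hjJ
    obtain ⟨h1, h2⟩ := (hK_iff i j).mp hj
    exact h2 (h1 ▸ (hJJ_iff j).mp hjJ)
  have hmemJ : ∀ j, j ∈ JJ → j ∈ J (cls j) := by
    intro j hj
    exact (hJ_iff _ j).mpr ⟨rfl, (hJJ_iff j).mp hj⟩
  have hmemK : ∀ j, j ∉ JJ → j ∈ K (cls j) := by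
    intro j hj
    exact (hK_iff _ j).mpr ⟨rfl, fun hp => hj ((hJJ_iff j).mpr hp)⟩
  set Ui : Fin (2 * n) → Submodule ℂ H :=
    fun i => Submodule.span ℂ (Set.range fun j : (J i) => w (j : Fin (2 * n))) with hUi_def
  set Wi : Fin (2 * n) → Submodule ℂ H :=
    fun i => Submodule.span ℂ (Set.range fun j : (K i) => w (j : Fin (2 * n))) with hWi_def
  have hUi_mem : ∀ i j, j ∈ J i → w j ∈ Ui i := fun i j hj =>
    Submodule.subset_span ⟨⟨j, hj⟩, rfl⟩
  have hWi_mem : ∀ i j, j ∈ K i → w j ∈ Wi i := fun i j hj =>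
    Submodule.subset_span ⟨⟨j, hj⟩, rfl⟩
  have hKtoU : ∀ k, k ∉ JJ → w k ∈ Ui (cls k) := by
    intro k hk
    have hrep := basJ.sum_repr' (w k)
    rw [← hrep]
    refine Submodule.sum_mem _ ?_
    rintro ⟨j, hj⟩ -
    simp only [hbasJ_def, OrthonormalBasis.coe_mk]
    rcases eq_or_ne (cls j) (cls k) with he | he
    · have hjm : j ∈ J (cls k) := he ▸ hmemJ j hj
      exact Submodule.smul_mem _ _ (hUi_mem _ _ hjm)
    · rw [hcross j k he, zero_smul]
      exact zero_mem _
  have hJtoW : ∀ j, j ∈ JJ → w j ∈ Wi (cls j) := by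
    intro j hj
    have hrep := basK.sum_repr' (w j)
    rw [← hrep]
    refine Submodule.sum_mem _ ?_
    rintro ⟨k, hk⟩ -
    simp only [hbasK_def, OrthonormalBasis.coe_mk]
    have hk' : k ∉ JJ := Finset.mem_compl.mp hk
    rcases eq_or_ne (cls k) (cls j) with he | he
    · have hkm : k ∈ K (cls j) := he ▸ hmemK k hk'
      exact Submodule.smul_mem _ _ (hWi_mem _ _ hkm)
    · rw [hcross k j he, zero_smul]
      exact zero_mem _
  have hUW : ∀ i, Ui i = Wi i := by
    intro i
    apply le_antisymm
    · rw [hUi_def]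
      apply Submodule.span_le.mpr
      rintro x ⟨⟨j, hj⟩, rfl⟩
      have h1 : cls j = i := ((hJ_iff i j).mp hj).1
      exact h1 ▸ hJtoW j (hJsub i j hj)
    · rw [hWi_def]
      apply Submodule.span_le.mpr
      rintro x ⟨⟨k, hk⟩, rfl⟩
      have h1 : cls k = i := ((hK_iff i k).mp hk).1
      exact h1 ▸ hKtoU k (hKsub i k hk)
  have honJi : ∀ i, Orthonormal ℂ (fun j : (J i) => w (j : Fin (2 * n))) := fun i =>
    honsub (J i) fun j hj k hk => hpairJ j k (hJsub i j hj) (hJsub i k hk)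
  have honKi : ∀ i, Orthonormal ℂ (fun j : (K i) => w (j : Fin (2 * n))) := fun i =>
    honsub (K i) fun j hj k hk => hpairK j k (hKsub i j hj) (hKsub i k hk)
  have hfrJ : ∀ i, finrank ℂ (Ui i) = (J i).card := fun i => by
    rw [hUi_def]
    rw [finrank_span_eq_card (honJi i).linearIndependent, Fintype.card_coe]
  have hfrW : ∀ i, finrank ℂ (Wi i) = (K i).card := fun i => by
    rw [hWi_def]
    rw [finrank_span_eq_card (honKi i).linearIndependent, Fintype.card_coe]
  have hJKcard : ∀ i, (J i).card = (K i).card := fun i => by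
    rw [← hfrJ, hUW, hfrW]
  -- class index set
  set I : Finset (Fin (2 * n)) := univ.image cls with hI_def
  have hclsI : ∀ j, cls j ∈ I := fun j => Finset.mem_image_of_mem cls (Finset.mem_univ j)
  have hfiber : ∀ i, JJ.filter (fun j => cls j = i) = J i := by
    intro i
    ext j
    simp only [Finset.mem_filter, hJ_iff, hJJ_iff, Finset.mem_univ, true_and]
    constructor
    · rintro ⟨hp, rfl⟩; exact ⟨rfl, hp⟩
    · rintro ⟨rfl, hp⟩; exact ⟨hp, rfl⟩
  have hsumJ : ∑ i ∈ I, (J i).card = n :=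
    calc ∑ i ∈ I, (J i).card
        = ∑ i ∈ I, (JJ.filter (fun j => cls j = i)).card :=
          Finset.sum_congr rfl fun i _ => by rw [hfiber]
      _ = JJ.card := (Finset.card_eq_sum_card_fiberwise (fun j _ => hclsI j)).symm
      _ = n := hJJn
  have hIJne : ∀ i ∈ I, i ∈ J i := by
    intro i hi
    obtain ⟨j, -, rfl⟩ := Finset.mem_image.mp hi
    exact (hJ_iff _ _).mpr ⟨hclscls j, hpar_refl (cls j)⟩
  have hUorth : ∀ i i', i ≠ i' → ∀ x ∈ Ui i, ∀ y ∈ Ui i', ⟪x, y⟫ = 0 := by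
    intro i i' hne
    have hOO : Ui i ⟂ Ui i' := by
      rw [hUi_def]
      apply Submodule.isOrtho_span.mpr
      rintro x ⟨⟨j, hj⟩, rfl⟩ y ⟨⟨k, hk⟩, rfl⟩
      have h1 : cls j = i := ((hJ_iff i j).mp hj).1
      have h2 : cls k = i' := ((hJ_iff i' k).mp hk).1
      exact hcross j k (by rw [h1, h2]; exact hne)
    exact fun x hx y hy => hOO.inner_eq hx hy
  -- orthogonal unit vectors in V
  obtain ⟨hat, hhat1, hhat2⟩ :
      ∃ hat : Fin (2 * n) → V, (∀ i, ‖hat i‖ = 1) ∧ ∀ i, ⟪v i, hat i⟫ = 0 := by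
    choose hat h1 h2 using fun i => aux_unit_orth hV (v i)
    exact ⟨hat, h1, h2⟩
  have hhatne : ∀ i, hat i ≠ 0 := fun i => by
    intro h; have := hhat1 i; rw [h, norm_zero] at this; norm_num at this
  -- scalars relating each vector to its class representative
  have hpc' : ∀ j, ∃ c : ℂ, j ∈ JJ → v j = c • v (cls j) := by
    intro j
    by_cases hj : j ∈ JJ
    · obtain ⟨c, hc⟩ := (hJJ_iff j).mp hj
      exact ⟨c, fun _ => hc⟩
    · exact ⟨1, fun h => absurd h hj⟩
  choose pc hpc using hpc'
  have hqc' : ∀ j, ∃ c : ℂ, j ∉ JJ → v j = c • hat (cls j) := by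
    intro j
    by_cases hj : j ∈ JJ
    · exact ⟨1, fun h => absurd hj h⟩
    · obtain ⟨c, hc⟩ := aux_dim2_parallel hV (hvne (cls j)) (hhatne (cls j))
        (hhat2 (cls j)) (hKKo j hj)
      exact ⟨c, fun _ => hc⟩
  choose qc hqc using hqc'
  have hpc1 : ∀ j, j ∈ JJ → ‖pc j‖ = 1 := by
    intro j hj
    have h1 := hv j
    rw [hpc j hj, norm_smul, hv (cls j), mul_one] at h1
    exact h1
  have hpcne : ∀ j, j ∈ JJ → pc j ≠ 0 := fun j hj => by
    intro h0; have := hpc1 j hj; rw [h0, norm_zero] at this; norm_num at this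
  have hqc1 : ∀ j, j ∉ JJ → ‖qc j‖ = 1 := by
    intro j hj
    have h1 := hv j
    rw [hqc j hj, norm_smul, hhat1 (cls j), mul_one] at h1
    exact h1
  have hqcne : ∀ j, j ∉ JJ → qc j ≠ 0 := fun j hj => by
    intro h0; have := hqc1 j hj; rw [h0, norm_zero] at this; norm_num at this
  -- final indexing, sorted so that the sizes are antitone
  set r : ℕ := I.card with hr_def
  set e : Fin r ≃o I := I.orderIsoOfFin rfl with he_def
  set sz : Fin r → ℕ := fun t => (J ((e t : Fin (2 * n)))).card with hsz_def
  set σ : Equiv.Perm (Fin r) := Tuple.sort sz with hσ_def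
  set idx : Fin r → Fin (2 * n) := fun t => (e (σ t.rev) : Fin (2 * n)) with hidx_def
  have hidx_mem : ∀ t, idx t ∈ I := fun t => (e (σ t.rev)).2
  have hidx_inj : Function.Injective idx := by
    intro t t' h
    have h1 : e (σ t.rev) = e (σ t'.rev) := Subtype.ext h
    have h2 := σ.injective (e.injective h1)
    exact Fin.rev_injective h2
  have hidx_surj : ∀ i ∈ I, ∃ t, idx t = i := by
    intro i hi
    refine ⟨(σ.symm (e.symm ⟨i, hi⟩)).rev, ?_⟩
    rw [hidx_def]
    simp [Fin.rev_rev]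
  set N : Fin r → ℕ := fun t => (J (idx t)).card with hN_def
  set elJ : (t : Fin r) → Fin (N t) → Fin (2 * n) :=
    fun t m => ((J (idx t)).orderIsoOfFin rfl m : Fin (2 * n)) with helJ_def
  have helJ_mem : ∀ t m, elJ t m ∈ J (idx t) := fun t m =>
    ((J (idx t)).orderIsoOfFin rfl m).2
  have helJ_inj : ∀ t {m m'}, elJ t m = elJ t m' → m = m' := by
    intro t m m' h
    exact ((J (idx t)).orderIsoOfFin rfl).injective (Subtype.ext h)
  have helJ_surj : ∀ t j, j ∈ J (idx t) → ∃ m, elJ t m = j := by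
    intro t j hj
    refine ⟨((J (idx t)).orderIsoOfFin rfl).symm ⟨j, hj⟩, ?_⟩
    rw [helJ_def]
    simp
  set elK : (t : Fin r) → Fin (N t) → Fin (2 * n) :=
    fun t m => ((K (idx t)).orderIsoOfFin (hJKcard (idx t)).symm m : Fin (2 * n)) with helK_def
  have helK_mem : ∀ t m, elK t m ∈ K (idx t) := fun t m =>
    ((K (idx t)).orderIsoOfFin (hJKcard (idx t)).symm m).2
  have helK_inj : ∀ t {m m'}, elK t m = elK t m' → m = m' := by
    intro t m m' h
    exact ((K (idx t)).orderIsoOfFin (hJKcard (idx t)).symm).injective (Subtype.ext h)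
  have helK_surj : ∀ t j, j ∈ K (idx t) → ∃ m, elK t m = j := by
    intro t j hj
    refine ⟨((K (idx t)).orderIsoOfFin (hJKcard (idx t)).symm).symm ⟨j, hj⟩, ?_⟩
    rw [helK_def]
    simp
  have hbu : ∀ t m, tp (v (idx t)) (pc (elJ t m) • w (elJ t m)) = u (elJ t m) := by
    intro t m
    have hj := helJ_mem t m
    have hcls : cls (elJ t m) = idx t := ((hJ_iff _ _).mp hj).1
    have hJJm : elJ t m ∈ JJ := hJsub _ _ hj
    rw [map_smul, ← hcls, ← LinearMap.smul_apply, ← map_smul, ← hpc _ hJJm, ← hvw]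
  have hcu : ∀ t m, tp (hat (idx t)) (qc (elK t m) • w (elK t m)) = u (elK t m) := by
    intro t m
    have hk := helK_mem t m
    have hcls : cls (elK t m) = idx t := ((hK_iff _ _).mp hk).1
    have hJJm : elK t m ∉ JJ := hKsub _ _ hk
    rw [map_smul, ← hcls, ← LinearMap.smul_apply, ← map_smul, ← hqc _ hJJm, ← hvw]
  refine ⟨r, N, ?_, ?_, ?_, fun t => Ui (idx t), ?_, ?_, fun t => v (idx t),
    fun t => hat (idx t), fun t => hv _, fun t => hhat1 _, fun t => hhat2 _,
    fun t m => pc (elJ t m) • w (elJ t m), fun t m => qc (elK t m) • w (elK t m),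
    ?_, ?_, ?_, ?_, ?_, ?_, ?_⟩
  · -- antitone
    intro t t' h
    exact Tuple.monotone_sort sz (Fin.rev_le_rev.mpr h)
  · -- positivity
    intro t
    exact Finset.card_pos.mpr ⟨idx t, hIJne _ (hidx_mem t)⟩
  · -- total
    rw [← hsumJ]
    exact Finset.sum_bij (fun t _ => idx t) (fun t _ => hidx_mem t)
      (fun t _ t' _ h => hidx_inj h)
      (fun i hi => by
        obtain ⟨t, ht⟩ := hidx_surj i hi
        exact ⟨t, Finset.mem_univ t, ht⟩)
      (fun t _ => rfl)
  · -- orthogonality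
    intro t t' hne
    exact hUorth _ _ fun h => hne (hidx_inj h)
  · -- the pieces fill H
    apply eq_top_iff.mpr
    rw [← hspanJJ]
    apply Submodule.span_le.mpr
    rintro x ⟨⟨j, hj⟩, rfl⟩
    obtain ⟨t, ht⟩ := hidx_surj (cls j) (hclsI j)
    have hx : w j ∈ Ui (idx t) := by rw [ht]; exact hUi_mem _ _ (hmemJ j hj)
    exact Submodule.mem_iSup_of_mem t hx
  · -- b in U
    intro t m
    exact Submodule.smul_mem _ _ (hUi_mem _ _ (helJ_mem t m))
  · -- b orthonormal
    intro t
    rw [orthonormal_iff_ite]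
    intro m m'
    by_cases h : m = m'
    · subst h
      have hJJm := hJsub _ _ (helJ_mem t m)
      rw [if_pos rfl, inner_smul_left, inner_smul_right, hw1, mul_one,
        RCLike.conj_mul, hpc1 _ hJJm]
      norm_num
    · rw [if_neg h, inner_smul_left, inner_smul_right,
        hpairJ _ _ (hJsub _ _ (helJ_mem t m)) (hJsub _ _ (helJ_mem t m'))
          (fun he => h (helJ_inj t he))]
      ring
  · -- b spans U
    intro t
    apply le_antisymm
    · apply Submodule.span_le.mpr
      rintro x ⟨m, rfl⟩
      exact Submodule.smul_mem _ _ (hUi_mem _ _ (helJ_mem t m))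
    · rw [hUi_def]
      apply Submodule.span_le.mpr
      rintro x ⟨⟨j, hj⟩, rfl⟩
      obtain ⟨m, hm⟩ := helJ_surj t j hj
      have hJJm : j ∈ JJ := hJsub _ _ hj
      have hx : w j = (pc j)⁻¹ • (pc (elJ t m) • w (elJ t m)) := by
        rw [hm, smul_smul, inv_mul_cancel₀ (hpcne j hJJm), one_smul]
      show w j ∈ _
      rw [hx]
      exact Submodule.smul_mem _ _ (Submodule.subset_span ⟨m, rfl⟩)
  · -- c in U
    intro t m
    have hk := helK_mem t m
    have hcls : cls (elK t m) = idx t := ((hK_iff _ _).mp hk).1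
    have hx : w (elK t m) ∈ Ui (idx t) := by
      rw [← hcls]; exact hKtoU _ (hKsub _ _ hk)
    exact Submodule.smul_mem _ _ hx
  · -- c orthonormal
    intro t
    rw [orthonormal_iff_ite]
    intro m m'
    by_cases h : m = m'
    · subst h
      have hJJm := hKsub _ _ (helK_mem t m)
      rw [if_pos rfl, inner_smul_left, inner_smul_right, hw1, mul_one,
        RCLike.conj_mul, hqc1 _ hJJm]
      norm_num
    · rw [if_neg h, inner_smul_left, inner_smul_right,
        hpairK _ _ (hKsub _ _ (helK_mem t m)) (hKsub _ _ (helK_mem t m'))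
          (fun he => h (helK_inj t he))]
      ring
  · -- c spans U
    intro t
    have hWspan : Submodule.span ℂ (Set.range fun m => qc (elK t m) • w (elK t m))
        = Wi (idx t) := by
      apply le_antisymm
      · apply Submodule.span_le.mpr
        rintro x ⟨m, rfl⟩
        exact Submodule.smul_mem _ _ (hWi_mem _ _ (helK_mem t m))
      · rw [hWi_def]
        apply Submodule.span_le.mpr
        rintro x ⟨⟨j, hj⟩, rfl⟩
        obtain ⟨m, hm⟩ := helK_surj t j hj
        have hJJm : j ∉ JJ := hKsub _ _ hj
        have hx : w j = (qc j)⁻¹ • (qc (elK t m) • w (elK t m)) := by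
          rw [hm, smul_smul, inv_mul_cancel₀ (hqcne j hJJm), one_smul]
        show w j ∈ _
        rw [hx]
        exact Submodule.smul_mem _ _ (Submodule.subset_span ⟨m, rfl⟩)
    exact hWspan.trans (hUW (idx t)).symm
  · -- the basis splits as claimed
    ext x
    simp only [Set.mem_range, Set.mem_iUnion, Set.mem_union]
    constructor
    · rintro ⟨j, rfl⟩
      obtain ⟨t, ht⟩ := hidx_surj (cls j) (hclsI j)
      by_cases hj : j ∈ JJ
      · have hjJ : j ∈ J (idx t) := by rw [ht]; exact hmemJ j hj
        obtain ⟨m, hm⟩ := helJ_surj t j hjJ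
        exact ⟨t, Or.inl ⟨m, (hbu t m).trans (congrArg u hm)⟩⟩
      · have hjK : j ∈ K (idx t) := by rw [ht]; exact hmemK j hj
        obtain ⟨m, hm⟩ := helK_surj t j hjK
        exact ⟨t, Or.inr ⟨m, (hcu t m).trans (congrArg u hm)⟩⟩
    · rintro ⟨t, (⟨m, rfl⟩ | ⟨m, rfl⟩)⟩
      · exact ⟨elJ t m, (hbu t m).symm⟩
      · exact ⟨elK t m, (hcu t m).symm⟩
end

section
/- Let H₁ and H₂ be finite-dimensional complex Hilbert spaces, each of dimension greater than 1, and let w ∈ ℝ, w > 0. Then there exists a function f : Σ(H₁,H₂) → [0,∞) such that Σ_{i,j} f(u_i ⊗ v_j) = w for all choices of orthonormal bases {u_i} of H₁ and {v_j} of H₂, but there is no linear endomorphism T of H₁ ⊗ H₂ with f(u ⊗ v) = ⟨u ⊗ v | T | u ⊗ v⟩ for all u ∈ S(H₁) and v ∈ S(H₂). -/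
open scoped ComplexInnerProductSpace

theorem aux_parseval {H : Type*} [NormedAddCommGroup H] [InnerProductSpace ℂ H]
    [FiniteDimensional ℂ H]
    {ι : Type} [Fintype ι] (b : OrthonormalBasis ι ℂ H) (x : H) :
    ∑ j, ‖⟪b j, x⟫‖^2 = ‖x‖^2 := by
  have h := b.sum_inner_mul_inner x x
  have h2 : ∀ j, ⟪x, b j⟫ * ⟪b j, x⟫ = ((‖⟪b j, x⟫‖^2 : ℝ) : ℂ) := by
    intro j
    rw [← inner_conj_symm (b j) x, Complex.mul_conj]
    norm_cast
    simp only [Complex.normSq_eq_norm_sq, Complex.norm_conj]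
  rw [Finset.sum_congr rfl fun j _ => h2 j, ← Complex.ofReal_sum,
    inner_self_eq_norm_sq_to_K, ← RCLike.ofReal_pow] at h
  exact Complex.ofReal_injective h

theorem aux_inner_self {H : Type*} [NormedAddCommGroup H] [InnerProductSpace ℂ H]
    (x : H) (hx : ‖x‖ = 1) : ⟪x, x⟫ = (1 : ℂ) := by
  rw [inner_self_eq_norm_sq_to_K, hx]
  norm_num

/-- Let `H₁` and `H₂` be finite-dimensional complex Hilbert spaces of dimension
greater than `1`, with Hilbert tensor product `E = H₁ ⊗ H₂` (axiomatized by a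
bilinear map `tp` with `⟪u ⊗ v, u' ⊗ v'⟫ = ⟪u, u'⟫⟪v, v'⟫` whose range spans `E`),
and let `w > 0` be real.  Then there is a function `f` on the product unit vectors,
taking values in `[0, ∞)`, with `∑_{i,j} f (uᵢ ⊗ vⱼ) = w` for all orthonormal bases
`(uᵢ)` of `H₁` and `(vⱼ)` of `H₂`, but such that no linear endomorphism `T` of
`H₁ ⊗ H₂` satisfies `f (u ⊗ v) = ⟨u ⊗ v|T|u ⊗ v⟩` for all unit `u, v`. -/
theorem unentangled_gleason_stmt6
    {H₁ H₂ E : Type*}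
    [NormedAddCommGroup H₁] [InnerProductSpace ℂ H₁] [FiniteDimensional ℂ H₁]
    [NormedAddCommGroup H₂] [InnerProductSpace ℂ H₂] [FiniteDimensional ℂ H₂]
    [NormedAddCommGroup E] [InnerProductSpace ℂ E]
    (hH₁ : 1 < Module.finrank ℂ H₁) (hH₂ : 1 < Module.finrank ℂ H₂)
    (tp : H₁ →ₗ[ℂ] H₂ →ₗ[ℂ] E)
    (htp_inner : ∀ (u u' : H₁) (v v' : H₂), ⟪tp u v, tp u' v'⟫ = ⟪u, u'⟫ * ⟪v, v'⟫)
    (htp_span : Submodule.span ℂ {x : E | ∃ u v, x = tp u v} = ⊤)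
    (w : ℝ) (hw : 0 < w) :
    ∃ f : E → ℝ,
      (∀ (u : H₁) (v : H₂), ‖u‖ = 1 → ‖v‖ = 1 → 0 ≤ f (tp u v)) ∧
      (∀ (ι κ : Type) [Fintype ι] [Fintype κ]
        (bu : OrthonormalBasis ι ℂ H₁) (bv : OrthonormalBasis κ ℂ H₂),
        ∑ i, ∑ j, f (tp (bu i) (bv j)) = w) ∧
      ¬ ∃ T : E →ₗ[ℂ] E, ∀ (u : H₁) (v : H₂), ‖u‖ = 1 → ‖v‖ = 1 →
          (f (tp u v) : ℂ) = ⟪tp u v, T (tp u v)⟫ := by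
  classical
  obtain ⟨e₁, e₂, he₁, he₂, he₁₂⟩ :
      ∃ e₁ e₂ : H₁, ‖e₁‖ = 1 ∧ ‖e₂‖ = 1 ∧ ⟪e₁, e₂⟫ = (0 : ℂ) := by
    set b := stdOrthonormalBasis ℂ H₁
    exact ⟨b ⟨0, by omega⟩, b ⟨1, hH₁⟩, b.orthonormal.1 _, b.orthonormal.1 _,
      b.orthonormal.2 (by simp [Fin.ext_iff])⟩
  obtain ⟨f₁, f₂, hf₁, hf₂, hf₁₂⟩ :
      ∃ f₁ f₂ : H₂, ‖f₁‖ = 1 ∧ ‖f₂‖ = 1 ∧ ⟪f₁, f₂⟫ = (0 : ℂ) := by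
    set b := stdOrthonormalBasis ℂ H₂
    exact ⟨b ⟨0, by omega⟩, b ⟨1, hH₂⟩, b.orthonormal.1 _, b.orthonormal.1 _,
      b.orthonormal.2 (by simp [Fin.ext_iff])⟩
  have he₂₁ : ⟪e₂, e₁⟫ = (0 : ℂ) := inner_eq_zero_symm.mp he₁₂
  have hf₂₁ : ⟪f₂, f₁⟫ = (0 : ℂ) := inner_eq_zero_symm.mp hf₁₂
  set g : H₁ → H₂ := fun u => if ⟪e₂, u⟫ = (0 : ℂ) then f₁ else f₂ with hg
  set F : H₁ → H₂ → ℝ := fun u v => w * ‖⟪e₁, u⟫‖^2 * ‖⟪g u, v⟫‖^2 with hF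
  set f : E → ℝ := fun x =>
    if ∀ z : H₂, ⟪tp e₂ z, x⟫ = (0 : ℂ) then w * ‖⟪tp e₁ f₁, x⟫‖^2
    else w * ‖⟪tp e₁ f₂, x⟫‖^2 with hf
  have hgnorm : ∀ u : H₁, ‖g u‖ = 1 := by
    intro u
    rw [hg]
    dsimp only
    split_ifs <;> assumption
  have hfF : ∀ (u : H₁) (v : H₂), ‖v‖ = 1 → f (tp u v) = F u v := by
    intro u v hv
    rw [hf, hF, hg]
    dsimp only
    by_cases h : ⟪e₂, u⟫ = (0 : ℂ)
    · rw [if_pos, if_pos h, htp_inner, norm_mul, mul_pow, mul_assoc]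
      intro z
      rw [htp_inner, h, zero_mul]
    · rw [if_neg, if_neg h, htp_inner, norm_mul, mul_pow, mul_assoc]
      intro hall
      apply h
      have := hall v
      rw [htp_inner, aux_inner_self v hv, mul_one] at this
      exact this
  refine ⟨f, ?_, ?_, ?_⟩
  · intro u v hu hv
    rw [hfF u v hv, hF]
    positivity
  · intro ι κ _ _ bu bv
    have step : ∀ i, ∑ j, f (tp (bu i) (bv j)) = w * ‖⟪e₁, bu i⟫‖^2 := by
      intro i
      have h1 : ∀ j, f (tp (bu i) (bv j)) =
          (w * ‖⟪e₁, bu i⟫‖^2) * ‖⟪bv j, g (bu i)⟫‖^2 := by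
        intro j
        rw [hfF _ _ (bv.orthonormal.1 j), hF]
        dsimp only
        rw [norm_inner_symm (g (bu i)) (bv j), mul_assoc]
      rw [Finset.sum_congr rfl fun j _ => h1 j, ← Finset.mul_sum,
        aux_parseval bv (g (bu i)), hgnorm, one_pow, mul_one]
    rw [Finset.sum_congr rfl fun i _ => step i]
    have h2 : ∀ i, w * ‖⟪e₁, bu i⟫‖^2 = w * ‖⟪bu i, e₁⟫‖^2 := by
      intro i; rw [norm_inner_symm]
    rw [Finset.sum_congr rfl fun i _ => h2 i, ← Finset.mul_sum,
      aux_parseval bu e₁, he₁, one_pow, mul_one]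
  · rintro ⟨T, hT⟩
    have hTF : ∀ (u : H₁) (v : H₂), ‖u‖ = 1 → ‖v‖ = 1 →
        ⟪tp u v, T (tp u v)⟫ = ((F u v : ℝ) : ℂ) := by
      intro u v hu hv
      rw [← hT u v hu hv, hfF u v hv]
    -- unit vectors up, um
    set c : ℂ := (((Real.sqrt 2)⁻¹ : ℝ) : ℂ) with hc
    have hsqrt2 : Real.sqrt 2 ≠ 0 := by positivity
    have hcnorm : ‖c‖ = (Real.sqrt 2)⁻¹ := by
      rw [hc, Complex.norm_real, Real.norm_eq_abs, abs_of_nonneg (by positivity)]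
    have hcne : c ≠ 0 := by
      rw [hc]
      simpa using hsqrt2
    set up : H₁ := c • (e₁ + e₂) with hup
    set um : H₁ := c • (e₁ - e₂) with hum
    have hre : Complex.re ⟪e₁, e₂⟫ = 0 := by rw [he₁₂]; simp
    have hnormp : ‖up‖ = 1 := by
      have h2 : ‖e₁ + e₂‖^2 = 2 := by
        rw [@norm_add_sq ℂ _ _ _ _ e₁ e₂, he₁, he₂]
        simp [hre]
        norm_num
      have : ‖up‖^2 = 1 := by
        rw [hup, norm_smul, mul_pow, hcnorm, h2, inv_pow, Real.sq_sqrt (by norm_num)]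
        field_simp
      have hnn : (0:ℝ) ≤ ‖up‖ := norm_nonneg _
      nlinarith
    have hnormm : ‖um‖ = 1 := by
      have h2 : ‖e₁ - e₂‖^2 = 2 := by
        rw [@norm_sub_sq ℂ _ _ _ _ e₁ e₂, he₁, he₂]
        simp [hre]
        norm_num
      have : ‖um‖^2 = 1 := by
        rw [hum, norm_smul, mul_pow, hcnorm, h2, inv_pow, Real.sq_sqrt (by norm_num)]
        field_simp
      have hnn : (0:ℝ) ≤ ‖um‖ := norm_nonneg _
      nlinarith
    have he₂e₂ : ⟪e₂, e₂⟫ = (1:ℂ) := aux_inner_self e₂ he₂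
    have he₁e₁ : ⟪e₁, e₁⟫ = (1:ℂ) := aux_inner_self e₁ he₁
    have hf₁f₁ : ⟪f₁, f₁⟫ = (1:ℂ) := aux_inner_self f₁ hf₁
    -- values of F
    have hge₁ : g e₁ = f₁ := by rw [hg]; simp [he₂₁]
    have hge₂ : g e₂ = f₂ := by
      rw [hg]; simp only [he₂e₂]; norm_num
    have hgup : g up = f₂ := by
      rw [hg]
      have : ⟪e₂, up⟫ = c := by
        rw [hup, inner_smul_right, inner_add_right, he₂₁, he₂e₂]; ring
      simp only [this]
      rw [if_neg hcne]
    have hgum : g um = f₂ := by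
      rw [hg]
      have : ⟪e₂, um⟫ = -c := by
        rw [hum, inner_smul_right, inner_sub_right, he₂₁, he₂e₂]; ring
      simp only [this]
      rw [if_neg (by simpa using hcne)]
    have hF11 : F e₁ f₁ = w := by
      rw [hF]; dsimp only; rw [hge₁, he₁e₁, hf₁f₁]; simp
    have hF21 : F e₂ f₁ = 0 := by
      rw [hF]; dsimp only; rw [he₁₂]; simp
    have hFp : F up f₁ = 0 := by
      rw [hF]; dsimp only; rw [hgup, hf₂₁]; simp
    have hFm : F um f₁ = 0 := by
      rw [hF]; dsimp only; rw [hgum, hf₂₁]; simp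
    -- the four quadratic values
    set x₁ : E := tp e₁ f₁ with hx₁
    set x₂ : E := tp e₂ f₁ with hx₂
    have hq1 : ⟪x₁, T x₁⟫ = (w : ℂ) := by
      rw [hx₁, hTF e₁ f₁ he₁ hf₁, hF11]
    have hq2 : ⟪x₂, T x₂⟫ = 0 := by
      rw [hx₂, hTF e₂ f₁ he₂ hf₁, hF21]
      simp
    have hplus : x₁ + x₂ = c⁻¹ • tp up f₁ := by
      rw [hx₁, hx₂, hup, map_smul, LinearMap.smul_apply, smul_smul,
        inv_mul_cancel₀ hcne, one_smul, map_add, LinearMap.add_apply]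
    have hminus : x₁ - x₂ = c⁻¹ • tp um f₁ := by
      rw [hx₁, hx₂, hum, map_smul, LinearMap.smul_apply, smul_smul,
        inv_mul_cancel₀ hcne, one_smul, map_sub, LinearMap.sub_apply]
    have smul_q : ∀ (a : ℂ) (y : E), ⟪a • y, T (a • y)⟫ =
        (starRingEnd ℂ) a * a * ⟪y, T y⟫ := by
      intro a y
      rw [map_smul, inner_smul_left, inner_smul_right]
      ring
    have hqp : ⟪x₁ + x₂, T (x₁ + x₂)⟫ = 0 := by
      rw [hplus, smul_q, hTF up f₁ hnormp hf₁, hFp]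
      simp
    have hqm : ⟪x₁ - x₂, T (x₁ - x₂)⟫ = 0 := by
      rw [hminus, smul_q, hTF um f₁ hnormm hf₁, hFm]
      simp
    have hexp : ⟪x₁ + x₂, T (x₁ + x₂)⟫ + ⟪x₁ - x₂, T (x₁ - x₂)⟫ =
        2 * ⟪x₁, T x₁⟫ + 2 * ⟪x₂, T x₂⟫ := by
      rw [map_add, map_sub, inner_add_left, inner_sub_left, inner_add_right,
        inner_add_right, inner_sub_right, inner_sub_right]
      ring
    rw [hqp, hqm, hq1, hq2] at hexp
    have : (w : ℂ) = 0 := by linear_combination -hexp / 2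
    have : w = 0 := by exact_mod_cast this
    linarith
end

section
/- Let V be a 2-dimensional complex Hilbert space, H an n-dimensional complex Hilbert space, and Σ ⊂ S(H) a subset invariant under multiplication by complex scalars of absolute value 1. Let g : S(V) → ℂ be a frame function of weight w_g and h : Σ → ℂ a Σ-frame function of weight w_h. Define f(v ⊗ w) = g(v)·h(w) for v ∈ S(V), w ∈ Σ. Then f is an (S(V) ⊗ Σ)-frame function of weight w_g·w_h; that is, for every orthonormal basis {u_i} of V ⊗ H with all u_i ∈ S(V) ⊗ Σ, one has Σ_i f(u_i) = w_g·w_h. -/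
open scoped ComplexInnerProductSpace

section Aux
variable {V : Type*} [NormedAddCommGroup V] [InnerProductSpace ℂ V]

lemma aux_exists_unit_perp (hV : Module.finrank ℂ V = 2) {x : V} (hx : ‖x‖ = 1) :
    ∃ y : V, ‖y‖ = 1 ∧ ⟪x, y⟫ = 0 := by
  haveI : FiniteDimensional ℂ V := FiniteDimensional.of_finrank_eq_succ hV
  have hx0 : x ≠ 0 := by intro h0; rw [h0, norm_zero] at hx; norm_num at hx
  have hne : ((ℂ ∙ x)ᗮ : Submodule ℂ V) ≠ ⊥ := by
    intro hbot
    have : (ℂ ∙ x) = ⊤ := Submodule.orthogonal_eq_bot_iff.mp hbot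
    have h1 : Module.finrank ℂ (ℂ ∙ x) = 1 := finrank_span_singleton hx0
    rw [this, finrank_top] at h1
    rw [hV] at h1; norm_num at h1
  obtain ⟨y₀, hy₀mem, hy₀ne⟩ := Submodule.exists_mem_ne_zero_of_ne_bot hne
  refine ⟨(‖y₀‖ : ℂ)⁻¹ • y₀, ?_, ?_⟩
  · rw [norm_smul]
    simp [norm_ne_zero_iff.mpr hy₀ne]
  · rw [inner_smul_right]
    have h0 : ⟪x, y₀⟫ = 0 :=
      Submodule.inner_right_of_mem_orthogonal (Submodule.mem_span_singleton_self x) hy₀mem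
    rw [h0, mul_zero]

lemma aux_onb_pair (hV : Module.finrank ℂ V = 2) {x y : V} (hx : ‖x‖ = 1) (hy : ‖y‖ = 1)
    (hxy : ⟪x, y⟫ = 0) :
    ∃ b : OrthonormalBasis (Fin 2) ℂ V, b 0 = x ∧ b 1 = y := by
  haveI : FiniteDimensional ℂ V := FiniteDimensional.of_finrank_eq_succ hV
  have hyx : ⟪y, x⟫ = 0 := by
    rw [← inner_conj_symm y x, hxy, map_zero]
  have hon : Orthonormal ℂ (![x, y] : Fin 2 → V) := by
    rw [orthonormal_iff_ite]
    intro i j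
    fin_cases i <;> fin_cases j <;>
      simp [hxy, hyx, inner_self_eq_norm_sq_to_K, hx, hy]
  have hsp : ⊤ ≤ Submodule.span ℂ (Set.range (![x, y] : Fin 2 → V)) := by
    rw [hon.linearIndependent.span_eq_top_of_card_eq_finrank' (by simp [hV])]
  refine ⟨OrthonormalBasis.mk hon hsp, ?_, ?_⟩ <;>
    simp [OrthonormalBasis.coe_mk]

lemma aux_parallel (hV : Module.finrank ℂ V = 2) {x y z : V} (hx : ‖x‖ = 1) (hy : ‖y‖ = 1)
    (hxy : ⟪x, y⟫ = 0) (hxz : ⟪x, z⟫ = 0) : ∃ c : ℂ, z = c • y := by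
  haveI : FiniteDimensional ℂ V := FiniteDimensional.of_finrank_eq_succ hV
  have hyx : ⟪y, x⟫ = 0 := by rw [← inner_conj_symm y x, hxy, map_zero]
  have hon : Orthonormal ℂ (![x, y] : Fin 2 → V) := by
    rw [orthonormal_iff_ite]
    intro i j
    fin_cases i <;> fin_cases j <;>
      simp [hxy, hyx, inner_self_eq_norm_sq_to_K, hx, hy]
  have hsp : ⊤ ≤ Submodule.span ℂ (Set.range (![x, y] : Fin 2 → V)) := by
    rw [hon.linearIndependent.span_eq_top_of_card_eq_finrank' (by simp [hV])]
  have hz : z ∈ Submodule.span ℂ {x, y} := by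
    have : Set.range (![x, y] : Fin 2 → V) = {x, y} := by
      simp [Matrix.range_cons, Matrix.range_empty, Set.pair_comm]
    rw [← this]
    exact hsp Submodule.mem_top
  obtain ⟨a, c, hac⟩ := Submodule.mem_span_pair.mp hz
  have ha : a = 0 := by
    have := congrArg (fun t => (⟪x, t⟫ : ℂ)) hac
    simp only [inner_add_right, inner_smul_right, hxy, hxz,
      inner_self_eq_norm_sq_to_K, hx] at this
    simpa using this
  exact ⟨c, by rw [← hac, ha, zero_smul, zero_add]⟩

end Aux

/-- Let `V` be a `2`-dimensional and `H` an `n`-dimensional complex Hilbert space,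
with Hilbert tensor product `E = V ⊗ H` (axiomatized by a bilinear map `tp` with
`⟪v ⊗ h, v' ⊗ h'⟫ = ⟪v, v'⟫⟪h, h'⟫` whose range spans `E`).  Let `Sgm ⊆ S(H)` be
invariant under unimodular scalars, let `g` be a frame function on `S(V)` of weight
`wg`, and `h` a `Sgm`-frame function of weight `wh`.  If `f (v ⊗ w) = g v * h w` for
`v ∈ S(V)`, `w ∈ Sgm`, then `f` is an `S(V) ⊗ Sgm`-frame function of weight
`wg * wh`: every orthonormal basis of `E` all of whose members lie in `S(V) ⊗ Sgm`
has `f`-sum `wg * wh`. -/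
theorem unentangled_gleason_stmt8
    {V H E : Type*}
    [NormedAddCommGroup V] [InnerProductSpace ℂ V]
    [NormedAddCommGroup H] [InnerProductSpace ℂ H]
    [NormedAddCommGroup E] [InnerProductSpace ℂ E]
    {n : ℕ} (hV : Module.finrank ℂ V = 2) (hH : Module.finrank ℂ H = n)
    (tp : V →ₗ[ℂ] H →ₗ[ℂ] E)
    (htp_inner : ∀ (v v' : V) (h h' : H), ⟪tp v h, tp v' h'⟫ = ⟪v, v'⟫ * ⟪h, h'⟫)
    (htp_span : Submodule.span ℂ {x : E | ∃ v h, x = tp v h} = ⊤)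
    (Sgm : Set H) (hSgm_sphere : ∀ w ∈ Sgm, ‖w‖ = 1)
    (hSgm_inv : ∀ (c : ℂ), ‖c‖ = 1 → ∀ w ∈ Sgm, c • w ∈ Sgm)
    (g : V → ℂ) (wg : ℂ)
    (hg : ∀ (ι : Type) [Fintype ι] (b : OrthonormalBasis ι ℂ V), ∑ i, g (b i) = wg)
    (h : H → ℂ) (wh : ℂ)
    (hh : ∀ (ι : Type) [Fintype ι] (b : OrthonormalBasis ι ℂ H),
      (∀ i, b i ∈ Sgm) → ∑ i, h (b i) = wh)
    (f : E → ℂ)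
    (hf : ∀ (v : V) (w : H), ‖v‖ = 1 → w ∈ Sgm → f (tp v w) = g v * h w) :
    ∀ (ι : Type) [Fintype ι] (b : OrthonormalBasis ι ℂ E),
      (∀ i, ∃ v w, ‖v‖ = 1 ∧ w ∈ Sgm ∧ b i = tp v w) →
      ∑ i, f (b i) = wg * wh := by
  intro ι _ b hb
  classical
  choose v w hv hw hbe using hb
  haveI : FiniteDimensional ℂ V := FiniteDimensional.of_finrank_eq_succ hV
  haveI : FiniteDimensional ℂ E := Module.Finite.of_basis b.toBasis
  -- H is finite dimensional: it embeds in E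
  haveI : FiniteDimensional ℂ H := by
    obtain ⟨x₁, hx₁⟩ : ∃ x : V, ‖x‖ = 1 := by
      have : Nontrivial V := Module.nontrivial_of_finrank_pos (R := ℂ) (by rw [hV]; norm_num)
      obtain ⟨x₀, hx₀⟩ := exists_ne (0 : V)
      exact ⟨(‖x₀‖ : ℂ)⁻¹ • x₀, by rw [norm_smul]; simp [norm_ne_zero_iff.mpr hx₀]⟩
    have hinj : Function.Injective (tp x₁) := by
      intro a a' haa
      have h2 : ⟪tp x₁ (a - a'), tp x₁ (a - a')⟫ = 0 := by
        rw [map_sub, haa]; simp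
      rw [htp_inner, inner_self_eq_norm_sq_to_K, hx₁] at h2
      have : (⟪a - a', a - a'⟫ : ℂ) = 0 := by
        simpa using h2
      have := inner_self_eq_zero.mp this
      exact sub_eq_zero.mp this
    exact FiniteDimensional.of_injective (tp x₁) hinj
  -- the cardinality of ι is 2 * n
  have hEcard : Fintype.card ι = 2 * n := by
    set bV := stdOrthonormalBasis ℂ V
    set bH := stdOrthonormalBasis ℂ H
    set F : Fin (Module.finrank ℂ V) × Fin (Module.finrank ℂ H) → E :=
      fun p => tp (bV p.1) (bH p.2) with hF
    have honF : Orthonormal ℂ F := by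
      rw [orthonormal_iff_ite]
      intro p q
      rw [hF]
      simp only [htp_inner]
      rw [orthonormal_iff_ite.mp bV.orthonormal, orthonormal_iff_ite.mp bH.orthonormal]
      by_cases h1 : p.1 = q.1 <;> by_cases h2 : p.2 = q.2 <;>
        simp [h1, h2, Prod.ext_iff]
    have hspF : ⊤ ≤ Submodule.span ℂ (Set.range F) := by
      rw [← htp_span]
      rw [Submodule.span_le]
      rintro x ⟨v0, h0, rfl⟩
      have h1 : tp v0 h0 = ∑ i, ∑ j, (bV.repr v0 i * bH.repr h0 j) • F (i, j) := by
        conv_lhs => rw [← bV.sum_repr v0, ← bH.sum_repr h0]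
        simp only [map_sum, LinearMap.sum_apply, map_smul, LinearMap.smul_apply,
          smul_smul, Finset.smul_sum]
        rw [Finset.sum_comm]
        refine Finset.sum_congr rfl fun i _ => Finset.sum_congr rfl fun j _ => ?_
        rw [hF]
        simp [smul_smul, mul_comm]
      rw [h1]
      exact Submodule.sum_mem _ fun i _ => Submodule.sum_mem _ fun j _ =>
        Submodule.smul_mem _ _ (Submodule.subset_span ⟨(i, j), rfl⟩)
    have h2 : Module.finrank ℂ E = 2 * n := by
      rw [Module.finrank_eq_card_basis (OrthonormalBasis.mk honF hspF).toBasis]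
      simp [Fintype.card_prod, hV, hH]
    rw [← h2, Module.finrank_eq_card_basis b.toBasis]
  -- basic inner product facts
  have symmz : ∀ (a c : V), ⟪a, c⟫ = 0 → ⟪c, a⟫ = 0 := fun a c hz => by
    rw [← inner_conj_symm c a, hz, map_zero]
  have hvself : ∀ i, (⟪v i, v i⟫ : ℂ) = 1 := fun i => by
    rw [inner_self_eq_norm_sq_to_K, hv i]; norm_num
  have hwself : ∀ i, (⟪w i, w i⟫ : ℂ) = 1 := fun i => by
    rw [inner_self_eq_norm_sq_to_K, hSgm_sphere _ (hw i)]; norm_num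
  have key : ∀ i j, i ≠ j → (⟪v i, v j⟫ : ℂ) * ⟪w i, w j⟫ = 0 := by
    intro i j hij
    have h0 : (⟪b i, b j⟫ : ℂ) = 0 := b.orthonormal.2 hij
    rw [hbe i, hbe j, htp_inner] at h0
    exact h0
  have wperp : ∀ i j, i ≠ j → (⟪v i, v j⟫ : ℂ) ≠ 0 → (⟪w i, w j⟫ : ℂ) = 0 := by
    intro i j hij hvz
    have := key i j hij
    exact (mul_eq_zero.mp this).resolve_left hvz
  -- the parallel relation
  set par : ι → ι → Prop := fun i j => ∃ c : ℂ, v j = c • v i with hpar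
  have par_c_ne : ∀ (c : ℂ) (i j : ι), v j = c • v i → c ≠ 0 := by
    intro c i j hc h0
    rw [h0, zero_smul] at hc
    have := hv j
    rw [hc, norm_zero] at this; norm_num at this
  have par_refl : ∀ i, par i i := fun i => ⟨1, (one_smul _ _).symm⟩
  have par_symm : ∀ {i j}, par i j → par j i := by
    rintro i j ⟨c, hc⟩
    exact ⟨c⁻¹, by rw [hc, smul_smul, inv_mul_cancel₀ (par_c_ne c i j hc), one_smul]⟩
  have par_trans : ∀ {i j k}, par i j → par j k → par i k := by
    rintro i j k ⟨c, hc⟩ ⟨d, hd⟩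
    exact ⟨d * c, by rw [hd, hc, smul_smul]⟩
  -- relation between parallel and inner products
  have par_inner : ∀ {i j} k, par i j → (⟪v k, v i⟫ : ℂ) = 0 → (⟪v k, v j⟫ : ℂ) = 0 := by
    rintro i j k ⟨c, hc⟩ hz
    rw [hc, inner_smul_right, hz, mul_zero]
  have perp_par : ∀ {i j k}, (⟪v k, v i⟫ : ℂ) = 0 → (⟪v k, v j⟫ : ℂ) = 0 → par i j := by
    intro i j k h1 h2
    exact aux_parallel hV (hv k) (hv i) h1 h2
  -- g facts
  have gsum : ∀ x y : V, ‖x‖ = 1 → ‖y‖ = 1 → ⟪x, y⟫ = 0 → g x + g y = wg := by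
    intro x y hx hy hxy
    obtain ⟨bp, h0, h1⟩ := aux_onb_pair hV hx hy hxy
    have h2 := hg (Fin 2) bp
    rw [Fin.sum_univ_two, h0, h1] at h2
    exact h2
  have gperp_eq : ∀ i j k, (⟪v k, v i⟫ : ℂ) = 0 → (⟪v k, v j⟫ : ℂ) = 0 →
      g (v i) = g (v j) := by
    intro i j k h1 h2
    have e1 := gsum (v k) (v i) (hv k) (hv i) h1
    have e2 := gsum (v k) (v j) (hv k) (hv j) h2
    linear_combination e1 - e2
  -- admissible sets
  set Adm : Finset ι → Prop := fun T => ∀ i ∈ T, ∀ j ∈ T, i ≠ j → (⟪v i, v j⟫ : ℂ) ≠ 0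
    with hAdm
  have adm_on : ∀ T : Finset ι, Adm T → Orthonormal ℂ (fun i : T => w i) := by
    intro T hT
    rw [orthonormal_iff_ite]
    intro i j
    by_cases hij : i = j
    · simp [hij, hwself, hSgm_sphere _ (hw (j : ι))]
    · have hij' : (i : ι) ≠ (j : ι) := fun hc => hij (Subtype.ext hc)
      rw [if_neg hij]
      exact wperp _ _ hij' (hT _ i.2 _ j.2 hij')
  have adm_card : ∀ T : Finset ι, Adm T → T.card ≤ n := by
    intro T hT
    have li := (adm_on T hT).linearIndependent
    have h1 := li.fintype_card_le_finrank
    rwa [hH, Fintype.card_coe] at h1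
  have adm_sum : ∀ T : Finset ι, Adm T → T.card = n → ∑ i ∈ T, h (w i) = wh := by
    intro T hT hcard
    have hon := adm_on T hT
    have hcc : Fintype.card T = Module.finrank ℂ H := by
      rw [Fintype.card_coe, hcard, hH]
    have hsp : ⊤ ≤ Submodule.span ℂ (Set.range (fun i : T => w i)) :=
      (hon.linearIndependent.span_eq_top_of_card_eq_finrank' hcc).ge
    set bT := OrthonormalBasis.mk hon hsp with hbT
    have hmem : ∀ i : T, bT i ∈ Sgm := by
      intro i
      rw [hbT, OrthonormalBasis.coe_mk]
      exact hw _
    have h1 := hh T bT hmem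
    have h2 : ∀ i : T, bT i = w i := fun i => by rw [hbT, OrthonormalBasis.coe_mk]
    rw [Finset.sum_congr rfl (fun i _ => by rw [h2 i])] at h1
    rw [← h1]
    exact (Finset.sum_coe_sort T fun i => h (w i)).symm
  -- choose a maximal admissible set
  obtain ⟨T, hTmem, hTmax0⟩ := Finset.exists_max_image
      ((Finset.univ : Finset (Finset ι)).filter Adm) Finset.card
      ⟨∅, by simp [hAdm]⟩
  have hT : Adm T := (Finset.mem_filter.mp hTmem).2
  have hTmax : ∀ T' : Finset ι, Adm T' → T'.card ≤ T.card := fun T' hT' =>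
    hTmax0 T' (Finset.mem_filter.mpr ⟨Finset.mem_univ _, hT'⟩)
  have adm_insert : ∀ (A : Finset ι) (k : ι), Adm A → k ∉ A →
      (∀ i ∈ A, (⟪v i, v k⟫ : ℂ) ≠ 0) → Adm (insert k A) := by
    intro A k hA hk hcomp a ha bb hbb hab
    rcases Finset.mem_insert.mp ha with ha' | ha' <;>
      rcases Finset.mem_insert.mp hbb with hb' | hb'
    · exact absurd (ha'.trans hb'.symm) hab
    · subst ha'
      intro hz
      exact hcomp bb hb' (symmz _ _ hz)
    · subst hb'
      exact hcomp a ha'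
    · exact hA a ha' bb hb' hab
  have hTmaxperp : ∀ k, k ∉ T → ∃ i ∈ T, (⟪v i, v k⟫ : ℂ) = 0 := by
    intro k hk
    by_contra hc
    push_neg at hc
    have h1 := hTmax _ (adm_insert T k hT hk hc)
    rw [Finset.card_insert_of_notMem hk] at h1
    omega
  have hTc : Adm Tᶜ := by
    intro j hj k hk hjk hz
    obtain ⟨i, hiT, hij⟩ := hTmaxperp j (Finset.mem_compl.mp hj)
    have h1 : (⟪v j, v i⟫ : ℂ) = 0 := symmz _ _ hij
    obtain ⟨c, hc⟩ : par i k := perp_par h1 hz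
    have hc0 := par_c_ne c i k hc
    have hadm : Adm (insert k T) := by
      refine adm_insert T k hT (Finset.mem_compl.mp hk) ?_
      intro t ht
      rw [hc, inner_smul_right]
      intro hz2
      rcases mul_eq_zero.mp hz2 with h' | h'
      · exact hc0 h'
      · by_cases hti : t = i
        · subst hti; rw [hvself t] at h'; exact one_ne_zero h'
        · exact hT t ht i hiT hti h'
    have h1 := hTmax _ hadm
    rw [Finset.card_insert_of_notMem (Finset.mem_compl.mp hk)] at h1
    omega
  have cardT : T.card = n ∧ Tᶜ.card = n := by
    have h1 := adm_card T hT
    have h2 := adm_card Tᶜ hTc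
    have h3 : T.card + Tᶜ.card = Fintype.card ι := Finset.card_add_card_compl T
    rw [hEcard] at h3
    omega
  have max_prop : ∀ (A : Finset ι), Adm A → A.card = n → ∀ k, k ∉ A →
      ∃ i ∈ A, (⟪v i, v k⟫ : ℂ) = 0 := by
    intro A hA hcard k hk
    by_contra hc
    push_neg at hc
    have h1 := adm_card _ (adm_insert A k hA hk hc)
    rw [Finset.card_insert_of_notMem hk, hcard] at h1
    omega
  clear hTmax hTmaxperp hTmem hTmax0
  set Perp : ι → Finset ι := fun i =>
    Finset.univ.filter (fun j => (⟪v i, v j⟫ : ℂ) = 0) with hPerp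
  have perp_notmem : ∀ (A : Finset ι), Adm A → ∀ i₀ ∈ A, ∀ j ∈ Perp i₀, j ∉ A := by
    intro A hA i₀ hi₀ j hj hjA
    have hz : (⟪v i₀, v j⟫ : ℂ) = 0 := (Finset.mem_filter.mp hj).2
    have hne : i₀ ≠ j := by rintro rfl; rw [hvself] at hz; exact one_ne_zero hz
    exact hA i₀ hi₀ j hjA hne hz
  have swap_adm : ∀ (A : Finset ι), Adm A → ∀ i₀ ∈ A,
      Adm ((A \ A.filter (par i₀)) ∪ Perp i₀) := by
    intro A hA i₀ hi₀ a ha bb hbb hab hz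
    rcases Finset.mem_union.mp ha with ha' | ha' <;>
      rcases Finset.mem_union.mp hbb with hb' | hb'
    · exact hA a (Finset.mem_sdiff.mp ha').1 bb (Finset.mem_sdiff.mp hb').1 hab hz
    · obtain ⟨haA, haP⟩ := Finset.mem_sdiff.mp ha'
      have h1 : (⟪v i₀, v bb⟫ : ℂ) = 0 := (Finset.mem_filter.mp hb').2
      exact haP (Finset.mem_filter.mpr ⟨haA, perp_par (symmz _ _ h1) (symmz _ _ hz)⟩)
    · obtain ⟨hbA, hbP⟩ := Finset.mem_sdiff.mp hb'
      have h1 : (⟪v i₀, v a⟫ : ℂ) = 0 := (Finset.mem_filter.mp ha').2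
      exact hbP (Finset.mem_filter.mpr ⟨hbA, perp_par (symmz _ _ h1) hz⟩)
    · have h1 : (⟪v i₀, v a⟫ : ℂ) = 0 := (Finset.mem_filter.mp ha').2
      have h2 : (⟪v i₀, v bb⟫ : ℂ) = 0 := (Finset.mem_filter.mp hb').2
      obtain ⟨c, hc⟩ : par a bb := perp_par h1 h2
      have hc0 := par_c_ne c a bb hc
      rw [hc, inner_smul_right, hvself, mul_one] at hz
      exact hc0 hz
  have swap_card : ∀ (A : Finset ι), Adm A → A.card = n → ∀ i₀ ∈ A,
      ((A \ A.filter (par i₀)) ∪ Perp i₀).card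
        = A.card - (A.filter (par i₀)).card + (Perp i₀).card := by
    intro A hA hcard i₀ hi₀
    have hdisj : Disjoint (A \ A.filter (par i₀)) (Perp i₀) := by
      rw [Finset.disjoint_right]
      intro j hjQ hjAP
      exact perp_notmem A hA i₀ hi₀ j hjQ (Finset.mem_sdiff.mp hjAP).1
    rw [Finset.card_union_of_disjoint hdisj,
      Finset.card_sdiff_of_subset (Finset.filter_subset _ _)]
  have perp_le : ∀ (A : Finset ι), Adm A → A.card = n → ∀ i₀ ∈ A,
      (Perp i₀).card ≤ (A.filter (par i₀)).card := by
    intro A hA hcard i₀ hi₀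
    have h1 := adm_card _ (swap_adm A hA i₀ hi₀)
    rw [swap_card A hA hcard i₀ hi₀] at h1
    have h2 : (A.filter (par i₀)).card ≤ A.card := Finset.card_filter_le _ _
    omega
  have PerpSubTc : ∀ i ∈ T, ∀ j ∈ Perp i, j ∈ Tᶜ := fun i hi j hj =>
    Finset.mem_compl.mpr (perp_notmem T hT i hi j hj)
  have Perp_nonempty : ∀ i ∈ T, (Perp i).Nonempty := by
    intro i hi
    obtain ⟨j, hjTc, hz⟩ := max_prop Tᶜ hTc cardT.2 i (by simp [Finset.mem_compl, hi])
    exact ⟨j, Finset.mem_filter.mpr ⟨Finset.mem_univ _, symmz _ _ hz⟩⟩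
  have PerpT_nonempty : ∀ j, j ∉ T →
      (T.filter (fun t => (⟪v t, v j⟫ : ℂ) = 0)).Nonempty := by
    intro j hj
    obtain ⟨i, hiT, hz⟩ := max_prop T hT cardT.1 j hj
    exact ⟨i, Finset.mem_filter.mpr ⟨hiT, hz⟩⟩
  have PerpT_eq : ∀ i ∈ T, ∀ j ∈ Perp i,
      T.filter (fun t => (⟪v t, v j⟫ : ℂ) = 0) = T.filter (par i) := by
    intro i hi j hj
    have hij : (⟪v i, v j⟫ : ℂ) = 0 := (Finset.mem_filter.mp hj).2
    ext t
    simp only [Finset.mem_filter]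
    constructor
    · rintro ⟨ht, htz⟩
      exact ⟨ht, perp_par (symmz _ _ hij) (symmz _ _ htz)⟩
    · rintro ⟨ht, c, hc⟩
      refine ⟨ht, ?_⟩
      rw [hc, inner_smul_left, hij, mul_zero]
  have perp_card : ∀ i ∈ T, (Perp i).card = (T.filter (par i)).card := by
    intro i hi
    have h1 := perp_le T hT cardT.1 i hi
    obtain ⟨j₀, hj₀⟩ := Perp_nonempty i hi
    have hj₀Tc : j₀ ∈ Tᶜ := PerpSubTc i hi j₀ hj₀
    have hij₀ : (⟪v i, v j₀⟫ : ℂ) = 0 := (Finset.mem_filter.mp hj₀).2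
    have h2 := perp_le Tᶜ hTc cardT.2 j₀ hj₀Tc
    have e1 : Perp j₀ = T.filter (par i) := by
      ext t
      simp only [hPerp, Finset.mem_filter, Finset.mem_univ, true_and]
      constructor
      · intro hz
        have htT : t ∈ T := by
          by_contra htT
          have hne : j₀ ≠ t := by rintro rfl; rw [hvself] at hz; exact one_ne_zero hz
          exact hTc j₀ hj₀Tc t (Finset.mem_compl.mpr htT) hne hz
        exact ⟨htT, perp_par (symmz _ _ hij₀) hz⟩
      · rintro ⟨htT, c, hc⟩
        rw [hc, inner_smul_right, symmz _ _ hij₀, mul_zero]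
    have e2 : Tᶜ.filter (par j₀) = Perp i := by
      ext t
      simp only [hPerp, Finset.mem_filter, Finset.mem_univ, true_and]
      constructor
      · rintro ⟨htc, c, hc⟩
        rw [hc, inner_smul_right, hij₀, mul_zero]
      · intro hz
        have htc : t ∈ Tᶜ := PerpSubTc i hi t
          (Finset.mem_filter.mpr ⟨Finset.mem_univ _, hz⟩)
        exact ⟨htc, perp_par hij₀ hz⟩
    rw [e1] at h2
    rw [e2] at h2
    omega
  have swap_sum : ∀ i ∈ T,
      ∑ j ∈ Perp i, h (w j) = ∑ t ∈ T.filter (par i), h (w t) := by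
    intro i hi
    have hAdmU := swap_adm T hT i hi
    have hcardU : ((T \ T.filter (par i)) ∪ Perp i).card = n := by
      rw [swap_card T hT cardT.1 i hi, perp_card i hi, cardT.1]
      have h2 : (T.filter (par i)).card ≤ n := by
        rw [← cardT.1]; exact Finset.card_filter_le _ _
      omega
    have hsum := adm_sum _ hAdmU hcardU
    have hdisj : Disjoint (T \ T.filter (par i)) (Perp i) := by
      rw [Finset.disjoint_right]
      intro j hjQ hjAP
      exact perp_notmem T hT i hi j hjQ (Finset.mem_sdiff.mp hjAP).1
    rw [Finset.sum_union hdisj] at hsum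
    have hsumT := adm_sum T hT cardT.1
    rw [← Finset.sum_sdiff (Finset.filter_subset (par i) T)] at hsumT
    linear_combination hsum - hsumT
  have hgconst : ∀ i ∈ T, ∀ t ∈ T.filter (par i), g (v t) = g (v i) := by
    intro i hi t ht
    obtain ⟨htT, c, hc⟩ := Finset.mem_filter.mp ht
    obtain ⟨j₀, hj₀⟩ := Perp_nonempty i hi
    have hij₀ : (⟪v i, v j₀⟫ : ℂ) = 0 := (Finset.mem_filter.mp hj₀).2
    have h1 : (⟪v j₀, v i⟫ : ℂ) = 0 := symmz _ _ hij₀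
    have h2 : (⟪v j₀, v t⟫ : ℂ) = 0 := by rw [hc, inner_smul_right, h1, mul_zero]
    exact gperp_eq t i j₀ h2 h1
  have hm_eq : ∀ t ∈ T, ∀ i ∈ T.filter (par t),
      T.filter (par i) = T.filter (par t) := by
    intro t ht i hi
    obtain ⟨hiT, hpti⟩ := Finset.mem_filter.mp hi
    ext x
    simp only [Finset.mem_filter, and_congr_right_iff]
    intro hx
    exact ⟨fun hix => par_trans hpti hix, fun htx => par_trans (par_symm hpti) htx⟩
  have e3 : ∀ i ∈ T, Tᶜ.filter (fun j => (⟪v i, v j⟫ : ℂ) = 0) = Perp i := by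
    intro i hi
    ext j
    simp only [hPerp, Finset.mem_filter, Finset.mem_univ, true_and]
    constructor
    · rintro ⟨-, hz⟩; exact hz
    · intro hz
      exact ⟨PerpSubTc i hi j (Finset.mem_filter.mpr ⟨Finset.mem_univ _, hz⟩), hz⟩
  have hD : ∑ j ∈ Tᶜ, (∑ i ∈ T.filter (fun t => (⟪v t, v j⟫ : ℂ) = 0),
        ((T.filter (fun t => (⟪v t, v j⟫ : ℂ) = 0)).card : ℂ)⁻¹ * g (v i)) * h (w j)
      = ∑ t ∈ T, g (v t) * h (w t) := by
    have step1 : ∀ j ∈ Tᶜ, (∑ i ∈ T.filter (fun t => (⟪v t, v j⟫ : ℂ) = 0),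
          ((T.filter (fun t => (⟪v t, v j⟫ : ℂ) = 0)).card : ℂ)⁻¹ * g (v i)) * h (w j)
        = ∑ i ∈ T, (if (⟪v i, v j⟫ : ℂ) = 0 then
            ((T.filter (fun t => (⟪v t, v j⟫ : ℂ) = 0)).card : ℂ)⁻¹ * (g (v i) * h (w j))
          else 0) := by
      intro j hj
      rw [Finset.sum_mul, ← Finset.sum_filter]
      exact Finset.sum_congr rfl fun i _ => mul_assoc _ _ _
    have step2 : ∀ i ∈ T, (∑ j ∈ Tᶜ, if (⟪v i, v j⟫ : ℂ) = 0 then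
            ((T.filter (fun t => (⟪v t, v j⟫ : ℂ) = 0)).card : ℂ)⁻¹ * (g (v i) * h (w j))
          else 0)
        = ∑ t ∈ T.filter (par i), ((T.filter (par i)).card : ℂ)⁻¹ * (g (v t) * h (w t)) := by
      intro i hi
      rw [← Finset.sum_filter, e3 i hi]
      have t1 : ∀ j ∈ Perp i,
          ((T.filter (fun t => (⟪v t, v j⟫ : ℂ) = 0)).card : ℂ)⁻¹ * (g (v i) * h (w j))
          = ((T.filter (par i)).card : ℂ)⁻¹ * g (v i) * h (w j) := by
        intro j hj
        rw [PerpT_eq i hi j hj]; ring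
      rw [Finset.sum_congr rfl t1, ← Finset.mul_sum, swap_sum i hi, Finset.mul_sum]
      refine Finset.sum_congr rfl fun t ht => ?_
      rw [hgconst i hi t ht]; ring
    have step3 : ∑ i ∈ T, ∑ t ∈ T.filter (par i),
          ((T.filter (par i)).card : ℂ)⁻¹ * (g (v t) * h (w t))
        = ∑ t ∈ T, g (v t) * h (w t) := by
      have s1 : ∀ i ∈ T, (∑ t ∈ T.filter (par i),
            ((T.filter (par i)).card : ℂ)⁻¹ * (g (v t) * h (w t)))
          = ∑ t ∈ T, if par i t then
              ((T.filter (par i)).card : ℂ)⁻¹ * (g (v t) * h (w t)) else 0 :=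
        fun i _ => Finset.sum_filter _ _
      rw [Finset.sum_congr rfl s1, Finset.sum_comm]
      refine Finset.sum_congr rfl fun t ht => ?_
      have s2 : T.filter (fun i => par i t) = T.filter (par t) := by
        ext x
        simp only [Finset.mem_filter, and_congr_right_iff]
        intro hx
        exact ⟨fun hxt => par_symm hxt, fun htx => par_symm htx⟩
      rw [← Finset.sum_filter, s2]
      have s3 : ∀ i ∈ T.filter (par t),
          ((T.filter (par i)).card : ℂ)⁻¹ * (g (v t) * h (w t))
          = ((T.filter (par t)).card : ℂ)⁻¹ * (g (v t) * h (w t)) := by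
        intro i hi
        rw [hm_eq t ht i hi]
      rw [Finset.sum_congr rfl s3, Finset.sum_const, nsmul_eq_mul]
      have hmem : t ∈ T.filter (par t) := Finset.mem_filter.mpr ⟨ht, par_refl t⟩
      have hc0 : ((T.filter (par t)).card : ℂ) ≠ 0 :=
        Nat.cast_ne_zero.mpr (Finset.card_ne_zero.mpr ⟨t, hmem⟩)
      rw [← mul_assoc, mul_inv_cancel₀ hc0, one_mul]
    rw [Finset.sum_congr rfl step1, Finset.sum_comm, Finset.sum_congr rfl step2, step3]
  have hgform : ∀ j ∈ Tᶜ, g (v j)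
      = wg - ∑ i ∈ T.filter (fun t => (⟪v t, v j⟫ : ℂ) = 0),
          ((T.filter (fun t => (⟪v t, v j⟫ : ℂ) = 0)).card : ℂ)⁻¹ * g (v i) := by
    intro j hj
    have hne := PerpT_nonempty j (Finset.mem_compl.mp hj)
    have hc0 : ((T.filter (fun t => (⟪v t, v j⟫ : ℂ) = 0)).card : ℂ) ≠ 0 :=
      Nat.cast_ne_zero.mpr (Finset.card_ne_zero.mpr hne)
    have hterm : ∀ i ∈ T.filter (fun t => (⟪v t, v j⟫ : ℂ) = 0),
        ((T.filter (fun t => (⟪v t, v j⟫ : ℂ) = 0)).card : ℂ)⁻¹ * g (v i)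
        = ((T.filter (fun t => (⟪v t, v j⟫ : ℂ) = 0)).card : ℂ)⁻¹ * (wg - g (v j)) := by
      intro i hi
      obtain ⟨hiT, hz⟩ := Finset.mem_filter.mp hi
      have hgs := gsum (v i) (v j) (hv i) (hv j) hz
      congr 1
      linear_combination hgs
    rw [Finset.sum_congr rfl hterm, Finset.sum_const, nsmul_eq_mul,
      ← mul_assoc, mul_inv_cancel₀ hc0, one_mul]
    ring
  have hTcsum : ∑ j ∈ Tᶜ, g (v j) * h (w j)
      = wg * wh - ∑ t ∈ T, g (v t) * h (w t) := by
    calc ∑ j ∈ Tᶜ, g (v j) * h (w j)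
        = ∑ j ∈ Tᶜ, (wg * h (w j)
            - (∑ i ∈ T.filter (fun t => (⟪v t, v j⟫ : ℂ) = 0),
                ((T.filter (fun t => (⟪v t, v j⟫ : ℂ) = 0)).card : ℂ)⁻¹ * g (v i))
              * h (w j)) := by
          refine Finset.sum_congr rfl fun j hj => ?_
          rw [hgform j hj]; ring
      _ = wg * wh - ∑ t ∈ T, g (v t) * h (w t) := by
          rw [Finset.sum_sub_distrib, ← Finset.mul_sum, adm_sum Tᶜ hTc cardT.2, hD]
  have hfsum : ∀ i : ι, f (b i) = g (v i) * h (w i) := fun i => by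
    rw [hbe i]; exact hf (v i) (w i) (hv i) (hw i)
  rw [Finset.sum_congr rfl (fun i _ => hfsum i), ← Finset.sum_add_sum_compl T, hTcsum]
  ring
end

section
/- Let V be a 2-dimensional complex Hilbert space and H an n-dimensional complex Hilbert space. Let {u_i}_{i=1}^{2n} be an orthonormal basis of V ⊗ H with each u_i = a_i ⊗ h_i, where a_i ∈ S(V) and h_i ∈ S(H). Then for each index i there exists an index j such that a_j is a scalar multiple of â_i, a unit vector of V orthogonal to a_i. -/
/-!
If no `a j` were orthogonal to `a i`, orthogonality of the product basis `u j = a j ⊗ h j` would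
force `h j ⊥ h i` for every `j ≠ i`. Then `b ⊗ h i`, for any nonzero `b ⊥ a i` (which exists
since `dim V = 2`), is orthogonal to every basis vector, hence zero, although `b ≠ 0 ≠ h i`.
-/

open scoped ComplexInnerProductSpace InnerProductSpace
open Module

theorem exists_ne_zero_inner_eq_zero {𝕜 V : Type*} [RCLike 𝕜] [NormedAddCommGroup V]
    [InnerProductSpace 𝕜 V] (hV : 1 < finrank 𝕜 V) (x : V) :
    ∃ b : V, b ≠ 0 ∧ ⟪x, b⟫_𝕜 = 0 := by
  have hspan : (𝕜 ∙ x) ≠ ⊤ := fun htop => by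
    have := finrank_span_le_card (R := 𝕜) ({x} : Set V)
    rw [htop, finrank_top] at this
    simp only [Set.toFinset_singleton, Finset.card_singleton] at this
    omega
  obtain ⟨b, hb, hb0⟩ :=
    Submodule.exists_mem_ne_zero_of_ne_bot (mt Submodule.orthogonal_eq_bot_iff.mp hspan)
  exact ⟨b, hb0, Submodule.mem_orthogonal_singleton_iff_inner_right.mp hb⟩

section

variable {𝕜 V H E ι : Type*} [RCLike 𝕜]
  [NormedAddCommGroup V] [InnerProductSpace 𝕜 V]
  [NormedAddCommGroup H] [InnerProductSpace 𝕜 H]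
  [NormedAddCommGroup E] [InnerProductSpace 𝕜 E]

def IsInnerMultiplicative (tp : V →ₗ[𝕜] H →ₗ[𝕜] E) : Prop :=
  ∀ (v v' : V) (w w' : H), ⟪tp v w, tp v' w'⟫_𝕜 = ⟪v, v'⟫_𝕜 * ⟪w, w'⟫_𝕜

namespace IsInnerMultiplicative

variable {tp : V →ₗ[𝕜] H →ₗ[𝕜] E}

theorem apply_eq_zero_iff (htp : IsInnerMultiplicative tp) {v : V} {w : H} :
    tp v w = 0 ↔ v = 0 ∨ w = 0 := by
  rw [← inner_self_eq_zero (𝕜 := 𝕜), htp, mul_eq_zero, inner_self_eq_zero, inner_self_eq_zero]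

theorem exists_inner_eq_zero_of_orthonormalBasis [Fintype ι] (htp : IsInnerMultiplicative tp)
    (u : OrthonormalBasis ι 𝕜 E) {a : ι → V} {h : ι → H} (hu : ∀ j, u j = tp (a j) (h j))
    (i : ι) {b : V} (hb : b ≠ 0) (hbi : ⟪a i, b⟫_𝕜 = 0) : ∃ j, ⟪a i, a j⟫_𝕜 = 0 := by
  by_contra! hne
  have hperp : ∀ j, ⟪u j, tp b (h i)⟫_𝕜 = 0 := by
    intro j
    rw [hu j, htp]
    rcases eq_or_ne j i with rfl | hji
    · rw [hbi, zero_mul]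
    · have hsplit := u.inner_eq_zero hji
      rw [hu j, hu i, htp, mul_eq_zero, ← inner_conj_symm, map_eq_zero] at hsplit
      rw [hsplit.resolve_left (hne j), mul_zero]
  have hzero : tp b (h i) = 0 :=
    InnerProductSpace.ext_inner_left_basis u.toBasis fun j => by simpa using hperp j
  have hhi : h i ≠ 0 := fun h0 => u.orthonormal.ne_zero i (by rw [hu i, h0, map_zero])
  exact (htp.apply_eq_zero_iff.mp hzero).elim hb hhi

end IsInnerMultiplicative

end

theorem unentangled_gleason_stmt10_general
    {V H E : Type*}
    [NormedAddCommGroup V] [InnerProductSpace ℂ V]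
    [NormedAddCommGroup H] [InnerProductSpace ℂ H]
    [NormedAddCommGroup E] [InnerProductSpace ℂ E]
    {n : ℕ} (hV : Module.finrank ℂ V = 2)
    (tp : V →ₗ[ℂ] H →ₗ[ℂ] E)
    (htp_inner : ∀ (v v' : V) (h h' : H), ⟪tp v h, tp v' h'⟫ = ⟪v, v'⟫ * ⟪h, h'⟫)
    (u : OrthonormalBasis (Fin (2 * n)) ℂ E)
    (a : Fin (2 * n) → V) (h : Fin (2 * n) → H)
    (ha : ∀ i, ‖a i‖ = 1)
    (hu : ∀ i, u i = tp (a i) (h i)) :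
    ∀ i, ∃ j, ∃ (c : ℂ) (ahat : V),
      ‖ahat‖ = 1 ∧ ⟪a i, ahat⟫ = 0 ∧ a j = c • ahat := by
  intro i
  obtain ⟨b, hb, hbi⟩ := exists_ne_zero_inner_eq_zero (by omega : 1 < finrank ℂ V) (a i)
  obtain ⟨j, hj⟩ :=
    IsInnerMultiplicative.exists_inner_eq_zero_of_orthonormalBasis htp_inner u hu i hb hbi
  exact ⟨j, 1, a j, ha j, hj, (one_smul ℂ (a j)).symm⟩

/-- Let `V` be a `2`-dimensional complex Hilbert space, `H` an `n`-dimensional complex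
Hilbert space, and let `E = V ⊗ H` be their Hilbert-space tensor product (axiomatized
by a bilinear map `tp : V → H → E` with `⟪v ⊗ h, v' ⊗ h'⟫ = ⟪v, v'⟫⟪h, h'⟫` whose
range spans `E`).  Let `(u i)_{i=1}^{2n}` be an orthonormal basis of `E` with each
`u i = a i ⊗ h i` a product of unit vectors.  Then for each index `i` there is an
index `j` such that `a j` is a scalar multiple of `â i`, a unit vector of `V`
orthogonal to `a i`. -/
theorem unentangled_gleason_stmt10
    {V H E : Type*}
    [NormedAddCommGroup V] [InnerProductSpace ℂ V]
    [NormedAddCommGroup H] [InnerProductSpace ℂ H]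
    [NormedAddCommGroup E] [InnerProductSpace ℂ E]
    {n : ℕ} (hV : Module.finrank ℂ V = 2) (hH : Module.finrank ℂ H = n)
    (tp : V →ₗ[ℂ] H →ₗ[ℂ] E)
    (htp_inner : ∀ (v v' : V) (h h' : H), ⟪tp v h, tp v' h'⟫ = ⟪v, v'⟫ * ⟪h, h'⟫)
    (htp_span : Submodule.span ℂ {x : E | ∃ v h, x = tp v h} = ⊤)
    (u : OrthonormalBasis (Fin (2 * n)) ℂ E)
    (a : Fin (2 * n) → V) (h : Fin (2 * n) → H)
    (ha : ∀ i, ‖a i‖ = 1) (hh : ∀ i, ‖h i‖ = 1)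
    (hu : ∀ i, u i = tp (a i) (h i)) :
    ∀ i, ∃ j, ∃ (c : ℂ) (ahat : V),
      ‖ahat‖ = 1 ∧ ⟪a i, ahat⟫ = 0 ∧ a j = c • ahat :=
  unentangled_gleason_stmt10_general hV tp htp_inner u a h ha hu
end

section
/- Let H₁, …, Hₙ be finite-dimensional complex vector spaces, H = H₁ ⊗ ⋯ ⊗ Hₙ, and X = {h₁ ⊗ ⋯ ⊗ hₙ | hᵢ ∈ Hᵢ} the set of product tensors. Set d = Σᵢ(dim Hᵢ − 1) + 1. Then there exist linear functionals λ₁, …, λ_d ∈ H* such that {x ∈ X | λᵢ(x) = 0 for all i = 1,…,d} = {0}. -/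
set_option maxHeartbeats 1000000


open scoped TensorProduct

/-- For finite-dimensional complex vector spaces `H₁, …, Hₙ` (`n ≥ 1`), with
`H = H₁ ⊗ ⋯ ⊗ Hₙ`, `X ⊆ H` the set of product tensors `h₁ ⊗ ⋯ ⊗ hₙ`, and
`d = ∑ᵢ (dim Hᵢ − 1) + 1`, there exist linear functionals `λ₁, …, λ_d ∈ H*` whose
common zero locus meets `X` exactly in `{0}`. -/
theorem unentangled_gleason_stmt15
    {n : ℕ} (hn : 0 < n)
    (H : Fin n → Type*) [∀ i, AddCommGroup (H i)]
    [∀ i, Module ℂ (H i)] [∀ i, FiniteDimensional ℂ (H i)] :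
    ∃ lam : Fin ((∑ i, (Module.finrank ℂ (H i) - 1)) + 1) →
        ((⨂[ℂ] i, H i) →ₗ[ℂ] ℂ),
      {x ∈ Set.range (PiTensorProduct.tprod ℂ (s := H)) | ∀ i, lam i x = 0}
        = {0} := by
  classical
  set d := (∑ i, (Module.finrank ℂ (H i) - 1)) + 1 with hd
  let b : ∀ i, Module.Basis (Fin (Module.finrank ℂ (H i))) ℂ (H i) :=
    fun i => Module.finBasis ℂ (H i)
  let g : ∀ i, H i →ₗ[ℂ] Polynomial ℂ :=
    fun i => ∑ j : Fin (Module.finrank ℂ (H i)),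
      (Polynomial.monomial (j : ℕ) : ℂ →ₗ[ℂ] Polynomial ℂ).comp ((b i).coord j)
  let L : (⨂[ℂ] i, H i) →ₗ[ℂ] Polynomial ℂ :=
    PiTensorProduct.lift
      ((MultilinearMap.mkPiAlgebra ℂ (Fin n) (Polynomial ℂ)).compLinearMap g)
  refine ⟨fun k => (Polynomial.lcoeff ℂ (k : ℕ)).comp L, ?_⟩
  ext x
  simp only [Set.mem_setOf_eq, Set.mem_singleton_iff, LinearMap.comp_apply,
    Polynomial.lcoeff_apply]
  constructor
  · rintro ⟨⟨h, rfl⟩, hz⟩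
    have hL : L (PiTensorProduct.tprod ℂ h) = ∏ i, g i (h i) := by
      simp only [L, PiTensorProduct.lift.tprod, MultilinearMap.compLinearMap_apply,
        MultilinearMap.mkPiAlgebra_apply]
    have hg : ∀ i (v : H i), g i v
        = ∑ j : Fin (Module.finrank ℂ (H i)), Polynomial.monomial j.val ((b i).coord j v) := by
      intro i v
      simp [g, LinearMap.sum_apply]
    have hdeg : (∏ i, g i (h i) : Polynomial ℂ).natDegree ≤ ∑ i, (Module.finrank ℂ (H i) - 1) := by
      refine (Polynomial.natDegree_prod_le _ _).trans (Finset.sum_le_sum ?_)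
      intro i _
      rw [hg]
      refine Polynomial.natDegree_sum_le_of_forall_le _ _ ?_
      intro j _
      refine (Polynomial.natDegree_monomial_le _).trans ?_
      exact Nat.le_sub_one_of_lt j.isLt
    have hP : (∏ i, g i (h i)) = 0 := by
      ext k
      rcases lt_or_ge k d with hk | hk
      · have := hz ⟨k, hk⟩
        rw [hL] at this
        simpa using this
      · refine Polynomial.coeff_eq_zero_of_natDegree_lt ?_
        exact lt_of_le_of_lt hdeg (by omega)
    rcases Finset.prod_eq_zero_iff.mp hP with ⟨i, -, hgi⟩
    have hhi : h i = 0 := by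
      have hc : ∀ j, (b i).coord j (h i) = 0 := by
        intro j
        have := congrArg (fun p => Polynomial.coeff p (j : ℕ)) hgi
        rw [hg] at this
        simp only [Polynomial.finset_sum_coeff, Polynomial.coeff_monomial,
          Polynomial.coeff_zero] at this
        rwa [Finset.sum_eq_single j (by
            intro j' _ hj'
            rw [if_neg (by simpa [Fin.val_eq_val] using hj')])
          (by simp), if_pos rfl] at this
      exact (b i).forall_coord_eq_zero_iff.mp hc
    exact (PiTensorProduct.tprod ℂ).map_coord_zero i hhi
  · rintro rfl
    refine ⟨⟨fun _ => 0, (PiTensorProduct.tprod ℂ).map_coord_zero ⟨0, hn⟩ rfl⟩,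
      fun k => by simp⟩
end

section
/- Let H be a 2-dimensional complex Hilbert space. Then there exists a non-negative frame function f : S(H) → ℝ for which there is no self-adjoint operator T : H → H with f(v) = ⟨v|T|v⟩ for all v ∈ S(H). -/
open scoped ComplexInnerProductSpace

/-!
The frame function is `v ↦ g ‖⟪e, v⟫‖²` for a unit vector `e` and the cubic
`g t = 1/2 + 4 (t - 1/2)³`. Since `g t + g (1 - t) = 1` and the two values `‖⟪e, vᵢ⟫‖²`
along an orthonormal basis add up to `1`, it has weight `1`. A quadratic form
`q v = ⟪v, T v⟫`, on the other hand, satisfies `q (a x + b y) - q (b x + a y) =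
(a² - b²) (q x - q y)` for real `a`, `b`, which forces `g` to be affine on the values
`a²` with `a² + b² = 1`; the cubic `g` is not, e.g. at `(a, b) = (4/5, 3/5)`.
-/

noncomputable def cubicWeight (t : ℝ) : ℝ := 1 / 2 + 4 * (t - 1 / 2) ^ 3

lemma cubicWeight_add_one_sub (t : ℝ) : cubicWeight t + cubicWeight (1 - t) = 1 := by
  unfold cubicWeight; ring

lemma cubicWeight_nonneg {t : ℝ} (ht : 0 ≤ t) : 0 ≤ cubicWeight t := by
  unfold cubicWeight
  nlinarith [mul_nonneg ht (sq_nonneg (2 * t - 3 / 2))]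

section

variable {𝕜 E : Type*} [RCLike 𝕜] [NormedAddCommGroup E] [InnerProductSpace 𝕜 E]

lemma OrthonormalBasis.norm_sq_inner_zero_add_norm_sq_inner_one
    (v : OrthonormalBasis (Fin 2) 𝕜 E) {e : E} (he : ‖e‖ = 1) :
    ‖inner 𝕜 e (v 0)‖ ^ 2 + ‖inner 𝕜 e (v 1)‖ ^ 2 = 1 := by
  rw [← Fin.sum_univ_two (fun i => ‖inner 𝕜 e (v i)‖ ^ 2), v.sum_sq_norm_inner_left, he, one_pow]

lemma inner_map_self_real_smul_add_sub_swap (T : E →ₗ[𝕜] E) (x y : E) (a b : ℝ) :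
    inner 𝕜 ((a : 𝕜) • x + (b : 𝕜) • y) (T ((a : 𝕜) • x + (b : 𝕜) • y)) -
        inner 𝕜 ((b : 𝕜) • x + (a : 𝕜) • y) (T ((b : 𝕜) • x + (a : 𝕜) • y)) =
      ((a : 𝕜) ^ 2 - (b : 𝕜) ^ 2) * (inner 𝕜 x (T x) - inner 𝕜 y (T y)) := by
  simp only [map_add, map_smul, inner_add_left, inner_add_right, inner_smul_left,
    inner_smul_right, RCLike.conj_ofReal]
  ring

variable {x y : E}

lemma norm_real_smul_add_of_orthonormal (hx : ‖x‖ = 1) (hy : ‖y‖ = 1) (hxy : inner 𝕜 x y = 0)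
    {a b : ℝ} (hab : a ^ 2 + b ^ 2 = 1) : ‖(a : 𝕜) • x + (b : 𝕜) • y‖ = 1 := by
  have hperp : inner 𝕜 ((a : 𝕜) • x) ((b : 𝕜) • y) = 0 := by
    rw [inner_smul_left, inner_smul_right, hxy, mul_zero, mul_zero]
  have hsq := norm_add_sq_eq_norm_sq_add_norm_sq_of_inner_eq_zero _ _ hperp
  rw [norm_smul, norm_smul, hx, hy, RCLike.norm_ofReal, RCLike.norm_ofReal, mul_one, mul_one,
    abs_mul_abs_self, abs_mul_abs_self, ← sq, ← sq, ← sq, hab] at hsq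
  exact (pow_eq_one_iff_of_nonneg (norm_nonneg _) two_ne_zero).mp hsq

lemma inner_real_smul_add_of_orthonormal (hx : ‖x‖ = 1) (hxy : inner 𝕜 x y = 0) (a b : ℝ) :
    inner 𝕜 x ((a : 𝕜) • x + (b : 𝕜) • y) = a := by
  rw [inner_add_right, inner_smul_right, inner_smul_right, inner_self_eq_norm_sq_to_K, hx, hxy]
  simp

lemma apply_sq_sub_apply_sq_of_inner_map_self_eq (hx : ‖x‖ = 1) (hy : ‖y‖ = 1)
    (hxy : inner 𝕜 x y = 0) (g : ℝ → ℝ) (T : E →ₗ[𝕜] E)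
    (hT : ∀ v : E, ‖v‖ = 1 → (g (‖inner 𝕜 x v‖ ^ 2) : 𝕜) = inner 𝕜 v (T v))
    {a b : ℝ} (hab : a ^ 2 + b ^ 2 = 1) :
    g (a ^ 2) - g (b ^ 2) = (a ^ 2 - b ^ 2) * (g 1 - g 0) := by
  have hg : ∀ a b : ℝ, a ^ 2 + b ^ 2 = 1 →
      (g (a ^ 2) : 𝕜) = inner 𝕜 ((a : 𝕜) • x + (b : 𝕜) • y) (T ((a : 𝕜) • x + (b : 𝕜) • y)) := by
    intro a b hab
    rw [← hT _ (norm_real_smul_add_of_orthonormal hx hy hxy hab),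
      inner_real_smul_add_of_orthonormal hx hxy, RCLike.norm_ofReal, sq_abs]
  have hg1 := hg 1 0 (by norm_num)
  have hg0 := hg 0 1 (by norm_num)
  simp only [one_pow, RCLike.ofReal_one, RCLike.ofReal_zero, one_smul, zero_smul, add_zero,
    zero_add, ne_eq, OfNat.ofNat_ne_zero, not_false_eq_true, zero_pow] at hg1 hg0
  have key := inner_map_self_real_smul_add_sub_swap T x y a b
  rw [← hg a b hab, ← hg b a (by linarith), ← hg1, ← hg0] at key
  exact_mod_cast key

end

/-- Gleason's theorem fails in dimension `2`: on a `2`-dimensional complex Hilbert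
space `H` there is a non-negative frame function `f : S(H) → ℝ` (i.e. for some weight
`w`, every orthonormal basis `(v i)` of `H` satisfies `∑ i, f (v i) = w`) which is not
of the form `v ↦ ⟨v|T|v⟩` for any self-adjoint operator `T : H → H`. -/
theorem unentangled_gleason_stmt17
    {H : Type*} [NormedAddCommGroup H] [InnerProductSpace ℂ H]
    (hdim : Module.finrank ℂ H = 2) :
    ∃ f : H → ℝ,
      (∀ v : H, ‖v‖ = 1 → 0 ≤ f v) ∧
      (∃ w : ℝ, ∀ v : OrthonormalBasis (Fin 2) ℂ H, ∑ i, f (v i) = w) ∧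
      ¬ ∃ T : H →ₗ[ℂ] H, T.IsSymmetric ∧
          ∀ v : H, ‖v‖ = 1 → (f v : ℂ) = ⟪v, T v⟫ := by
  have : FiniteDimensional ℂ H := FiniteDimensional.of_finrank_eq_succ hdim
  let b : OrthonormalBasis (Fin 2) ℂ H := (stdOrthonormalBasis ℂ H).reindex (finCongr hdim)
  refine ⟨fun v => cubicWeight (‖⟪b 0, v⟫‖ ^ 2), fun v _ => cubicWeight_nonneg (sq_nonneg _),
    ⟨1, fun v => ?_⟩, ?_⟩
  · simp only [Fin.sum_univ_two]
    rw [eq_sub_of_add_eq' (v.norm_sq_inner_zero_add_norm_sq_inner_one (b.orthonormal.1 0)),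
      cubicWeight_add_one_sub]
  · rintro ⟨T, -, hT⟩
    have h := apply_sq_sub_apply_sq_of_inner_map_self_eq (b.orthonormal.1 0) (b.orthonormal.1 1)
      (b.orthonormal.2 (by decide)) cubicWeight T hT (a := 4 / 5) (b := 3 / 5) (by norm_num)
    norm_num [cubicWeight] at h
end
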